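/- arXiv:2505.05850 — 12 statements merged into one kernel-verified Lean document; each statement's English description precedes it below -/
import Mathlib

section
/- Let N ≥ 1, let a_1,…,a_N, b_1,…,b_{N−1}, c_2,…,c_N be complex numbers, and let H be the N×N tridiagonal matrix with these diagonal, superdiagonal and subdiagonal entries. Fix z ∈ ℂ and suppose the backward continued-fraction recurrence f_{N+1}(z)=0, f_k(z)=1/(a_k − z − b_k f_{k+1}(z) c_{k+1}) is well defined for all k = N, N−1, …, 1 (i.e. every denominator is nonzero; the term b_N f_{N+1} c_{N+1} is taken to be 0). Then H − zI = U·F·L, where F is the diagonal matrix with entries 1/f_1(z),…,1/f_N(z), U is the unit upper bidiagonal matrix with U_{k,k+1} = b_k f_{k+1}(z) for 1 ≤ k ≤ N−1, and L is the unit lower bidiagonal matrix with L_{k,k−1} = f_k(z) c_k for 2 ≤ k ≤ N. -/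
open Matrix BigOperators

/-- The `N × N` complex tridiagonal matrix with (1-based) diagonal entries `a k`
(`H_{k,k} = a k` for `1 ≤ k ≤ N`), superdiagonal entries `H_{k,k+1} = b k` and
subdiagonal entries `H_{k+1,k} = c (k+1)` (for `1 ≤ k ≤ N-1`), all other entries zero. -/
def tridiag (N : ℕ) (a b c : ℕ → ℂ) : Matrix (Fin N) (Fin N) ℂ :=
  Matrix.of fun i j =>
    if (i : ℕ) = (j : ℕ) then a ((i : ℕ) + 1)
    else if (j : ℕ) = (i : ℕ) + 1 then b ((i : ℕ) + 1)
    else if (i : ℕ) = (j : ℕ) + 1 then c ((i : ℕ) + 1)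
    else 0

lemma sum_two_band {N : ℕ} (i : Fin N) (p q : Fin N → ℂ) :
    (∑ k : Fin N, (if (i : ℕ) = (k : ℕ) then p k else if (k : ℕ) = (i : ℕ) + 1 then q k else 0))
      = p i + (if h : (i : ℕ) + 1 < N then q ⟨(i : ℕ) + 1, h⟩ else 0) := by
  have hsplit : ∀ k : Fin N,
      (if (i : ℕ) = (k : ℕ) then p k else if (k : ℕ) = (i : ℕ) + 1 then q k else 0)
      = (if k = i then p k else 0) + (if (k : ℕ) = (i : ℕ) + 1 then q k else 0) := by
    intro k
    rcases eq_or_ne k i with rfl | h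
    · simp
    · have h2 : (i : ℕ) ≠ (k : ℕ) := fun e => h (Fin.ext e.symm)
      simp [h2, h]
  simp_rw [hsplit]
  rw [Finset.sum_add_distrib, Finset.sum_ite_eq' Finset.univ i p]
  simp only [Finset.mem_univ, if_true]
  congr 1
  by_cases h : (i : ℕ) + 1 < N
  · have he : ∀ k : Fin N, ((k : ℕ) = (i : ℕ) + 1) ↔ k = ⟨(i:ℕ)+1, h⟩ := by
      intro k; simp [Fin.ext_iff]
    simp_rw [he]
    rw [Finset.sum_ite_eq' Finset.univ]
    simp [h]
  · rw [dif_neg h]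
    refine Finset.sum_eq_zero fun k _ => ?_
    have hk := k.isLt
    have : (k : ℕ) ≠ (i : ℕ) + 1 := by omega
    simp [this]

/-- if the backward continued-fraction recurrence
`f (N+1) = 0`, `f k = (a k - z - b k * f (k+1) * c (k+1))⁻¹` is well defined for
`k = N, ..., 1` (all denominators nonzero), then `H - z•1 = U * F * L` where `F` is the
diagonal matrix with entries `1/f k`, `U` is unit upper bidiagonal with
`U_{k,k+1} = b k * f (k+1)` and `L` is unit lower bidiagonal with `L_{k,k-1} = f k * c k`. -/
theorem tridiag_UFL_factorization
    (N : ℕ) (hN : 1 ≤ N) (a b c : ℕ → ℂ) (z : ℂ) (f : ℕ → ℂ)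
    (hftop : f (N + 1) = 0)
    (hden : ∀ k, 1 ≤ k → k ≤ N → a k - z - b k * f (k + 1) * c (k + 1) ≠ 0)
    (hf : ∀ k, 1 ≤ k → k ≤ N → f k = (a k - z - b k * f (k + 1) * c (k + 1))⁻¹) :
    tridiag N a b c - z • (1 : Matrix (Fin N) (Fin N) ℂ) =
      (Matrix.of fun i j : Fin N =>
          if (i : ℕ) = (j : ℕ) then (1 : ℂ)
          else if (j : ℕ) = (i : ℕ) + 1 then b ((i : ℕ) + 1) * f ((i : ℕ) + 2)
          else 0) *
      Matrix.diagonal (fun i : Fin N => (f ((i : ℕ) + 1))⁻¹) *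
      (Matrix.of fun i j : Fin N =>
          if (i : ℕ) = (j : ℕ) then (1 : ℂ)
          else if (i : ℕ) = (j : ℕ) + 1 then f ((i : ℕ) + 1) * c ((i : ℕ) + 1)
          else 0) := by
  have fne : ∀ k, 1 ≤ k → k ≤ N → f k ≠ 0 := fun k h1 h2 => by
    rw [hf k h1 h2]; exact inv_ne_zero (hden k h1 h2)
  have finv : ∀ k, 1 ≤ k → k ≤ N → (f k)⁻¹ = a k - z - b k * f (k + 1) * c (k + 1) :=
    fun k h1 h2 => by rw [hf k h1 h2, inv_inv]
  ext i j
  rw [Matrix.sub_apply, Matrix.smul_apply, Matrix.one_apply, Matrix.mul_apply]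
  simp only [Matrix.mul_diagonal, Matrix.of_apply, ite_mul, zero_mul, one_mul]
  rw [sum_two_band i
      (fun k : Fin N => (f ((k : ℕ) + 1))⁻¹ *
        (if (k : ℕ) = (j : ℕ) then (1 : ℂ)
         else if (k : ℕ) = (j : ℕ) + 1 then f ((k : ℕ) + 1) * c ((k : ℕ) + 1) else 0))
      (fun k : Fin N => b ((i : ℕ) + 1) * f ((i : ℕ) + 2) * (f ((k : ℕ) + 1))⁻¹ *
        (if (k : ℕ) = (j : ℕ) then (1 : ℂ)
         else if (k : ℕ) = (j : ℕ) + 1 then f ((k : ℕ) + 1) * c ((k : ℕ) + 1) else 0))]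
  have hi := i.isLt
  have hj := j.isLt
  simp only [tridiag, Matrix.of_apply, Fin.ext_iff, smul_ite, smul_zero, smul_eq_mul, mul_one]
  by_cases hij : (i : ℕ) = (j : ℕ)
  · -- diagonal case
    have c1 : ¬((i : ℕ) + 1 = (j : ℕ)) := by omega
    have c2 : (i : ℕ) + 1 = (j : ℕ) + 1 := by omega
    simp only [if_pos hij, if_neg c1, if_pos c2, mul_one]
    rw [finv ((i : ℕ) + 1) (by omega) (by omega)]
    by_cases h1 : (i : ℕ) + 1 < N
    · rw [dif_pos h1]
      have hfz : f ((i : ℕ) + 1 + 1) ≠ 0 := fne _ (by omega) (by omega)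
      have e2 : (i : ℕ) + 2 = (i : ℕ) + 1 + 1 := rfl
      rw [e2]
      field_simp
      ring
    · rw [dif_neg h1]
      have e3 : (i : ℕ) + 1 + 1 = N + 1 := by omega
      rw [e3, hftop]
      ring
  · by_cases hsup : (j : ℕ) = (i : ℕ) + 1
    · -- superdiagonal
      have c1 : ¬((i : ℕ) = (j : ℕ) + 1) := by omega
      have c2 : (i : ℕ) + 1 = (j : ℕ) := by omega
      have h1 : (i : ℕ) + 1 < N := by omega
      simp only [if_neg hij, if_pos hsup, if_neg c1, if_pos c2, mul_zero, zero_add,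
        dif_pos h1, mul_one, sub_zero]
      have hfz : f ((i : ℕ) + 1 + 1) ≠ 0 := fne _ (by omega) (by omega)
      have e2 : (i : ℕ) + 2 = (i : ℕ) + 1 + 1 := rfl
      rw [e2]
      field_simp
    · by_cases hsub : (i : ℕ) = (j : ℕ) + 1
      · -- subdiagonal
        have c1 : ¬((i : ℕ) + 1 = (j : ℕ)) := by omega
        have c2 : ¬((i : ℕ) + 1 = (j : ℕ) + 1) := by omega
        simp only [if_neg hij, if_neg hsup, if_pos hsub, if_neg c1, if_neg c2,
          mul_zero, sub_zero, dite_eq_ite, ite_self, add_zero]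
        have hfz : f ((i : ℕ) + 1) ≠ 0 := fne _ (by omega) (by omega)
        field_simp
      · -- far off-diagonal
        have c1 : ¬((i : ℕ) + 1 = (j : ℕ)) := by omega
        have c2 : ¬((i : ℕ) + 1 = (j : ℕ) + 1) := by omega
        simp only [if_neg hij, if_neg hsup, if_neg hsub, if_neg c1, if_neg c2,
          mul_zero, sub_zero, dite_eq_ite, ite_self, add_zero]
end

section
/- Let N ≥ 1 and let H be the N×N complex tridiagonal matrix with diagonal entries a_k, superdiagonal entries b_k and subdiagonal entries c_{k+1}. Fix z ∈ ℂ and suppose all denominators in the backward continued-fraction recurrence f_{N+1}(z)=0, f_k(z)=1/(a_k − z − b_k f_{k+1}(z) c_{k+1}) are nonzero for k = N, …, 2. Then z is an eigenvalue of H if and only if a_1 − z − b_1 f_2(z) c_2 = 0 (the continued-fraction secular equation 1/f_1(z) = 0). -/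
open Matrix BigOperators

lemma tridiag_sub_smul (N : ℕ) (a b c : ℕ → ℂ) (z : ℂ) :
    tridiag N a b c - z • (1 : Matrix (Fin N) (Fin N) ℂ)
      = tridiag N (fun k => a k - z) b c := by
  ext i j
  by_cases h : (i : ℕ) = (j : ℕ)
  · have hij : i = j := Fin.ext h
    subst hij
    simp [tridiag, Matrix.one_apply]
  · have hij : i ≠ j := fun hij => h (by rw [hij])
    simp [tridiag, Matrix.one_apply, h, hij]

lemma tridiag_submatrix_succ (n : ℕ) (a b c : ℕ → ℂ) :
    (tridiag (n + 1) a b c).submatrix Fin.succ Fin.succ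
      = tridiag n (fun k => a (k + 1)) (fun k => b (k + 1)) (fun k => c (k + 1)) := by
  ext i j
  simp only [tridiag, Matrix.submatrix_apply, Matrix.of_apply, Fin.val_succ, add_left_inj]

lemma tridiag_det_rec (n : ℕ) (a b c : ℕ → ℂ) :
    (tridiag (n + 2) a b c).det
      = a 1 * (tridiag (n + 1) (fun k => a (k + 1)) (fun k => b (k + 1))
            (fun k => c (k + 1))).det
        - b 1 * c 2 * (tridiag n (fun k => a (k + 2)) (fun k => b (k + 2))
            (fun k => c (k + 2))).det := by
  rw [Matrix.det_succ_row_zero, Fin.sum_univ_succ, Fin.sum_univ_succ]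
  have hzero : ∀ j : Fin n,
      (tridiag (n + 2) a b c) 0 (Fin.succ (Fin.succ j)) = 0 := by
    intro j
    simp only [tridiag, Matrix.of_apply, Fin.val_succ, Fin.val_zero]
    split_ifs <;> first | rfl | omega | exact False.elim ‹False›
  have hsum0 : ∑ j : Fin n, (-1 : ℂ) ^ ((Fin.succ (Fin.succ j) : Fin (n+2)) : ℕ) *
      (tridiag (n + 2) a b c) 0 (Fin.succ (Fin.succ j)) *
      ((tridiag (n + 2) a b c).submatrix Fin.succ
        (Fin.succAbove (Fin.succ (Fin.succ j)))).det = 0 := by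
    refine Finset.sum_eq_zero fun j _ => ?_
    rw [hzero j, mul_zero, zero_mul]
  rw [hsum0, add_zero]
  have hA00 : (tridiag (n + 2) a b c) 0 0 = a 1 := by
    simp [tridiag]
  have hA01 : (tridiag (n + 2) a b c) 0 (Fin.succ 0) = b 1 := by
    simp [tridiag]
  rw [hA00, hA01]
  have hsub0 : (Fin.succAbove (0 : Fin (n + 2))) = Fin.succ := by
    ext j : 1
    simp [Fin.succAbove_zero]
  have hmin1 : ((tridiag (n + 2) a b c).submatrix Fin.succ
      (Fin.succAbove (Fin.succ (0 : Fin (n + 1))))).det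
      = c 2 * (tridiag n (fun k => a (k + 2)) (fun k => b (k + 2))
          (fun k => c (k + 2))).det := by
    rw [Matrix.det_succ_column_zero, Fin.sum_univ_succ]
    have hcol0 : ∀ i : Fin n,
        ((tridiag (n + 2) a b c).submatrix Fin.succ
          (Fin.succAbove (Fin.succ (0 : Fin (n + 1))))) (Fin.succ i) 0 = 0 := by
      intro i
      have h10 : (Fin.succAbove (Fin.succ (0 : Fin (n + 1)))) 0 = 0 := by
        simp [Fin.succAbove]
      simp only [Matrix.submatrix_apply, h10, tridiag, Matrix.of_apply, Fin.val_succ,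
        Fin.val_zero]
      split_ifs <;> first | rfl | omega | exact False.elim ‹False›
    have hs : ∑ i : Fin n, (-1 : ℂ) ^ ((Fin.succ i : Fin (n+1)) : ℕ) *
        ((tridiag (n + 2) a b c).submatrix Fin.succ
          (Fin.succAbove (Fin.succ (0 : Fin (n + 1))))) (Fin.succ i) 0 *
        (((tridiag (n + 2) a b c).submatrix Fin.succ
          (Fin.succAbove (Fin.succ (0 : Fin (n + 1))))).submatrix
            (Fin.succAbove (Fin.succ i)) Fin.succ).det = 0 := by
      refine Finset.sum_eq_zero fun i _ => ?_
      rw [hcol0 i, mul_zero, zero_mul]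
    rw [hs, add_zero]
    have hent : ((tridiag (n + 2) a b c).submatrix Fin.succ
        (Fin.succAbove (Fin.succ (0 : Fin (n + 1))))) 0 0 = c 2 := by
      have h10 : (Fin.succAbove (Fin.succ (0 : Fin (n + 1)))) 0 = 0 := by
        simp [Fin.succAbove]
      simp [Matrix.submatrix_apply, h10, tridiag]
    have hmat : (((tridiag (n + 2) a b c).submatrix Fin.succ
        (Fin.succAbove (Fin.succ (0 : Fin (n + 1))))).submatrix
          (Fin.succAbove (0 : Fin (n + 1))) Fin.succ)
        = tridiag n (fun k => a (k + 2)) (fun k => b (k + 2)) (fun k => c (k + 2)) := by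
      ext i j
      have hrow : (Fin.succAbove (0 : Fin (n + 1))) i = Fin.succ i := by
        simp [Fin.succAbove_zero]
      have hcol : ((Fin.succAbove (Fin.succ (0 : Fin (n + 1)))) (Fin.succ j) : ℕ)
          = (j : ℕ) + 2 := by
        rw [Fin.succAbove_of_le_castSucc]
        · simp [Fin.val_succ]
        · simp [Fin.le_def, Fin.val_succ]
      simp only [Matrix.submatrix_apply, hrow, tridiag, Matrix.of_apply, Fin.val_succ, hcol]
      split_ifs <;> first | rfl | omega | exact False.elim ‹False› | (exfalso; omega) | (congr 1; omega)
    rw [hent, hmat]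
    simp
  rw [hsub0, tridiag_submatrix_succ, hmin1]
  simp only [Fin.val_zero, pow_zero, one_mul, Fin.val_succ, pow_one]
  push_cast
  ring

def Pdet (n : ℕ) : Prop := ∀ a b c f : ℕ → ℂ,
    f (n + 1) = 0 →
    (∀ k, 2 ≤ k → k ≤ n → a k - b k * f (k + 1) * c (k + 1) ≠ 0) →
    (∀ k, 2 ≤ k → k ≤ n → f k = (a k - b k * f (k + 1) * c (k + 1))⁻¹) →
    (tridiag n a b c).det
      = ∏ k ∈ Finset.range n, (a (k + 1) - b (k + 1) * f (k + 2) * c (k + 2))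

lemma Pdet_zero : Pdet 0 := by
  intro a b c f _ _ _
  simp [Matrix.det_fin_zero]

lemma Pdet_one : Pdet 1 := by
  intro a b c f htop _ _
  rw [Matrix.det_fin_one]
  simp [tridiag, htop]

lemma Pdet_step (m : ℕ) (h1 : Pdet m) (h2 : Pdet (m + 1)) : Pdet (m + 2) := by
  intro a b c f htop hden hf
  rw [tridiag_det_rec]
  rw [h2 (fun k => a (k + 1)) (fun k => b (k + 1)) (fun k => c (k + 1)) (fun k => f (k + 1))
    (by simpa using htop)
    (fun k hk2 hk => hden (k + 1) (by omega) (by omega))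
    (fun k hk2 hk => hf (k + 1) (by omega) (by omega))]
  rw [h1 (fun k => a (k + 2)) (fun k => b (k + 2)) (fun k => c (k + 2)) (fun k => f (k + 2))
    (by simpa using htop)
    (fun k hk2 hk => hden (k + 2) (by omega) (by omega))
    (fun k hk2 hk => hf (k + 2) (by omega) (by omega))]
  rw [Finset.prod_range_succ' (fun k => a (k + 1) - b (k + 1) * f (k + 2) * c (k + 2))]
  rw [Finset.prod_range_succ' (fun k => a (k + 1 + 1) - b (k + 1 + 1) * f (k + 2 + 1) * c (k + 2 + 1))]
  have hf2 : f 2 * (a 2 - b 2 * f 3 * c 3) = 1 := by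
    rw [hf 2 (by norm_num) (by omega)]
    exact inv_mul_cancel₀ (hden 2 (by norm_num) (by omega))
  set P := ∏ k ∈ Finset.range m,
    (a (k + 1 + 1 + 1) - b (k + 1 + 1 + 1) * f (k + 2 + 1 + 1) * c (k + 2 + 1 + 1)) with hP
  norm_num
  linear_combination (b 1 * c 2 * P) * hf2

lemma tridiag_det_prod (n : ℕ) : Pdet n := by
  have key : ∀ n, Pdet n ∧ Pdet (n + 1) := by
    intro n
    induction n with
    | zero => exact ⟨Pdet_zero, Pdet_one⟩
    | succ n ih => exact ⟨ih.2, Pdet_step n ih.1 ih.2⟩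
  exact (key n).1

/-- with the continued-fraction denominators nonzero for `k = N, ..., 2`,
`z` is an eigenvalue of `H` (a root of `det (H - z•1) = 0`) if and only if the
continued-fraction secular equation `a 1 - z - b 1 * f 2 * c 2 = 0` holds. -/
theorem tridiag_eigenvalue_iff_secular
    (N : ℕ) (hN : 1 ≤ N) (a b c : ℕ → ℂ) (z : ℂ) (f : ℕ → ℂ)
    (hftop : f (N + 1) = 0)
    (hden : ∀ k, 2 ≤ k → k ≤ N → a k - z - b k * f (k + 1) * c (k + 1) ≠ 0)
    (hf : ∀ k, 2 ≤ k → k ≤ N → f k = (a k - z - b k * f (k + 1) * c (k + 1))⁻¹) :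
    (tridiag N a b c - z • (1 : Matrix (Fin N) (Fin N) ℂ)).det = 0 ↔
      a 1 - z - b 1 * f 2 * c 2 = 0 := by
  obtain ⟨m, rfl⟩ : ∃ m, N = m + 1 := ⟨N - 1, by omega⟩
  rw [tridiag_sub_smul]
  rw [tridiag_det_prod (m + 1) (fun k => a k - z) b c f hftop hden hf]
  rw [Finset.prod_range_succ' (fun k => a (k + 1) - z - b (k + 1) * f (k + 2) * c (k + 2))]
  have hP : ∏ k ∈ Finset.range m,
      (a (k + 1 + 1) - z - b (k + 1 + 1) * f (k + 2 + 1) * c (k + 2 + 1)) ≠ 0 := by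
    rw [Finset.prod_ne_zero_iff]
    intro k hk
    have := hden (k + 2) (by omega) (by simp at hk; omega)
    convert this using 3 <;> omega
  rw [mul_eq_zero]
  simp [hP]
end

section
/- Let N ≥ 1 and let H be the N×N complex tridiagonal matrix with diagonal entries a_k, superdiagonal entries b_k and subdiagonal entries c_{k+1}. Fix z ∈ ℂ and suppose all denominators in the backward continued-fraction recurrence f_{N+1}(z)=0, f_k(z)=1/(a_k − z − b_k f_{k+1}(z) c_{k+1}) are nonzero for k = N, …, 1 (so in particular z is not an eigenvalue of H). Then H − zI is invertible and the (1,1) entry of its inverse equals the finite continued fraction f_1(z); that is, ((H − zI)^{-1})_{1,1} = 1/(a_1 − z − b_1 c_2/(a_2 − z − b_2 c_3/(a_3 − z − ⋯))). -/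
open Matrix BigOperators

/-- The forward solution vector: `cfW f c 0 = f 1`,
`cfW f c (k+1) = -f (k+2) * c (k+2) * cfW f c k`. -/
noncomputable def cfW (f c : ℕ → ℂ) : ℕ → ℂ
  | 0 => f 1
  | k + 1 => -f (k + 2) * c (k + 2) * cfW f c k

lemma cf_sum3 (N m : ℕ) (hm : m < N) (A B C : ℂ) (u : ℕ → ℂ) :
    (∑ k ∈ Finset.range N,
      (if m = k then A else if k = m + 1 then B else if m = k + 1 then C else 0) * u k)
    = A * u m + (if m + 1 < N then B * u (m + 1) else 0)
        + (if 0 < m then C * u (m - 1) else 0) := by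
  have hpt : ∀ k ∈ Finset.range N,
      (if m = k then A else if k = m + 1 then B else if m = k + 1 then C else 0) * u k
      = (if k = m then A * u k else 0) + (if k = m + 1 then B * u k else 0)
          + (if k = m - 1 ∧ 0 < m then C * u k else 0) := by
    intro k _
    split_ifs <;> first | ring1 | omega
  rw [Finset.sum_congr rfl hpt]
  rw [Finset.sum_add_distrib, Finset.sum_add_distrib,
    Finset.sum_ite_eq' (Finset.range N) m (fun k => A * u k),
    Finset.sum_ite_eq' (Finset.range N) (m + 1) (fun k => B * u k)]
  congr 1
  · congr 1
    · simp [hm]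
    · simp [Finset.mem_range]
  · by_cases h0 : 0 < m
    · have : ∀ k ∈ Finset.range N, (if k = m - 1 ∧ 0 < m then C * u k else 0)
          = (if k = m - 1 then C * u k else 0) := by
        intro k _; simp [h0]
      rw [Finset.sum_congr rfl this,
        Finset.sum_ite_eq' (Finset.range N) (m - 1) (fun k => C * u k)]
      have : m - 1 ∈ Finset.range N := Finset.mem_range.mpr (by omega)
      simp [this, h0]
    · have : ∀ k ∈ Finset.range N, (if k = m - 1 ∧ 0 < m then C * u k else 0) = 0 := by
        intro k _; simp [h0]
      rw [Finset.sum_congr rfl this]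
      simp [h0]

lemma cf_row (N : ℕ) (a b c : ℕ → ℂ) (z : ℂ) (u : ℕ → ℂ) (i : Fin N) :
    ((tridiag N a b c - z • (1 : Matrix (Fin N) (Fin N) ℂ)) *ᵥ fun j : Fin N => u (j : ℕ)) i
      = (a ((i : ℕ) + 1) - z) * u (i : ℕ)
        + (if (i : ℕ) + 1 < N then b ((i : ℕ) + 1) * u ((i : ℕ) + 1) else 0)
        + (if 0 < (i : ℕ) then c ((i : ℕ) + 1) * u ((i : ℕ) - 1) else 0) := by
  have hM : ∀ j : Fin N, (tridiag N a b c - z • (1 : Matrix (Fin N) (Fin N) ℂ)) i j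
      = if (i : ℕ) = (j : ℕ) then a ((i : ℕ) + 1) - z
        else if (j : ℕ) = (i : ℕ) + 1 then b ((i : ℕ) + 1)
        else if (i : ℕ) = (j : ℕ) + 1 then c ((i : ℕ) + 1) else 0 := by
    intro j
    simp only [Matrix.sub_apply, Matrix.smul_apply, Matrix.one_apply, tridiag, Matrix.of_apply,
      smul_eq_mul]
    rcases eq_or_ne ((i : ℕ)) ((j : ℕ)) with h | h
    · have hij : i = j := Fin.ext h
      simp [h, hij]
    · have hij : i ≠ j := fun e => h (congrArg Fin.val e)
      simp [h, hij]
  have : ((tridiag N a b c - z • (1 : Matrix (Fin N) (Fin N) ℂ)) *ᵥ fun j : Fin N => u (j : ℕ)) i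
      = ∑ j : Fin N, (if (i : ℕ) = (j : ℕ) then a ((i : ℕ) + 1) - z
        else if (j : ℕ) = (i : ℕ) + 1 then b ((i : ℕ) + 1)
        else if (i : ℕ) = (j : ℕ) + 1 then c ((i : ℕ) + 1) else 0) * u (j : ℕ) := by
    simp only [Matrix.mulVec, dotProduct]
    exact Finset.sum_congr rfl fun j _ => by rw [hM j]
  rw [this,
    Fin.sum_univ_eq_sum_range (fun k => (if (i : ℕ) = k then a ((i : ℕ) + 1) - z
      else if k = (i : ℕ) + 1 then b ((i : ℕ) + 1)
      else if (i : ℕ) = k + 1 then c ((i : ℕ) + 1) else 0) * u k)]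
  exact cf_sum3 N (i : ℕ) i.isLt _ _ _ u


/-- if all the continued-fraction denominators are nonzero for
`k = N, ..., 1`, then `H - z•1` is invertible and the `(1,1)` entry of its inverse
(the Green's function) equals the finite continued fraction `f 1`. -/
theorem tridiag_resolvent_entry_eq_continued_fraction
    (N : ℕ) (hN : 1 ≤ N) (a b c : ℕ → ℂ) (z : ℂ) (f : ℕ → ℂ)
    (hftop : f (N + 1) = 0)
    (hden : ∀ k, 1 ≤ k → k ≤ N → a k - z - b k * f (k + 1) * c (k + 1) ≠ 0)
    (hf : ∀ k, 1 ≤ k → k ≤ N → f k = (a k - z - b k * f (k + 1) * c (k + 1))⁻¹) :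
    IsUnit (tridiag N a b c - z • (1 : Matrix (Fin N) (Fin N) ℂ)) ∧
      (tridiag N a b c - z • (1 : Matrix (Fin N) (Fin N) ℂ))⁻¹
          (⟨0, hN⟩ : Fin N) (⟨0, hN⟩ : Fin N) = f 1 := by
  set M := tridiag N a b c - z • (1 : Matrix (Fin N) (Fin N) ℂ) with hMdef
  have hfd : ∀ k, 1 ≤ k → k ≤ N →
      f k * (a k - z - b k * f (k + 1) * c (k + 1)) = 1 := by
    intro k h1 h2
    rw [hf k h1 h2]
    exact inv_mul_cancel₀ (hden k h1 h2)
  -- Injectivity: kernel is trivial.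
  have hker : ∀ u : Fin N → ℂ, M *ᵥ u = 0 → u = 0 := by
    intro u hu
    set U : ℕ → ℂ := fun k => if h : k < N then u ⟨k, h⟩ else 0 with hU
    have huU : u = fun j : Fin N => U (j : ℕ) := by
      funext j; simp [hU, j.isLt]
    have hrow : ∀ i : Fin N,
        (a ((i : ℕ) + 1) - z) * U (i : ℕ)
          + (if (i : ℕ) + 1 < N then b ((i : ℕ) + 1) * U ((i : ℕ) + 1) else 0)
          + (if 0 < (i : ℕ) then c ((i : ℕ) + 1) * U ((i : ℕ) - 1) else 0) = 0 := by
      intro i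
      have := cf_row N a b c z U i
      rw [← huU, hu] at this
      simpa using this.symm
    -- downward recurrence
    have hstep : ∀ t : ℕ, ∀ m : ℕ, m + t + 1 = N → 1 ≤ m →
        U m = -f (m + 1) * c (m + 1) * U (m - 1) := by
      intro t
      induction t with
      | zero =>
        intro m hmN hm1
        have hmlt : m < N := by omega
        have h := hrow ⟨m, hmlt⟩
        simp only [Fin.val_mk] at h
        rw [if_neg (show ¬(m + 1 < N) by omega), if_pos (show 0 < m by omega)] at h
        have hfd1 := hfd (m + 1) (by omega) (by omega)
        rw [show m + 1 + 1 = m + 2 from rfl] at hfd1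
        have hftop' : f (m + 2) = 0 := by
          rw [show m + 2 = N + 1 by omega]; exact hftop
        rw [hftop'] at hfd1
        linear_combination f (m + 1) * h - U m * hfd1
      | succ t ih =>
        intro m hmN hm1
        have hmlt : m < N := by omega
        have h := hrow ⟨m, hmlt⟩
        simp only [Fin.val_mk] at h
        rw [if_pos (show m + 1 < N by omega), if_pos (show 0 < m by omega)] at h
        have hIH : U (m + 1) = -f (m + 2) * c (m + 2) * U m := by
          have h' := ih (m + 1) (by omega) (by omega)
          rw [show m + 1 + 1 = m + 2 from rfl, show m + 1 - 1 = m from rfl] at h'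
          exact h'
        have hfd1 := hfd (m + 1) (by omega) (by omega)
        rw [show m + 1 + 1 = m + 2 from rfl] at hfd1
        rw [hIH] at h
        linear_combination f (m + 1) * h - U m * hfd1
    -- U 0 = 0
    have hU0 : U 0 = 0 := by
      have h := hrow ⟨0, hN⟩
      simp only [Fin.val_mk] at h
      rw [if_neg (show ¬(0:ℕ) < 0 by omega)] at h
      have hfd1 := hfd 1 le_rfl hN
      rw [show (1:ℕ) + 1 = 2 from rfl] at hfd1
      by_cases h2 : 0 + 1 < N
      · rw [if_pos h2] at h
        have h1 : U 1 = -f 2 * c 2 * U 0 := by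
          have h' := hstep (N - 2) 1 (by omega) le_rfl
          rw [show (1:ℕ) + 1 = 2 from rfl, show (1:ℕ) - 1 = 0 from rfl] at h'
          exact h'
        rw [h1] at h
        have hz : (a 1 - z - b 1 * f 2 * c 2) * U 0 = 0 := by linear_combination h
        have hd := hden 1 le_rfl hN
        rw [show (1:ℕ) + 1 = 2 from rfl] at hd
        exact (mul_eq_zero.mp hz).resolve_left hd
      · rw [if_neg h2] at h
        have hftop' : f 2 = 0 := by
          rw [show (2:ℕ) = N + 1 by omega]; exact hftop
        have hz : (a 1 - z - b 1 * f 2 * c 2) * U 0 = 0 := by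
          rw [hftop']; linear_combination h
        have hd := hden 1 le_rfl hN
        rw [show (1:ℕ) + 1 = 2 from rfl] at hd
        exact (mul_eq_zero.mp hz).resolve_left hd
    -- all zero by forward induction
    have hall : ∀ m, m < N → U m = 0 := by
      intro m
      induction m with
      | zero => intro _; exact hU0
      | succ s ih =>
        intro hs
        have h1 : U (s + 1) = -f (s + 2) * c (s + 2) * U s := by
          have h' := hstep (N - s - 2) (s + 1) (by omega) (by omega)
          rw [show s + 1 + 1 = s + 2 from rfl, show s + 1 - 1 = s from rfl] at h'
          exact h'
        rw [h1, ih (by omega), mul_zero]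
    funext i
    have : U (i : ℕ) = 0 := hall _ i.isLt
    simpa [hU, i.isLt] using this
  have hinj : Function.Injective M.mulVec := by
    have : Function.Injective M.mulVecLin := by
      rw [injective_iff_map_eq_zero]
      intro u hu
      exact hker u hu
    intro x y h
    exact this (by simpa [Matrix.mulVecLin_apply] using h)
  have hunit : IsUnit M := Matrix.mulVec_injective_iff_isUnit.mp hinj
  refine ⟨hunit, ?_⟩
  -- the explicit solution vector
  set w : ℕ → ℂ := cfW f c with hw
  have hw0 : w 0 = f 1 := rfl
  have hwsucc : ∀ k, w (k + 1) = -f (k + 2) * c (k + 2) * w k := fun k => rfl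
  have hrowv : M *ᵥ (fun j : Fin N => w (j : ℕ)) = Pi.single (⟨0, hN⟩ : Fin N) 1 := by
    funext i
    obtain ⟨m, hmlt⟩ := i
    rw [cf_row N a b c z w ⟨m, hmlt⟩]
    simp only [Fin.val_mk]
    have hkey : (a (m + 1) - z) * w m + (if m + 1 < N then b (m + 1) * w (m + 1) else 0)
        = (a (m + 1) - z - b (m + 1) * f (m + 2) * c (m + 2)) * w m := by
      by_cases h2 : m + 1 < N
      · rw [if_pos h2, hwsucc m]; ring
      · rw [if_neg h2]
        have hftop' : f (m + 2) = 0 := by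
          rw [show m + 2 = N + 1 by omega]; exact hftop
        rw [hftop']; ring
    have hfdm := hfd (m + 1) (by omega) (by omega)
    rw [show m + 1 + 1 = m + 2 from rfl] at hfdm
    rcases Nat.eq_zero_or_pos m with rfl | h0
    · rw [show (⟨0, hmlt⟩ : Fin N) = ⟨0, hN⟩ from rfl, Pi.single_eq_same]
      rw [if_neg (show ¬(0:ℕ) < 0 by omega), add_zero, hkey, hw0]
      linear_combination hfdm
    · have hne : (⟨m, hmlt⟩ : Fin N) ≠ ⟨0, hN⟩ := by
        intro e
        have := congrArg Fin.val e
        simp only [Fin.val_mk] at this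
        omega
      rw [Pi.single_eq_of_ne hne, if_pos h0, hkey]
      obtain ⟨s, rfl⟩ : ∃ s, m = s + 1 := ⟨m - 1, by omega⟩
      rw [show s + 1 - 1 = s from rfl, hwsucc s,
        show s + 1 + 1 = s + 2 from rfl]
      rw [show s + 1 + 1 = s + 2 from rfl] at hfdm
      linear_combination (-(c (s + 2) * w s)) * hfdm
  have hdet : IsUnit M.det := (Matrix.isUnit_iff_isUnit_det M).mp hunit
  have hsol : (fun j : Fin N => w (j : ℕ)) = M⁻¹ *ᵥ Pi.single (⟨0, hN⟩ : Fin N) 1 := by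
    rw [← hrowv, Matrix.mulVec_mulVec, Matrix.nonsing_inv_mul M hdet, Matrix.one_mulVec]
  have := congrFun hsol (⟨0, hN⟩ : Fin N)
  rw [Matrix.mulVec_single] at this
  simpa [hw0] using this.symm
end

section
/- Let N ≥ 1 and let H be the N×N complex tridiagonal matrix with diagonal entries a_k, superdiagonal entries b_k and subdiagonal entries c_{k+1}. Fix E ∈ ℂ and suppose all denominators in the backward continued-fraction recurrence f_{N+1}(E)=0, f_k(E)=1/(a_k − E − b_k f_{k+1}(E) c_{k+1}) are nonzero for k = N, …, 2, and that the secular equation a_1 − E − b_1 f_2(E) c_2 = 0 holds. Define the vector ψ by ψ_1 = 1 and ψ_k = −f_k(E) c_k ψ_{k−1} for k = 2, …, N. Then ψ ≠ 0 and Hψ = Eψ, i.e. ψ is an eigenvector of H with eigenvalue E. -/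
open Matrix BigOperators

/-- if the continued-fraction denominators are nonzero for `k = N, ..., 2`
and the secular equation `a 1 - E - b 1 * f 2 * c 2 = 0` holds, then the vector `ψ`
defined by `ψ 1 = 1` and `ψ k = - f k * c k * ψ (k-1)` for `k = 2, ..., N` is a
(nonzero) eigenvector of `H` with eigenvalue `E`. -/
theorem tridiag_continued_fraction_eigenvector
    (N : ℕ) (hN : 1 ≤ N) (a b c : ℕ → ℂ) (E : ℂ) (f : ℕ → ℂ)
    (hftop : f (N + 1) = 0)
    (hden : ∀ k, 2 ≤ k → k ≤ N → a k - E - b k * f (k + 1) * c (k + 1) ≠ 0)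
    (hf : ∀ k, 2 ≤ k → k ≤ N → f k = (a k - E - b k * f (k + 1) * c (k + 1))⁻¹)
    (hsec : a 1 - E - b 1 * f 2 * c 2 = 0)
    (ψ : ℕ → ℂ)
    (hψ1 : ψ 1 = 1)
    (hψ : ∀ k, 2 ≤ k → k ≤ N → ψ k = - f k * c k * ψ (k - 1))
    (v : Fin N → ℂ) (hv : v = fun i : Fin N => ψ ((i : ℕ) + 1)) :
    v ≠ 0 ∧ (tridiag N a b c).mulVec v = E • v := by
  have h0N : (0 : ℕ) < N := hN
  constructor
  · intro h0
    have : v ⟨0, h0N⟩ = 0 := congrFun h0 _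
    rw [hv] at this
    simp [hψ1] at this
  · -- key relation
    have hkey : ∀ k, 2 ≤ k → k ≤ N →
        c k * ψ (k - 1) = -(a k - E - b k * f (k + 1) * c (k + 1)) * ψ k := by
      intro k h2 hkN
      have hd := hden k h2 hkN
      have hfk := hf k h2 hkN
      rw [hψ k h2 hkN, hfk]
      field_simp
    funext i
    have hsplit : ∀ j : Fin N, tridiag N a b c i j * v j =
        (if j = i then a ((i:ℕ)+1) * v i else 0)
        + (if (j:ℕ) = (i:ℕ)+1 then b ((i:ℕ)+1) * v j else 0)
        + (if (i:ℕ) = (j:ℕ)+1 then c ((i:ℕ)+1) * v j else 0) := by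
      intro j
      simp only [tridiag, Matrix.of_apply, Fin.ext_iff]
      split_ifs <;>
        first
          | ring1
          | (exfalso; omega)
          | (have hij : i = j := Fin.ext (by omega); subst hij; ring1)
    have hmv : (tridiag N a b c).mulVec v i =
        a ((i:ℕ)+1) * v i
        + (∑ j : Fin N, if (j:ℕ) = (i:ℕ)+1 then b ((i:ℕ)+1) * v j else 0)
        + (∑ j : Fin N, if (i:ℕ) = (j:ℕ)+1 then c ((i:ℕ)+1) * v j else 0) := by
      simp only [Matrix.mulVec, dotProduct]
      rw [Finset.sum_congr rfl fun j _ => hsplit j]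
      rw [Finset.sum_add_distrib, Finset.sum_add_distrib, Finset.sum_ite_eq' Finset.univ i]
      simp
    have hB : (∑ j : Fin N, if (j:ℕ) = (i:ℕ)+1 then b ((i:ℕ)+1) * v j else 0)
        = if h : (i:ℕ)+1 < N then b ((i:ℕ)+1) * v ⟨(i:ℕ)+1, h⟩ else 0 := by
      split
      · next h =>
        rw [Finset.sum_eq_single (⟨(i:ℕ)+1, h⟩ : Fin N)]
        · simp
        · intro j _ hj; rw [if_neg]; intro hc; exact hj (Fin.ext hc)
        · simp
      · next h =>
        apply Finset.sum_eq_zero; intro j _; rw [if_neg]; intro hc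
        exact h (hc ▸ j.isLt)
    have hC : (∑ j : Fin N, if (i:ℕ) = (j:ℕ)+1 then c ((i:ℕ)+1) * v j else 0)
        = if h : 0 < (i:ℕ) then c ((i:ℕ)+1) * v ⟨(i:ℕ)-1, lt_of_le_of_lt (Nat.pred_le _) i.isLt⟩ else 0 := by
      split
      · next h =>
        rw [Finset.sum_eq_single (⟨(i:ℕ)-1, lt_of_le_of_lt (Nat.pred_le _) i.isLt⟩ : Fin N)]
        · rw [if_pos (show (i:ℕ) = ((⟨(i:ℕ)-1, lt_of_le_of_lt (Nat.pred_le _) i.isLt⟩ : Fin N) : ℕ) + 1 by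
            simp only [Fin.val_mk]; omega)]
        · intro j _ hj; rw [if_neg]; intro hc; apply hj; apply Fin.ext
          simp only [Fin.val_mk]; omega
        · simp
      · next h =>
        apply Finset.sum_eq_zero; intro j _; rw [if_neg]
        intro hc; omega
    rw [hmv, hB, hC, hv]
    simp only [Pi.smul_apply, smul_eq_mul]
    rcases Nat.eq_zero_or_pos (i:ℕ) with hi0 | hipos
    · rw [dif_neg (show ¬ 0 < (i:ℕ) by omega)]
      rcases eq_or_lt_of_le hN with hN1 | hN2
      · rw [dif_neg (show ¬ (i:ℕ) + 1 < N by omega)]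
        have hf2 : f 2 = 0 := by rw [show 2 = N + 1 by omega]; exact hftop
        rw [hf2] at hsec
        simp only [hi0, hψ1]
        norm_num [hψ1]
        linear_combination hsec
      · rw [dif_pos (show (i:ℕ) + 1 < N by omega)]
        have hψ2 : ψ 2 = - f 2 * c 2 * ψ 1 := hψ 2 le_rfl hN2
        simp only [hi0, Fin.val_mk]
        norm_num [hψ2, hψ1]
        linear_combination hsec
    · rw [dif_pos hipos]
      set k := (i:ℕ) + 1 with hk
      have h2k : 2 ≤ k := by omega
      have hkN : k ≤ N := i.isLt
      have hC' : c k * ψ ((i:ℕ) - 1 + 1) = -(a k - E - b k * f (k+1) * c (k+1)) * ψ k := by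
        have := hkey k h2k hkN
        rwa [show k - 1 = (i:ℕ) - 1 + 1 by omega] at this
      rcases eq_or_lt_of_le hkN with hkN1 | hkN2
      · rw [dif_neg (show ¬ k < N by omega)]
        rw [hC']
        rw [show k + 1 = N + 1 by omega, hftop]
        ring
      · rw [dif_pos (show k < N by omega)]
        have hψk1 : ψ (k+1) = - f (k+1) * c (k+1) * ψ k := hψ (k+1) (by omega) (by omega)
        rw [hC', hψk1]
        ring
end

section
/- Let M, N ≥ 0 and let H be the (M+N+1)×(M+N+1) complex tridiagonal matrix with rows and columns indexed by k ∈ {−M,…,N}, with H_{k,k} = a_k, H_{k,k+1} = b_k and H_{k+1,k} = c_{k+1} for −M ≤ k ≤ N−1, and all other entries zero. Fix z ∈ ℂ and suppose both continued-fraction recurrences are well defined: f_{−M−1}(z)=0 and f_{−j}(z) = 1/(a_{−j} − z − c_{−j} f_{−j−1}(z) b_{−j−1}) for j = M,…,1, and f_{N+1}(z)=0 and f_k(z) = 1/(a_k − z − b_k f_{k+1}(z) c_{k+1}) for k = N,…,1, with all these denominators nonzero. Define D_0(z) = a_0 − z − c_0 f_{−1}(z) b_{−1} − b_0 f_1(z)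 c_1. Then det(H − zI) = D_0(z) · ∏_{j=1}^{M} (1/f_{−j}(z)) · ∏_{k=1}^{N} (1/f_k(z)). -/
open Matrix BigOperators

/-- The `(M+N+1) × (M+N+1)` complex tridiagonal matrix whose rows and columns are
indexed by `k ∈ {-M, ..., N}` (the 0-based row `i` corresponds to `k = i - M`), with
diagonal entries `a k`, superdiagonal entries `H_{k,k+1} = b k` and subdiagonal entries
`H_{k+1,k} = c (k+1)`, all other entries zero. -/
def tridZ (M N : ℕ) (a b c : ℤ → ℂ) : Matrix (Fin (M + N + 1)) (Fin (M + N + 1)) ℂ :=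
  Matrix.of fun i j =>
    if ((i : ℕ) : ℤ) = ((j : ℕ) : ℤ) then a (((i : ℕ) : ℤ) - (M : ℤ))
    else if ((j : ℕ) : ℤ) = ((i : ℕ) : ℤ) + 1 then b (((i : ℕ) : ℤ) - (M : ℤ))
    else if ((i : ℕ) : ℤ) = ((j : ℕ) : ℤ) + 1 then c (((i : ℕ) : ℤ) - (M : ℤ))
    else 0

/-! Gaussian elimination of the first row of a tridiagonal matrix multiplies its determinant
by the pivot `p` and changes only the next diagonal entry, `a_k ↦ a_k - c_k p⁻¹ b_{k-1}`.
Along the upward recurrence the successive pivots are `1/f_{-M}, …, 1/f_{-1}`, which leaves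
the block `{0, …, N}` with `a_0` replaced by `a_0 - c_0 f_{-1} b_{-1}`. The reflection
`k ↦ -k` turns the downward recurrence into an upward one, and eliminating the remaining
`N` rows from the other end leaves the `1 × 1` matrix `D_0(z)`. -/

theorem Matrix.det_succ_eq_mul_det_schur {K : Type*} [Field K] {n : ℕ}
    (A : Matrix (Fin (n + 1)) (Fin (n + 1)) K) (h : A 0 0 ≠ 0) :
    A.det = A 0 0 *
      (of fun i j : Fin n => A i.succ j.succ - A i.succ 0 * (A 0 0)⁻¹ * A 0 j.succ).det := by
  let r : Fin (n + 1) → K := Fin.cases 0 fun i => A i.succ 0 * (A 0 0)⁻¹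
  let B : Matrix (Fin (n + 1)) (Fin (n + 1)) K := of fun i j => A i j - r i * A 0 j
  have hB : A.det = B.det :=
    det_eq_of_forall_row_eq_smul_add_const r 0 rfl fun i j => by simp [B, r]
  have hB0 : ∀ i : Fin n, B i.succ 0 = 0 := fun i => by simp [B, r, h]
  have hB00 : B 0 0 = A 0 0 := by simp [B, r]
  rw [hB, det_succ_column_zero, Fin.sum_univ_succ]
  simp only [hB0, hB00, mul_zero, zero_mul, Finset.sum_const_zero, add_zero, Fin.val_zero,
    pow_zero, one_mul, Fin.succAbove_zero]
  rfl

lemma tridZ_sub_smul_one (M N : ℕ) (a b c : ℤ → ℂ) (z : ℂ) :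
    tridZ M N a b c - z • 1 = tridZ M N (fun k => a k - z) b c := by
  ext i j
  simp only [tridZ, Matrix.sub_apply, Matrix.smul_apply, Matrix.one_apply, of_apply, Fin.ext_iff,
    Nat.cast_inj, smul_eq_mul]
  split_ifs <;> ring

lemma det_tridZ_zero_zero (a b c : ℤ → ℂ) : (tridZ 0 0 a b c).det = a 0 := by
  simp [tridZ]

lemma det_tridZ_reflect (M N : ℕ) (a b c : ℤ → ℂ) :
    (tridZ M N a b c).det =
      (tridZ N M (fun k => a (-k)) (fun k => c (-k)) (fun k => b (-k))).det := by
  let e : Fin (N + M + 1) ≃ Fin (M + N + 1) := (finCongr (by omega)).trans Fin.revPerm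
  have he : ∀ i, ((e i : ℕ) : ℤ) = M + N - (i : ℕ) := fun i => by
    simp [e, Fin.val_rev]; omega
  rw [← det_submatrix_equiv_self e]
  congr 1
  ext i j
  have := i.isLt; have := j.isLt
  simp only [submatrix_apply, tridZ, of_apply, he]
  split_ifs <;> first | rfl | (exfalso; omega) | (congr 1; omega)

lemma det_tridZ_succ_left (M N : ℕ) (a b c : ℤ → ℂ) {p : ℂ} (hp : p ≠ 0) :
    (tridZ (M + 1) N (Function.update a (-M - 1) p) b c).det =
      p * (tridZ M N (Function.update a (-M) (a (-M) - c (-M) * p⁻¹ * b (-M - 1))) b c).det := by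
  let e : Fin (M + N + 1 + 1) ≃ Fin (M + 1 + N + 1) := finCongr (by omega)
  have h00 : (tridZ (M + 1) N (Function.update a (-M - 1) p) b c).submatrix e e 0 0 = p := by
    simp only [submatrix_apply, of_apply, tridZ, e, finCongr_apply, Fin.val_cast, Fin.val_zero,
      if_true]
    rw [show ((0 : ℕ) : ℤ) - ((M + 1 : ℕ) : ℤ) = -M - 1 by push_cast; ring, Function.update_self]
  rw [← det_submatrix_equiv_self e, det_succ_eq_mul_det_schur _ (by rwa [h00]), h00]
  congr 2
  ext i j
  simp only [submatrix_apply, of_apply, tridZ, e, finCongr_apply, Fin.val_cast, Fin.val_succ,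
    Fin.val_zero, Function.update_apply]
  push_cast
  rw [show ((i : ℕ) : ℤ) + 1 - (M + 1) = (i : ℕ) - M by ring, zero_sub, neg_add']
  obtain ⟨hx0, hy0⟩ : 0 ≤ ((i : ℕ) : ℤ) ∧ 0 ≤ ((j : ℕ) : ℤ) := ⟨by positivity, by positivity⟩
  generalize ((i : ℕ) : ℤ) = x at hx0 ⊢
  generalize ((j : ℕ) : ℤ) = y at hy0 ⊢
  simp only [add_left_inj, add_eq_right, show x + 1 ≠ 0 by omega, show (0 : ℤ) ≠ x + 1 + 1 by omega,
    show (0 : ℤ) ≠ y + 1 by omega, show (0 : ℤ) ≠ y + 1 + 1 by omega, show x - M ≠ -M - 1 by omega,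
    if_true, if_false, sub_eq_neg_self]
  split_ifs <;> subst_vars <;> first | (exfalso; omega) | ring1 | rw [zero_sub]

/-- The boundary value `f (-M - 1)` is arbitrary here, so that `a` and `f` stay fixed
through the induction on `M`. -/
lemma det_tridZ_update_eq_mul_prod_of_upward (N : ℕ) (a b c f : ℤ → ℂ) (M : ℕ)
    (hden : ∀ k : ℤ, -(M : ℤ) ≤ k → k ≤ -1 → a k - c k * f (k - 1) * b (k - 1) ≠ 0)
    (hf : ∀ k : ℤ, -(M : ℤ) ≤ k → k ≤ -1 → f k = (a k - c k * f (k - 1) * b (k - 1))⁻¹) :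
    (tridZ M N (Function.update a (-M) (a (-M) - c (-M) * f (-M - 1) * b (-M - 1))) b c).det =
      (tridZ 0 N (Function.update a 0 (a 0 - c 0 * f (-1) * b (-1))) b c).det *
        ∏ j ∈ Finset.Icc 1 M, (f (-j))⁻¹ := by
  induction M with
  | zero => simp
  | succ M ih =>
    have hM : -((M + 1 : ℕ) : ℤ) = -M - 1 := by push_cast; ring
    have hpivot : a (-M - 1) - c (-M - 1) * f (-M - 1 - 1) * b (-M - 1 - 1) = (f (-M - 1))⁻¹ := by
      rw [hf (-M - 1) (by omega) (by omega), inv_inv]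
    have hp : (f (-M - 1))⁻¹ ≠ 0 := hpivot ▸ hden _ (by omega) (by omega)
    rw [hM, hpivot, det_tridZ_succ_left _ _ _ _ _ hp, inv_inv,
      ih (fun k hk hk' => hden k (by omega) hk') (fun k hk hk' => hf k (by omega) hk'),
      Finset.prod_Icc_succ_top (by omega), hM]
    ring

lemma det_tridZ_eq_mul_prod_of_upward (N : ℕ) (a b c f : ℤ → ℂ) (M : ℕ) (hf0 : f (-M - 1) = 0)
    (hden : ∀ k : ℤ, -(M : ℤ) ≤ k → k ≤ -1 → a k - c k * f (k - 1) * b (k - 1) ≠ 0)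
    (hf : ∀ k : ℤ, -(M : ℤ) ≤ k → k ≤ -1 → f k = (a k - c k * f (k - 1) * b (k - 1))⁻¹) :
    (tridZ M N a b c).det =
      (tridZ 0 N (Function.update a 0 (a 0 - c 0 * f (-1) * b (-1))) b c).det *
        ∏ j ∈ Finset.Icc 1 M, (f (-j))⁻¹ := by
  simpa [hf0] using det_tridZ_update_eq_mul_prod_of_upward N a b c f M hden hf

/-- if both continued-fraction recurrences (upward, for `k = -1, ..., -M`,
and downward, for `k = N, ..., 1`) are well defined at `z`, then
`det (H - z•1) = D₀(z) * ∏_{j=1}^M (1 / f (-j)) * ∏_{k=1}^N (1 / f k)`, where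
`D₀(z) = a 0 - z - c 0 * f (-1) * b (-1) - b 0 * f 1 * c 1`. -/
theorem tridZ_det_two_continued_fractions
    (M N : ℕ) (a b c : ℤ → ℂ) (z : ℂ) (f : ℤ → ℂ)
    (hup0 : f (-(M : ℤ) - 1) = 0)
    (hupden : ∀ k : ℤ, -(M : ℤ) ≤ k → k ≤ -1 →
      a k - z - c k * f (k - 1) * b (k - 1) ≠ 0)
    (hup : ∀ k : ℤ, -(M : ℤ) ≤ k → k ≤ -1 →
      f k = (a k - z - c k * f (k - 1) * b (k - 1))⁻¹)
    (hdown0 : f ((N : ℤ) + 1) = 0)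
    (hdownden : ∀ k : ℤ, 1 ≤ k → k ≤ (N : ℤ) →
      a k - z - b k * f (k + 1) * c (k + 1) ≠ 0)
    (hdown : ∀ k : ℤ, 1 ≤ k → k ≤ (N : ℤ) →
      f k = (a k - z - b k * f (k + 1) * c (k + 1))⁻¹) :
    (tridZ M N a b c - z • (1 : Matrix (Fin (M + N + 1)) (Fin (M + N + 1)) ℂ)).det =
      (a 0 - z - c 0 * f (-1) * b (-1) - b 0 * f 1 * c 1) *
        (∏ j ∈ Finset.Icc 1 M, (f (-(j : ℤ)))⁻¹) *
        (∏ k ∈ Finset.Icc 1 N, (f ((k : ℕ) : ℤ))⁻¹) := by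
  rw [tridZ_sub_smul_one, det_tridZ_eq_mul_prod_of_upward N _ b c f M hup0 hupden hup,
    det_tridZ_reflect, det_tridZ_eq_mul_prod_of_upward 0 _ _ _ (fun k => f (-k)) N
      (by simpa [add_comm] using hdown0) (fun k hk hk' => ?_) (fun k hk hk' => ?_),
    det_tridZ_zero_zero]
  · simp only [Function.update_self, neg_zero, neg_neg]
    ring
  all_goals rw [Function.update_of_ne (by omega), show -(k - 1) = -k + 1 by ring]
  · exact hdownden (-k) (by omega) (by omega)
  · exact hdown (-k) (by omega) (by omega)
end

section
/- (Lemma 1, finite version.) Let M, N ≥ 0 and let H be the (M+N+1)×(M+N+1) complex tridiagonal matrix indexed by k ∈ {−M,…,N} with diagonal entries a_k, superdiagonal entries b_k and subdiagonal entries c_{k+1}. Fix z ∈ ℂ and suppose all denominators in the two continued-fraction recurrences f_{−M−1}(z)=0, f_{−j}(z) = 1/(a_{−j} − z − c_{−j} f_{−j−1}(z) b_{−j−1}) (j = M,…,1) and f_{N+1}(z)=0, f_k(z) = 1/(a_k − z − b_k f_{k+1}(z) c_{k+1}) (k = N,…,1) are nonzero. Then z is an eigenvalue of H if and only if a_0 −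 z − c_0 f_{−1}(z) b_{−1} − b_0 f_1(z) c_1 = 0 (the matched secular equation 1/f_0(z) = 0 combining the two continued fractions). -/
open Matrix BigOperators

def triMat (n : ℕ) (d u l : ℕ → ℂ) : Matrix (Fin n) (Fin n) ℂ :=
  Matrix.of fun i j =>
    if (i : ℕ) = (j : ℕ) then d i
    else if (j : ℕ) = (i : ℕ) + 1 then u i
    else if (i : ℕ) = (j : ℕ) + 1 then l j
    else 0

def Dseq (d e : ℕ → ℂ) : ℕ → ℂ
  | 0 => 1
  | 1 => d 0
  | (n+2) => d (n+1) * Dseq d e (n+1) - e n * Dseq d e n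

lemma Dseq_zero (d e : ℕ → ℂ) : Dseq d e 0 = 1 := rfl
lemma Dseq_one (d e : ℕ → ℂ) : Dseq d e 1 = d 0 := rfl
lemma Dseq_add_two (d e : ℕ → ℂ) (n : ℕ) :
    Dseq d e (n+2) = d (n+1) * Dseq d e (n+1) - e n * Dseq d e n := rfl

lemma triMat_submatrix {m n : ℕ} (d u l : ℕ → ℂ) (r s : Fin m → Fin n)
    (hr : ∀ i, ((r i : ℕ)) = (i : ℕ)) (hs : ∀ j, ((s j : ℕ)) = (j : ℕ)) :
    (triMat n d u l).submatrix r s = triMat m d u l := by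
  ext i j
  simp [triMat, Matrix.submatrix_apply, hr, hs]

lemma val_sa {n : ℕ} (k : Fin (n+1)) :
    ((((Fin.last n).castSucc : Fin (n+2)).succAbove k : Fin (n+2)) : ℕ)
      = if (k:ℕ) < n then (k:ℕ) else (k:ℕ)+1 := by
  rw [Fin.succAbove]
  split_ifs with h1 h2 h2
  · rfl
  · exact absurd (by simpa [Fin.lt_def] using h1) h2
  · exact absurd (by simpa [Fin.lt_def] using h2) h1
  · rfl

lemma det_triMat (d u l : ℕ → ℂ) :
    ∀ n, (triMat n d u l).det = Dseq d (fun i => u i * l i) n := by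
  intro n
  induction n using Nat.strong_induction_on with
  | _ n ih =>
    match n with
    | 0 => simp [Dseq_zero]
    | 1 => simp [Matrix.det_fin_one, triMat, Dseq_one]
    | (n+2) =>
      rw [Matrix.det_succ_row (triMat (n+2) d u l) (Fin.last (n+1)),
        Fin.sum_univ_castSucc, Fin.sum_univ_castSucc]
      have hz : ∀ j : Fin n,
          ((-1:ℂ) ^ ((Fin.last (n+1) : ℕ) + ((j.castSucc.castSucc : Fin (n+2)) : ℕ))
            * triMat (n+2) d u l (Fin.last (n+1)) j.castSucc.castSucc
            * ((triMat (n+2) d u l).submatrix (Fin.last (n+1)).succAbove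
                (j.castSucc.castSucc).succAbove).det) = 0 := by
        intro j
        have hj : (j : ℕ) < n := j.isLt
        have : triMat (n+2) d u l (Fin.last (n+1)) j.castSucc.castSucc = 0 := by
          simp only [triMat, Matrix.of_apply, Fin.coe_castSucc, Fin.val_last]
          rw [if_neg (by omega), if_neg (by omega), if_neg (by omega)]
        rw [this]; ring
      rw [Finset.sum_eq_zero fun j _ => hz j, zero_add]
      -- term for column castSucc (last n)
      have hA1 : triMat (n+2) d u l (Fin.last (n+1)) ((Fin.last n).castSucc) = l n := by
        simp only [triMat, Matrix.of_apply, Fin.coe_castSucc, Fin.val_last]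
        rw [if_neg (by omega), if_neg (by omega)]
        simp
      have hA2 : triMat (n+2) d u l (Fin.last (n+1)) (Fin.last (n+1)) = d (n+1) := by
        simp [triMat]
      -- the submatrix for the diagonal term
      have hS2 : (triMat (n+2) d u l).submatrix (Fin.last (n+1)).succAbove
          (Fin.last (n+1)).succAbove = triMat (n+1) d u l := by
        apply triMat_submatrix
        · intro i; simp [Fin.succAbove_last]
        · intro j; simp [Fin.succAbove_last]
      -- the determinant of the submatrix for the subdiagonal term
      have hS1 : ((triMat (n+2) d u l).submatrix (Fin.last (n+1)).succAbove
          ((Fin.last n).castSucc : Fin (n+2)).succAbove).det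
            = u n * Dseq d (fun i => u i * l i) n := by
        set B := (triMat (n+2) d u l).submatrix (Fin.last (n+1)).succAbove
          ((Fin.last n).castSucc : Fin (n+2)).succAbove with hB
        rw [Matrix.det_succ_column B (Fin.last n), Fin.sum_univ_castSucc]
        have hz2 : ∀ i : Fin n,
            ((-1:ℂ) ^ (((i.castSucc : Fin (n+1)) : ℕ) + (Fin.last n : ℕ))
              * B i.castSucc (Fin.last n)
              * (B.submatrix (i.castSucc).succAbove (Fin.last n).succAbove).det) = 0 := by
          intro i
          have hi : (i : ℕ) < n := i.isLt
          have : B i.castSucc (Fin.last n) = 0 := by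
            rw [hB]
            simp only [Matrix.submatrix_apply, Fin.succAbove_last]
            have h1 : (((Fin.last n).castSucc : Fin (n+2)).succAbove (Fin.last n) : ℕ) = n+1 := by
              rw [val_sa]; simp
            simp only [triMat, Matrix.of_apply]
            rw [show ((i.castSucc.castSucc : Fin (n+2)) : ℕ) = (i:ℕ) by simp]
            rw [h1, if_neg (by omega), if_neg (by omega), if_neg (by omega)]
          rw [this]; ring
        rw [Finset.sum_eq_zero fun i _ => hz2 i, zero_add]
        have hBl : B (Fin.last n) (Fin.last n) = u n := by
          rw [hB]
          simp only [Matrix.submatrix_apply, Fin.succAbove_last]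
          have h1 : (((Fin.last n).castSucc : Fin (n+2)).succAbove (Fin.last n) : ℕ) = n+1 := by
            rw [val_sa]; simp
          simp only [triMat, Matrix.of_apply]
          rw [show (((Fin.last n).castSucc : Fin (n+1+1)) : ℕ) = n by simp]
          rw [h1, if_neg (by omega)]
          simp
        have hBs : B.submatrix (Fin.last n).succAbove (Fin.last n).succAbove
            = triMat n d u l := by
          rw [hB, Matrix.submatrix_submatrix]
          apply triMat_submatrix
          · intro i
            simp [Function.comp, Fin.succAbove_last]
          · intro j
            simp only [Function.comp, Fin.succAbove_last]
            rw [val_sa]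
            simp [j.isLt]
        rw [hBl, hBs, ih n (by omega)]
        simp [Fin.val_last]
      rw [hA1, hA2, hS2, hS1, ih (n+1) (by omega), Dseq_add_two]
      simp only [Fin.val_last, Fin.coe_castSucc]
      have hs1 : (-1:ℂ) ^ ((n+1) + n) = -1 := by
        rw [show (n+1)+n = 2*n+1 by ring, pow_succ, pow_mul]
        simp
      have hs2 : (-1:ℂ) ^ ((n+1) + (n+1)) = 1 := by
        rw [show (n+1)+(n+1) = 2*(n+1) by ring, pow_mul]
        simp
      rw [hs1, hs2]
      ring

def Rev (g : ℕ → ℂ) (T : ℕ) : ℕ → ℂ := fun i => g (T - i)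

lemma Rev_apply (g : ℕ → ℂ) (T i : ℕ) : Rev g T i = g (T - i) := rfl

lemma Dseq_three (d e : ℕ → ℂ) (k : ℕ) (hk : 2 ≤ k) :
    Dseq d e k = d (k-1) * Dseq d e (k-1) - e (k-2) * Dseq d e (k-2) := by
  obtain ⟨n, rfl⟩ : ∃ n, k = n + 2 := ⟨k - 2, by omega⟩
  exact Dseq_add_two d e n

lemma Dseq_split (d e : ℕ → ℂ) (T : ℕ) :
    ∀ m, 1 ≤ m → m < T →
      Dseq d e T
        = Dseq d e (T - m) * Dseq (Rev d (T-1)) (Rev e (T-2)) m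
          - e (T - m - 1) * Dseq d e (T - m - 1)
            * Dseq (Rev d (T-1)) (Rev e (T-2)) (m - 1) := by
  intro m
  induction m with
  | zero => intro h _; exact absurd h (by norm_num)
  | succ m ihm =>
    intro _ hmT
    rcases Nat.eq_zero_or_pos m with hm | hm
    · subst hm
      rw [Dseq_three d e T (by omega), Dseq_one, Dseq_zero, Rev_apply]
      rw [show T - 1 - 0 = T - 1 from rfl, show T - 1 - 1 = T - 2 from by omega]
      ring
    · have IH := ihm hm (by omega)
      have h1 : Dseq d e (T - m) = d (T-m-1) * Dseq d e (T-m-1) - e (T-m-2) * Dseq d e (T-m-2) := by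
        have := Dseq_three d e (T-m) (by omega)
        rw [this, show T - m - 2 = T - m - 1 - 1 from by omega]
      obtain ⟨m', rfl⟩ : ∃ m', m = m' + 1 := ⟨m-1, by omega⟩
      have h2 : Dseq (Rev d (T-1)) (Rev e (T-2)) (m'+2)
          = d (T-(m'+1)-1) * Dseq (Rev d (T-1)) (Rev e (T-2)) (m'+1)
            - e (T-(m'+1)-1) * Dseq (Rev d (T-1)) (Rev e (T-2)) m' := by
        rw [Dseq_add_two, Rev_apply, Rev_apply,
          show T - 1 - (m'+1) = T-(m'+1)-1 from by omega,
          show T - 2 - m' = T-(m'+1)-1 from by omega]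
      rw [IH, h1, h2]
      rw [show m' + 1 + 1 - 1 = m' + 1 from rfl, show m' + 1 - 1 = m' from rfl,
        show T - (m'+1+1) - 1 = T - (m'+1) - 2 from by omega,
        show T - (m'+1+1) = T - (m'+1) - 1 from by omega]
      ring

/-- Lemma 1, finite version: if all denominators of the two
continued-fraction recurrences are nonzero at `z`, then `z` is an eigenvalue of `H`
(a root of `det (H - z•1) = 0`) if and only if the matched secular equation
`a 0 - z - c 0 * f (-1) * b (-1) - b 0 * f 1 * c 1 = 0` holds. -/
theorem tridZ_eigenvalue_iff_matched_secular
    (M N : ℕ) (a b c : ℤ → ℂ) (z : ℂ) (f : ℤ → ℂ)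
    (hup0 : f (-(M : ℤ) - 1) = 0)
    (hupden : ∀ k : ℤ, -(M : ℤ) ≤ k → k ≤ -1 →
      a k - z - c k * f (k - 1) * b (k - 1) ≠ 0)
    (hup : ∀ k : ℤ, -(M : ℤ) ≤ k → k ≤ -1 →
      f k = (a k - z - c k * f (k - 1) * b (k - 1))⁻¹)
    (hdown0 : f ((N : ℤ) + 1) = 0)
    (hdownden : ∀ k : ℤ, 1 ≤ k → k ≤ (N : ℤ) →
      a k - z - b k * f (k + 1) * c (k + 1) ≠ 0)
    (hdown : ∀ k : ℤ, 1 ≤ k → k ≤ (N : ℤ) →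
      f k = (a k - z - b k * f (k + 1) * c (k + 1))⁻¹) :
    (tridZ M N a b c - z • (1 : Matrix (Fin (M + N + 1)) (Fin (M + N + 1)) ℂ)).det = 0 ↔
      a 0 - z - c 0 * f (-1) * b (-1) - b 0 * f 1 * c 1 = 0 := by
  set dd : ℕ → ℂ := fun i => a ((i : ℤ) - (M : ℤ)) - z with hdd
  set uu : ℕ → ℂ := fun i => b ((i : ℤ) - (M : ℤ)) with huu
  set ll : ℕ → ℂ := fun j => c ((j : ℤ) + 1 - (M : ℤ)) with hll
  set ee : ℕ → ℂ := fun i => uu i * ll i with hee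
  -- identification of the matrix
  have hmat : tridZ M N a b c - z • (1 : Matrix (Fin (M + N + 1)) (Fin (M + N + 1)) ℂ)
      = triMat (M + N + 1) dd uu ll := by
    ext i j
    simp only [Matrix.sub_apply, Matrix.smul_apply, Matrix.one_apply, smul_eq_mul,
      tridZ, triMat, Matrix.of_apply, hdd, huu, hll]
    by_cases h1 : (i : ℕ) = (j : ℕ)
    · have hij : i = j := Fin.ext h1
      subst hij
      simp
    · have hij : ¬ (i = j) := fun h => h1 (by rw [h])
      have hint : ¬ (((i : ℕ) : ℤ) = ((j : ℕ) : ℤ)) := by exact_mod_cast h1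
      rw [if_neg hint, if_neg h1, if_neg hij, mul_zero, sub_zero]
      by_cases h2 : (j : ℕ) = (i : ℕ) + 1
      · rw [if_pos (by exact_mod_cast h2), if_pos h2]
      · rw [if_neg (by exact_mod_cast h2), if_neg h2]
        by_cases h3 : (i : ℕ) = (j : ℕ) + 1
        · rw [if_pos (by exact_mod_cast h3), if_pos h3,
            show ((i : ℕ) : ℤ) - (M : ℤ) = ((j : ℕ) : ℤ) + 1 - (M : ℤ) by omega]
        · rw [if_neg (by exact_mod_cast h3), if_neg h3]
  -- claim A: the upward minors
  have claimA : ∀ j : ℕ, j ≤ M → Dseq dd ee j ≠ 0 ∧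
      f ((j : ℤ) - 1 - (M : ℤ)) * Dseq dd ee j
        = (if j = 0 then 0 else Dseq dd ee (j - 1)) := by
    intro j
    induction j with
    | zero =>
      intro _
      refine ⟨by rw [Dseq_zero]; norm_num, ?_⟩
      rw [if_pos rfl, Dseq_zero, show ((0:ℕ) : ℤ) - 1 - (M : ℤ) = -(M : ℤ) - 1 by push_cast; ring,
        hup0, zero_mul]
    | succ j ihj =>
      intro hjM
      obtain ⟨hne, hrat⟩ := ihj (by omega)
      have hk1 : -(M : ℤ) ≤ (j : ℤ) - (M : ℤ) := by omega
      have hk2 : (j : ℤ) - (M : ℤ) ≤ -1 := by omega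
      have hden := hupden _ hk1 hk2
      have hfk := hup _ hk1 hk2
      have hstep : Dseq dd ee (j+1)
          = (a ((j : ℤ) - (M : ℤ)) - z
              - c ((j : ℤ) - (M : ℤ)) * f ((j : ℤ) - (M : ℤ) - 1)
                * b ((j : ℤ) - (M : ℤ) - 1)) * Dseq dd ee j := by
        rcases Nat.eq_zero_or_pos j with h0 | h0
        · subst h0
          rw [Dseq_one, Dseq_zero, hdd]
          simp only []
          rw [show ((0:ℕ) : ℤ) - (M : ℤ) - 1 = -(M : ℤ) - 1 by push_cast; ring, hup0]
          push_cast
          ring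
        · obtain ⟨j', rfl⟩ : ∃ j', j = j' + 1 := ⟨j - 1, by omega⟩
          rw [Dseq_add_two]
          have hprev : Dseq dd ee j' = f (((j'+1) : ℤ) - (M : ℤ) - 1) * Dseq dd ee (j'+1) := by
            rw [show (((j'+1) : ℤ)) - (M : ℤ) - 1 = (((j'+1 : ℕ)) : ℤ) - 1 - (M : ℤ) by
              push_cast; ring]
            rw [hrat, if_neg (Nat.succ_ne_zero j')]
            rfl
          rw [hprev, hdd, hee, huu, hll]
          simp only []
          rw [show ((j'+1 : ℕ) : ℤ) - (M : ℤ) = ((j'+1 : ℕ) : ℤ) - (M : ℤ) from rfl]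
          push_cast
          rw [show (j' : ℤ) + 1 - (M : ℤ) - 1 = (j' : ℤ) - (M : ℤ) by ring]
          ring
      constructor
      · rw [hstep]
        exact mul_ne_zero hden hne
      · rw [if_neg (Nat.succ_ne_zero j), Nat.add_sub_cancel,
          show ((j+1 : ℕ) : ℤ) - 1 - (M : ℤ) = (j : ℤ) - (M : ℤ) by push_cast; ring,
          hstep, hfk, inv_mul_cancel_left₀ hden]
  -- claim B: the downward minors
  set QQ : ℕ → ℂ := Dseq (Rev dd (M + N + 1 - 1)) (Rev ee (M + N + 1 - 2)) with hQQ
  have claimB : ∀ m : ℕ, m ≤ N → QQ m ≠ 0 ∧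
      f ((N : ℤ) + 1 - (m : ℤ)) * QQ m = (if m = 0 then 0 else QQ (m - 1)) := by
    intro m
    induction m with
    | zero =>
      intro _
      refine ⟨by rw [hQQ, Dseq_zero]; norm_num, ?_⟩
      rw [if_pos rfl, hQQ, Dseq_zero, show (N : ℤ) + 1 - ((0:ℕ) : ℤ) = (N : ℤ) + 1 by push_cast; ring,
        hdown0, zero_mul]
    | succ m ihm =>
      intro hmN
      obtain ⟨hne, hrat⟩ := ihm (by omega)
      have hk1 : (1 : ℤ) ≤ (N : ℤ) - (m : ℤ) := by omega
      have hk2 : (N : ℤ) - (m : ℤ) ≤ (N : ℤ) := by omega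
      have hden := hdownden _ hk1 hk2
      have hfk := hdown _ hk1 hk2
      have hstep : QQ (m+1)
          = (a ((N : ℤ) - (m : ℤ)) - z
              - b ((N : ℤ) - (m : ℤ)) * f ((N : ℤ) - (m : ℤ) + 1)
                * c ((N : ℤ) - (m : ℤ) + 1)) * QQ m := by
        rcases Nat.eq_zero_or_pos m with h0 | h0
        · subst h0
          rw [hQQ, Dseq_one, Dseq_zero, Rev_apply, hdd]
          simp only []
          rw [show ((M + N + 1 - 1 - 0 : ℕ) : ℤ) - (M : ℤ) = (N : ℤ) - ((0:ℕ) : ℤ) by omega]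
          rw [show (N : ℤ) - ((0:ℕ) : ℤ) + 1 = (N : ℤ) + 1 by push_cast; ring, hdown0]
          push_cast
          ring
        · obtain ⟨m', rfl⟩ : ∃ m', m = m' + 1 := ⟨m - 1, by omega⟩
          rw [hQQ, Dseq_add_two, Rev_apply, Rev_apply]
          have hprev : Dseq (Rev dd (M + N + 1 - 1)) (Rev ee (M + N + 1 - 2)) m'
              = f ((N : ℤ) - ((m'+1 : ℕ) : ℤ) + 1)
                * Dseq (Rev dd (M + N + 1 - 1)) (Rev ee (M + N + 1 - 2)) (m'+1) := by
            rw [show (N : ℤ) - ((m'+1 : ℕ) : ℤ) + 1 = (N : ℤ) + 1 - ((m'+1 : ℕ) : ℤ) by ring]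
            have := hrat
            rw [hQQ] at this
            rw [this, if_neg (Nat.succ_ne_zero m')]
            rfl
          rw [hprev, hdd, hee, huu, hll]
          simp only []
          have hm'N : m' + 1 + 1 ≤ N := hmN
          rw [show ((M + N + 1 - 1 - (m'+1) : ℕ) : ℤ) - (M : ℤ) = (N : ℤ) - ((m'+1 : ℕ) : ℤ) by omega]
          rw [show ((M + N + 1 - 2 - m' : ℕ) : ℤ) - (M : ℤ) = (N : ℤ) - ((m'+1 : ℕ) : ℤ) by omega]
          rw [show ((M + N + 1 - 2 - m' : ℕ) : ℤ) + 1 - (M : ℤ) = (N : ℤ) - ((m'+1 : ℕ) : ℤ) + 1 by omega]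
          push_cast
          ring
      constructor
      · rw [hstep]
        have : (a ((N : ℤ) - (m : ℤ)) - z
            - b ((N : ℤ) - (m : ℤ)) * f ((N : ℤ) - (m : ℤ) + 1) * c ((N : ℤ) - (m : ℤ) + 1)) ≠ 0 := hden
        exact mul_ne_zero this hne
      · rw [if_neg (Nat.succ_ne_zero m), Nat.add_sub_cancel,
          show (N : ℤ) + 1 - ((m+1 : ℕ) : ℤ) = (N : ℤ) - (m : ℤ) by push_cast; ring,
          hstep, hfk, inv_mul_cancel_left₀ hden]
  -- final assembly
  obtain ⟨hDMne, hDMrat⟩ := claimA M le_rfl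
  obtain ⟨hQNne, hQNrat⟩ := claimB N le_rfl
  have hfD : f (-1) * Dseq dd ee M = (if M = 0 then 0 else Dseq dd ee (M-1)) := by
    rw [show (-1 : ℤ) = (M : ℤ) - 1 - (M : ℤ) by ring]; exact hDMrat
  have hfQ : f 1 * QQ N = (if N = 0 then 0 else QQ (N-1)) := by
    rw [show (1 : ℤ) = (N : ℤ) + 1 - (N : ℤ) by ring]; exact hQNrat
  have hDM1 : Dseq dd ee (M+1)
      = (a 0 - z) * Dseq dd ee M - (b (-1) * c 0) * (f (-1) * Dseq dd ee M) := by
    rcases Nat.eq_zero_or_pos M with h0 | h0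
    · subst h0
      have hf1 : f (-1) = 0 := by simpa [Dseq_zero] using hfD
      rw [Dseq_one, Dseq_zero, hf1, hdd]
      simp
    · obtain ⟨m, rfl⟩ : ∃ m, M = m + 1 := ⟨M - 1, by omega⟩
      have hprev : Dseq dd ee m = f (-1) * Dseq dd ee (m+1) := by
        rw [hfD, if_neg (Nat.succ_ne_zero m)]
        rfl
      rw [Dseq_add_two, hprev, hdd, hee, huu, hll]
      simp only []
      rw [show ((m+1 : ℕ) : ℤ) - ((m+1 : ℕ) : ℤ) = 0 by ring,
        show (m : ℤ) - ((m+1 : ℕ) : ℤ) = -1 by push_cast; ring,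
        show (m : ℤ) + 1 - ((m+1 : ℕ) : ℤ) = 0 by push_cast; ring]
  have hsplit : Dseq dd ee (M+N+1)
      = Dseq dd ee (M+1) * QQ N - (b 0 * c 1) * Dseq dd ee M * (f 1 * QQ N) := by
    rcases Nat.eq_zero_or_pos N with h0 | h0
    · subst h0
      have hf1 : f 1 = 0 := by simpa using hdown0
      have hq0 : QQ 0 = 1 := rfl
      rw [hf1, hq0]
      show Dseq dd ee (M+1) = Dseq dd ee (M+1) * 1 - b 0 * c 1 * Dseq dd ee M * (0 * 1)
      ring
    · have hspl := Dseq_split dd ee (M+N+1) N h0 (by omega)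
      rw [← hQQ] at hspl
      rw [hspl, show M + N + 1 - N - 1 = M by omega, show M + N + 1 - N = M + 1 by omega]
      have hq : QQ (N-1) = f 1 * QQ N := by
        rw [hfQ, if_neg (by omega)]
      have hee' : ee M = b 0 * c 1 := by
        rw [hee, huu, hll]
        simp only []
        rw [show (M : ℤ) - (M : ℤ) = 0 by ring, show (M : ℤ) + 1 - (M : ℤ) = 1 by ring]
      rw [hq, hee']
  have hdet : (tridZ M N a b c
        - z • (1 : Matrix (Fin (M + N + 1)) (Fin (M + N + 1)) ℂ)).det
      = Dseq dd ee M * QQ N * (a 0 - z - c 0 * f (-1) * b (-1) - b 0 * f 1 * c 1) := by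
    rw [hmat, det_triMat, ← hee, hsplit, hDM1]
    ring
  rw [hdet]
  constructor
  · intro h
    rcases mul_eq_zero.mp h with h | h
    · rcases mul_eq_zero.mp h with h | h
      · exact absurd h hDMne
      · exact absurd h hQNne
    · exact h
  · intro h
    rw [h, mul_zero]
end

section
/- Let M, N ≥ 0 and let H be the (M+N+1)×(M+N+1) complex tridiagonal matrix indexed by k ∈ {−M,…,N} with diagonal entries a_k, superdiagonal entries b_k and subdiagonal entries c_{k+1}. Fix z ∈ ℂ and suppose all denominators in the two continued-fraction recurrences f_{−M−1}(z)=0, f_{−j}(z) = 1/(a_{−j} − z − c_{−j} f_{−j−1}(z) b_{−j−1}) (j = M,…,1) and f_{N+1}(z)=0, f_k(z) = 1/(a_k − z − b_k f_{k+1}(z) c_{k+1}) (k = N,…,1) are nonzero, and also that D_0(z) = a_0 − z − c_0 f_{−1}(z) b_{−1} − b_0 f_1(z) c_1 ≠ 0. Then H − zI is invertible and the (0,0) entry of its inverse equals the two-continued-fraction Green's function: ((H − zI)^{-1})_{0,0} = 1/D_0(z). -/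
/-!
Write `J` for the three-term operator `(J X) k = c k X (k-1) + (a k - z) X k + b k X (k+1)` on
sequences vanishing outside `[-M, N]`. The upward continued fraction is exactly what Gaussian
elimination from the left end produces: if `J X` vanishes on `[-M, -1]`, then
`X k = -f k b k X (k+1)` there. Symmetrically `X k = -f k c k X (k-1)` on `[1, N]` when `J X`
vanishes on `[1, N]`. Substituting both into row `0` gives `(J X) 0 = D₀ X 0`. Hence a kernel
vector has `X 0 = 0` and then vanishes by the ratio relations, so `H - z` is invertible; and the
column `X = (H - z)⁻¹ e₀` satisfies `D₀ X 0 = 1`.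
-/

open Matrix BigOperators

section ThreeTermRecurrence

variable {K : Type*} [Field K]

def jacobiSeq (a b c X : ℤ → K) (k : ℤ) : K :=
  c k * X (k - 1) + a k * X k + b k * X (k + 1)

theorem jacobiSeq_neg (a b c X : ℤ → K) (k : ℤ) :
    jacobiSeq a b c X (-k) =
      jacobiSeq (fun k => a (-k)) (fun k => c (-k)) (fun k => b (-k)) (fun k => X (-k)) k := by
  simp only [jacobiSeq]
  ring_nf

theorem eq_neg_mul_succ_of_jacobiSeq_eq_zero {a b c f X : ℤ → K} {m e : ℤ}
    (hf₀ : f m = 0) (hX₀ : X m = 0)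
    (hden : ∀ k, m < k → k ≤ e → a k - c k * f (k - 1) * b (k - 1) ≠ 0)
    (hf : ∀ k, m < k → k ≤ e → f k = (a k - c k * f (k - 1) * b (k - 1))⁻¹)
    (hJ : ∀ k, m < k → k ≤ e → jacobiSeq a b c X k = 0) :
    ∀ k, m ≤ k → k ≤ e → X k = -(f k * b k) * X (k + 1) := by
  refine Int.leInduction (by simp [hf₀, hX₀]) fun k hmk ih hke => ?_
  have hk : m < k + 1 := by omega
  have hfD : f (k + 1) * (a (k + 1) - c (k + 1) * f k * b k) = 1 := by
    have hD := hden (k + 1) hk hke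
    rw [add_sub_cancel_right] at hD
    rw [hf (k + 1) hk hke, add_sub_cancel_right, inv_mul_cancel₀ hD]
  have hJk := hJ (k + 1) hk hke
  rw [jacobiSeq, add_sub_cancel_right] at hJk
  linear_combination f (k + 1) * hJk - f (k + 1) * c (k + 1) * ih (by omega) - X (k + 1) * hfD

theorem eq_zero_of_forall_eq_mul_succ {g X : ℤ → K} {m e : ℤ}
    (h : ∀ k, m ≤ k → k ≤ e → X k = g k * X (k + 1)) (he : X (e + 1) = 0) :
    ∀ k, m ≤ k → k ≤ e + 1 → X k = 0 := by
  intro k hmk hke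
  induction k, hke using Int.leInductionDown with
  | base => exact he
  | pred k hke ih => rw [h (k - 1) hmk (by omega), sub_add_cancel, ih (by omega), mul_zero]

theorem jacobiSeq_left_half {a b c f X : ℤ → K} {m : ℤ} (hm : m ≤ -1)
    (hf₀ : f m = 0) (hX₀ : X m = 0)
    (hden : ∀ k, m < k → k ≤ -1 → a k - c k * f (k - 1) * b (k - 1) ≠ 0)
    (hf : ∀ k, m < k → k ≤ -1 → f k = (a k - c k * f (k - 1) * b (k - 1))⁻¹)
    (hJ : ∀ k, m < k → k ≤ -1 → jacobiSeq a b c X k = 0) :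
    X (-1) = -(f (-1) * b (-1)) * X 0 ∧ (X 0 = 0 → ∀ k, m ≤ k → k ≤ 0 → X k = 0) := by
  have hrec := eq_neg_mul_succ_of_jacobiSeq_eq_zero hf₀ hX₀ hden hf hJ
  exact ⟨hrec (-1) hm le_rfl, eq_zero_of_forall_eq_mul_succ hrec⟩

theorem jacobiSeq_center {a b c f X : ℤ → K} {M N : ℕ}
    (hup0 : f (-(M : ℤ) - 1) = 0)
    (hupden : ∀ k : ℤ, -(M : ℤ) ≤ k → k ≤ -1 → a k - c k * f (k - 1) * b (k - 1) ≠ 0)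
    (hup : ∀ k : ℤ, -(M : ℤ) ≤ k → k ≤ -1 → f k = (a k - c k * f (k - 1) * b (k - 1))⁻¹)
    (hdown0 : f ((N : ℤ) + 1) = 0)
    (hdownden : ∀ k : ℤ, 1 ≤ k → k ≤ (N : ℤ) → a k - b k * f (k + 1) * c (k + 1) ≠ 0)
    (hdown : ∀ k : ℤ, 1 ≤ k → k ≤ (N : ℤ) → f k = (a k - b k * f (k + 1) * c (k + 1))⁻¹)
    (hXl : X (-(M : ℤ) - 1) = 0) (hXr : X ((N : ℤ) + 1) = 0)
    (hJ : ∀ k : ℤ, -(M : ℤ) ≤ k → k ≤ N → k ≠ 0 → jacobiSeq a b c X k = 0) :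
    jacobiSeq a b c X 0 = (a 0 - c 0 * f (-1) * b (-1) - b 0 * f 1 * c 1) * X 0 ∧
      (X 0 = 0 → ∀ k : ℤ, -(M : ℤ) ≤ k → k ≤ N → X k = 0) := by
  obtain ⟨hleft, hleft₀⟩ := jacobiSeq_left_half (by omega) hup0 hXl
    (fun k hk => hupden k (by omega)) (fun k hk => hup k (by omega))
    (fun k hk hk' => hJ k (by omega) (by omega) (by omega))
  -- the right half `[1, N]` is the left half of the reflected recurrence
  obtain ⟨hright, hright₀⟩ := jacobiSeq_left_half
    (a := fun k => a (-k)) (b := fun k => c (-k)) (c := fun k => b (-k))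
    (f := fun k => f (-k)) (X := fun k => X (-k)) (m := -(N + 1))
    (by omega) (by simpa using hdown0) (by simpa using hXr)
    (fun k hk hk' => by simpa [neg_add_eq_sub] using hdownden (-k) (by omega) (by omega))
    (fun k hk hk' => by simpa [neg_add_eq_sub] using hdown (-k) (by omega) (by omega))
    (fun k hk hk' => by rw [← jacobiSeq_neg]; exact hJ (-k) (by omega) (by omega) (by omega))
  simp only [neg_neg, neg_zero] at hright hright₀
  refine ⟨by rw [jacobiSeq, zero_sub, zero_add, hleft, hright]; ring, fun hX₀ k hk hk' => ?_⟩
  rcases le_total k 0 with hk₀ | hk₀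
  · exact hleft₀ hX₀ k (by omega) hk₀
  · simpa using hright₀ hX₀ (-k) (by omega) (by omega)

end ThreeTermRecurrence

section ExtendByZero

variable {R : Type*} {n : ℕ}

def extendByZero [Zero R] (x : Fin n → R) (t : ℤ) : R :=
  if h : 0 ≤ t ∧ t < n then x ⟨t.toNat, by omega⟩ else 0

theorem extendByZero_natCast [Zero R] (x : Fin n → R) (i : Fin n) :
    extendByZero x (i : ℕ) = x i := by
  rw [extendByZero, dif_pos (by omega)]
  simp

theorem extendByZero_eq_zero [Zero R] (x : Fin n → R) {t : ℤ} (ht : ¬(0 ≤ t ∧ t < n)) :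
    extendByZero x t = 0 :=
  dif_neg ht

theorem sum_ite_mul_eq_mul_extendByZero [Semiring R] (r : R) (x : Fin n → R) (t : ℤ) :
    ∑ j : Fin n, (if ((j : ℕ) : ℤ) = t then r else 0) * x j = r * extendByZero x t := by
  by_cases ht : 0 ≤ t ∧ t < n
  · obtain ⟨i, rfl⟩ : ∃ i : Fin n, ((i : ℕ) : ℤ) = t :=
      ⟨⟨t.toNat, by omega⟩, Int.toNat_of_nonneg ht.1⟩
    simp [extendByZero_natCast, Fin.val_inj]
  · rw [extendByZero_eq_zero x ht, mul_zero]
    refine Finset.sum_eq_zero fun j _ => ?_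
    rw [if_neg (by omega), zero_mul]

end ExtendByZero

theorem tridZ_sub_smul_apply (M N : ℕ) (a b c : ℤ → ℂ) (z : ℂ) (i j : Fin (M + N + 1)) :
    (tridZ M N a b c - z • 1) i j =
      (if ((j : ℕ) : ℤ) = i - 1 then c (i - M) else 0) +
        (if ((j : ℕ) : ℤ) = i then a (i - M) - z else 0) +
          (if ((j : ℕ) : ℤ) = i + 1 then b (i - M) else 0) := by
  simp only [tridZ, Matrix.sub_apply, Matrix.smul_apply, of_apply, one_apply, ← Fin.val_inj,
    smul_eq_mul]
  split_ifs <;> first | omega | ring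

theorem tridZ_sub_smul_mulVec_apply (M N : ℕ) (a b c : ℤ → ℂ) (z : ℂ)
    (x : Fin (M + N + 1) → ℂ) (i : Fin (M + N + 1)) :
    ((tridZ M N a b c - z • 1) *ᵥ x) i =
      jacobiSeq (fun k => a k - z) b c (fun k => extendByZero x (k + M)) (i - M) := by
  simp only [mulVec, dotProduct, tridZ_sub_smul_apply, add_mul, Finset.sum_add_distrib,
    sum_ite_mul_eq_mul_extendByZero, jacobiSeq, sub_add_cancel, sub_add_eq_add_sub]

theorem tridZ_sub_smul_mulVec_eq_single {M N : ℕ} {a b c f : ℤ → ℂ} {z : ℂ}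
    (hup0 : f (-(M : ℤ) - 1) = 0)
    (hupden : ∀ k : ℤ, -(M : ℤ) ≤ k → k ≤ -1 → a k - z - c k * f (k - 1) * b (k - 1) ≠ 0)
    (hup : ∀ k : ℤ, -(M : ℤ) ≤ k → k ≤ -1 → f k = (a k - z - c k * f (k - 1) * b (k - 1))⁻¹)
    (hdown0 : f ((N : ℤ) + 1) = 0)
    (hdownden : ∀ k : ℤ, 1 ≤ k → k ≤ (N : ℤ) → a k - z - b k * f (k + 1) * c (k + 1) ≠ 0)
    (hdown : ∀ k : ℤ, 1 ≤ k → k ≤ (N : ℤ) → f k = (a k - z - b k * f (k + 1) * c (k + 1))⁻¹)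
    {i₀ : Fin (M + N + 1)} (hi₀ : (i₀ : ℕ) = M) {x : Fin (M + N + 1) → ℂ} {r : ℂ}
    (hx : (tridZ M N a b c - z • 1) *ᵥ x = Pi.single i₀ r) :
    (a 0 - z - c 0 * f (-1) * b (-1) - b 0 * f 1 * c 1) * x i₀ = r ∧
      (x i₀ = 0 → x = 0) := by
  set X : ℤ → ℂ := fun k => extendByZero x (k + M)
  have hxX : ∀ i : Fin (M + N + 1), x i = X (i - M) := fun i => by
    simp only [X, sub_add_cancel, extendByZero_natCast]
  have hrow : ∀ i : Fin (M + N + 1),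
      jacobiSeq (fun k => a k - z) b c X (i - M) = (Pi.single i₀ r : Fin (M + N + 1) → ℂ) i :=
    fun i => (tridZ_sub_smul_mulVec_apply M N a b c z x i).symm.trans (congrFun hx i)
  obtain ⟨hcenter, hzero⟩ := jacobiSeq_center (X := X) hup0 hupden hup hdown0 hdownden hdown
    (extendByZero_eq_zero x (by omega)) (extendByZero_eq_zero x (by omega))
    (fun k hk hk' hk₀ => by
      obtain ⟨i, rfl⟩ : ∃ i : Fin (M + N + 1), (i : ℤ) - M = k :=
        ⟨⟨(k + M).toNat, by omega⟩, by simp only; omega⟩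
      rw [hrow, Pi.single_eq_of_ne]
      simp only [ne_eq, Fin.ext_iff]
      omega)
  have hX₀ : x i₀ = X 0 := by rw [hxX, hi₀, sub_self]
  refine ⟨?_, fun hx₀ => funext fun i => ?_⟩
  · simpa [hi₀, hX₀, ← hcenter] using hrow i₀
  · rw [hxX, Pi.zero_apply]
    exact hzero (hX₀ ▸ hx₀) _ (by omega) (by omega)

/-- if all denominators of the two continued-fraction recurrences are
nonzero at `z`, and moreover `D₀(z) = a 0 - z - c 0 * f (-1) * b (-1) - b 0 * f 1 * c 1 ≠ 0`,
then `H - z•1` is invertible and the `(0,0)` entry of its inverse (at the central index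
`k = 0`, i.e. 0-based index `M`) equals the two-continued-fraction Green's function
`1 / D₀(z)`. -/
theorem tridZ_resolvent_central_entry
    (M N : ℕ) (a b c : ℤ → ℂ) (z : ℂ) (f : ℤ → ℂ)
    (hup0 : f (-(M : ℤ) - 1) = 0)
    (hupden : ∀ k : ℤ, -(M : ℤ) ≤ k → k ≤ -1 →
      a k - z - c k * f (k - 1) * b (k - 1) ≠ 0)
    (hup : ∀ k : ℤ, -(M : ℤ) ≤ k → k ≤ -1 →
      f k = (a k - z - c k * f (k - 1) * b (k - 1))⁻¹)
    (hdown0 : f ((N : ℤ) + 1) = 0)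
    (hdownden : ∀ k : ℤ, 1 ≤ k → k ≤ (N : ℤ) →
      a k - z - b k * f (k + 1) * c (k + 1) ≠ 0)
    (hdown : ∀ k : ℤ, 1 ≤ k → k ≤ (N : ℤ) →
      f k = (a k - z - b k * f (k + 1) * c (k + 1))⁻¹)
    (hD0 : a 0 - z - c 0 * f (-1) * b (-1) - b 0 * f 1 * c 1 ≠ 0) :
    IsUnit (tridZ M N a b c - z • (1 : Matrix (Fin (M + N + 1)) (Fin (M + N + 1)) ℂ)) ∧
      (tridZ M N a b c - z • (1 : Matrix (Fin (M + N + 1)) (Fin (M + N + 1)) ℂ))⁻¹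
          (⟨M, by omega⟩ : Fin (M + N + 1)) (⟨M, by omega⟩ : Fin (M + N + 1)) =
        (a 0 - z - c 0 * f (-1) * b (-1) - b 0 * f 1 * c 1)⁻¹ := by
  set A := tridZ M N a b c - z • (1 : Matrix (Fin (M + N + 1)) (Fin (M + N + 1)) ℂ)
  set i₀ : Fin (M + N + 1) := ⟨M, by omega⟩
  have hsingle := fun {x r} => tridZ_sub_smul_mulVec_eq_single (i₀ := i₀) (x := x) (r := r)
    hup0 hupden hup hdown0 hdownden hdown rfl
  have hA : IsUnit A := by
    refine mulVec_injective_iff_isUnit.mp fun x y hxy => sub_eq_zero.mp ?_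
    have hker : A *ᵥ (x - y) = Pi.single i₀ 0 := by
      rw [mulVec_sub, hxy, sub_self, Pi.single_zero]
    obtain ⟨hcenter, hzero⟩ := hsingle hker
    exact hzero ((mul_eq_zero.mp hcenter).resolve_left hD0)
  refine ⟨hA, eq_inv_of_mul_eq_one_right ?_⟩
  have hcol : A *ᵥ (A⁻¹ *ᵥ Pi.single i₀ 1) = Pi.single i₀ 1 := by
    rw [mulVec_mulVec, mul_nonsing_inv A ((isUnit_iff_isUnit_det A).mp hA), one_mulVec]
  simpa [mulVec_single_one] using (hsingle hcol).1
end

section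
/- Let M, N ≥ 0 and let H be the (M+N+1)×(M+N+1) complex tridiagonal matrix indexed by k ∈ {−M,…,N} with diagonal entries a_k, superdiagonal entries b_k and subdiagonal entries c_{k+1}. Fix E ∈ ℂ, suppose all denominators in the two continued-fraction recurrences f_{−M−1}(E)=0, f_{−j}(E) = 1/(a_{−j} − E − c_{−j} f_{−j−1}(E) b_{−j−1}) (j = M,…,1) and f_{N+1}(E)=0, f_k(E) = 1/(a_k − E − b_k f_{k+1}(E) c_{k+1}) (k = N,…,1) are nonzero, and suppose the matched secular equation a_0 − E − c_0 f_{−1}(E) b_{−1} − b_0 f_1(E) c_1 = 0 holds. Define ψ by ψ_0 = 1, the downward recurrence ψ_k = −f_k(E) c_k ψ_{k−1} for k = 1,…,N, and the upward recurrence ψ_{−j} = −f_{−j}(E) b_{−j} ψ_{−j+1} for j = 1,…,M. Then ψ ≠ 0 and Hψ = Eψ. -/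
open Matrix BigOperators

/-- if all denominators of the two continued-fraction recurrences are
nonzero at `E` and the matched secular equation holds, then the vector `ψ` built by the
downward recurrence `ψ k = - f k * c k * ψ (k-1)` (`k = 1, ..., N`) and the upward
recurrence `ψ k = - f k * b k * ψ (k+1)` (`k = -1, ..., -M`), with `ψ 0 = 1`, is a
(nonzero) eigenvector of `H` with eigenvalue `E`. -/
theorem tridZ_matched_continued_fraction_eigenvector
    (M N : ℕ) (a b c : ℤ → ℂ) (E : ℂ) (f : ℤ → ℂ)
    (hup0 : f (-(M : ℤ) - 1) = 0)
    (hupden : ∀ k : ℤ, -(M : ℤ) ≤ k → k ≤ -1 →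
      a k - E - c k * f (k - 1) * b (k - 1) ≠ 0)
    (hup : ∀ k : ℤ, -(M : ℤ) ≤ k → k ≤ -1 →
      f k = (a k - E - c k * f (k - 1) * b (k - 1))⁻¹)
    (hdown0 : f ((N : ℤ) + 1) = 0)
    (hdownden : ∀ k : ℤ, 1 ≤ k → k ≤ (N : ℤ) →
      a k - E - b k * f (k + 1) * c (k + 1) ≠ 0)
    (hdown : ∀ k : ℤ, 1 ≤ k → k ≤ (N : ℤ) →
      f k = (a k - E - b k * f (k + 1) * c (k + 1))⁻¹)
    (hsec : a 0 - E - c 0 * f (-1) * b (-1) - b 0 * f 1 * c 1 = 0)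
    (ψ : ℤ → ℂ)
    (hψ0 : ψ 0 = 1)
    (hψdown : ∀ k : ℤ, 1 ≤ k → k ≤ (N : ℤ) → ψ k = - f k * c k * ψ (k - 1))
    (hψup : ∀ k : ℤ, -(M : ℤ) ≤ k → k ≤ -1 → ψ k = - f k * b k * ψ (k + 1))
    (v : Fin (M + N + 1) → ℂ)
    (hv : v = fun i : Fin (M + N + 1) => ψ (((i : ℕ) : ℤ) - (M : ℤ))) :
    v ≠ 0 ∧ (tridZ M N a b c).mulVec v = E • v := by
  constructor
  · intro h
    have h1 : v ⟨M, by omega⟩ = 0 := congrFun h _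
    rw [hv] at h1
    simp only at h1
    rw [show ((((⟨M, by omega⟩ : Fin (M+N+1)) : ℕ) : ℤ) - (M:ℤ)) = 0 by simp] at h1
    rw [hψ0] at h1
    exact one_ne_zero h1
  · funext i
    set k : ℤ := ((i : ℕ) : ℤ) - (M : ℤ) with hk
    have hkub : k ≤ (N : ℤ) := by have := i.2; omega
    have hklb : -(M : ℤ) ≤ k := by omega
    have hmv : (tridZ M N a b c).mulVec v i
        = ∑ j : Fin (M+N+1), tridZ M N a b c i j * v j := rfl
    have hsplit : ∀ j : Fin (M+N+1), tridZ M N a b c i j * v j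
        = (if j = i then a k * ψ k else 0)
          + (if (j : ℕ) = (i : ℕ) + 1 then b k * ψ (k+1) else 0)
          + (if (j : ℕ) + 1 = (i : ℕ) then c k * ψ (k-1) else 0) := by
      intro j
      simp only [tridZ, Matrix.of_apply, hv]
      by_cases h1 : (i : ℕ) = (j : ℕ)
      · have hj : j = i := Fin.ext h1.symm
        subst hj
        simp [← hk]
      · by_cases h2 : (j : ℕ) = (i : ℕ) + 1
        · have e1 : ¬ (((i:ℕ):ℤ) = ((j:ℕ):ℤ)) := by omega
          have e2 : (((j:ℕ):ℤ) = ((i:ℕ):ℤ) + 1) := by omega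
          have e3 : (((j:ℕ):ℤ) - (M:ℤ)) = k + 1 := by omega
          rw [if_neg e1, if_pos e2, if_neg (by exact fun h => h1 (Fin.ext_iff.mp rfl ▸ by omega)), if_pos h2,
            if_neg (by omega), e3, ← hk]
          ring
        · by_cases h3 : (i : ℕ) = (j : ℕ) + 1
          · have e1 : ¬ (((i:ℕ):ℤ) = ((j:ℕ):ℤ)) := by omega
            have e2 : ¬ (((j:ℕ):ℤ) = ((i:ℕ):ℤ) + 1) := by omega
            have e4 : (((i:ℕ):ℤ) = ((j:ℕ):ℤ) + 1) := by omega
            have e3 : (((j:ℕ):ℤ) - (M:ℤ)) = k - 1 := by omega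
            rw [if_neg e1, if_neg e2, if_pos e4, if_neg (by omega), if_neg h2,
              if_pos (by omega), e3, ← hk]
            ring
          · have e1 : ¬ (((i:ℕ):ℤ) = ((j:ℕ):ℤ)) := by omega
            have e2 : ¬ (((j:ℕ):ℤ) = ((i:ℕ):ℤ) + 1) := by omega
            have e4 : ¬ (((i:ℕ):ℤ) = ((j:ℕ):ℤ) + 1) := by omega
            rw [if_neg e1, if_neg e2, if_neg e4,
              if_neg (fun h => h1 (Fin.ext_iff.mp rfl ▸ by omega)),
              if_neg h2, if_neg (by omega)]
            ring
    have hsum : (tridZ M N a b c).mulVec v i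
        = a k * ψ k
          + (if (i : ℕ) + 1 < M + N + 1 then b k * ψ (k+1) else 0)
          + (if 0 < (i : ℕ) then c k * ψ (k-1) else 0) := by
      rw [hmv, Finset.sum_congr rfl (fun j _ => hsplit j), Finset.sum_add_distrib,
        Finset.sum_add_distrib]
      congr 1
      · congr 1
        · rw [Finset.sum_ite_eq' Finset.univ i (fun _ => a k * ψ k), if_pos (Finset.mem_univ i)]
        · by_cases h : (i : ℕ) + 1 < M + N + 1
          · rw [if_pos h,
              Finset.sum_eq_single_of_mem (⟨(i:ℕ)+1, h⟩ : Fin (M+N+1)) (Finset.mem_univ _)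
                (fun j _ hj => if_neg (fun hc => hj (Fin.ext hc)))]
            simp
          · rw [if_neg h]
            exact Finset.sum_eq_zero (fun j _ => if_neg (by have := j.2; omega))
      · by_cases h : 0 < (i : ℕ)
        · rw [if_pos h,
            Finset.sum_eq_single_of_mem (⟨(i:ℕ)-1, by omega⟩ : Fin (M+N+1)) (Finset.mem_univ _)
              (fun j _ hj => if_neg (fun hc => hj (Fin.ext (show (j:ℕ) = (i:ℕ) - 1 by omega))))]
          rw [if_pos (by simp; omega)]
        · rw [if_neg h]
          exact Finset.sum_eq_zero (fun j _ => if_neg (by omega))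
    have hitop : ((i : ℕ) + 1 < M + N + 1) ↔ k < (N : ℤ) := by omega
    have hibot : (0 < (i : ℕ)) ↔ -(M : ℤ) < k := by omega
    have hb : 0 ≤ k → (if (i : ℕ) + 1 < M + N + 1 then b k * ψ (k+1) else 0)
        = -(b k * (f (k+1) * (c (k+1) * ψ k))) := by
      intro h0
      by_cases h : (i : ℕ) + 1 < M + N + 1
      · rw [if_pos h]
        have hk1 : k + 1 ≤ (N : ℤ) := by omega
        have := hψdown (k+1) (by omega) hk1
        rw [show k + 1 - 1 = k by ring] at this
        rw [this]; ring
      · have hkN : k = (N : ℤ) := by omega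
        rw [if_neg h, hkN, hdown0]; ring
    have hc : k ≤ 0 → (if 0 < (i : ℕ) then c k * ψ (k-1) else 0)
        = -(c k * (f (k-1) * (b (k-1) * ψ k))) := by
      intro h0
      by_cases h : 0 < (i : ℕ)
      · rw [if_pos h]
        have := hψup (k-1) (by omega) (by omega)
        rw [show k - 1 + 1 = k by ring] at this
        rw [this]; ring
      · have hkM : k = -(M : ℤ) := by omega
        rw [if_neg h, hkM, show -(M:ℤ) - 1 = -(M:ℤ) - 1 by rfl, hup0]; ring
    have hgoal : (E • v) i = E * ψ k := by rw [hv]; simp [← hk]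
    rw [hgoal, hsum]
    rcases lt_trichotomy k 0 with hneg | hzero | hpos
    · -- -M ≤ k ≤ -1
      rw [hc (by omega)]
      have hif : (if (i : ℕ) + 1 < M + N + 1 then b k * ψ (k+1) else 0) = b k * ψ (k+1) := by
        rw [if_pos (by omega)]
      rw [hif]
      have hden := hupden k hklb (by omega)
      have hf : f k * (a k - E - c k * f (k-1) * b (k-1)) = 1 := by
        rw [hup k hklb (by omega)]; exact inv_mul_cancel₀ hden
      have hrec := hψup k hklb (by omega)
      linear_combination (a k - E - c k * f (k-1) * b (k-1)) * hrec - b k * ψ (k+1) * hf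
    · -- k = 0
      rw [hb (by omega), hc (by omega), hzero]
      norm_num
      linear_combination ψ 0 * hsec
    · -- 1 ≤ k ≤ N
      rw [hb (by omega)]
      have hif : (if 0 < (i : ℕ) then c k * ψ (k-1) else 0) = c k * ψ (k-1) := by
        rw [if_pos (by omega)]
      rw [hif]
      have hden := hdownden k (by omega) hkub
      have hf : f k * (a k - E - b k * f (k+1) * c (k+1)) = 1 := by
        rw [hdown k (by omega) hkub]; exact inv_mul_cancel₀ hden
      have hrec := hψdown k (by omega) hkub
      linear_combination (a k - E - b k * f (k+1) * c (k+1)) * hrec - c k * ψ (k-1) * hf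
end

section
/- Let d ≥ 1, N ≥ 1, and let A_1,…,A_N, B_1,…,B_{N−1}, C_2,…,C_N be d×d complex matrices. Let ℍ be the Nd×Nd block-tridiagonal matrix with diagonal blocks A_k, superdiagonal blocks B_k and subdiagonal blocks C_{k+1}. Fix z ∈ ℂ and suppose the matrix-continued-fraction recurrence F_{N+1}(z) = 0 (the d×d zero matrix), F_k(z) = (A_k − zI_d − B_k F_{k+1}(z) C_{k+1})^{-1} is well defined for k = N,…,2 (each matrix inverted is invertible; the term B_N F_{N+1} C_{N+1} is taken to be 0). Define D_1(z) = A_1 − zI_d − B_1 F_2(z) C_2. Then det(ℍ − zI) = det(D_1(z)) · ∏_{k=2}^{N} det(F_k(z)^{-1}), and z is an eigenvalue of ℍ if and only if det D_1(z) = 0. -/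
open Matrix BigOperators

/-- The `Nd × Nd` block-tridiagonal matrix with (1-based) `d × d` diagonal blocks `A k`,
superdiagonal blocks `B k` (block position `(k, k+1)`) and subdiagonal blocks `C (k+1)`
(block position `(k+1, k)`), all other blocks zero. -/
def blockTrid (N d : ℕ) (A B C : ℕ → Matrix (Fin d) (Fin d) ℂ) :
    Matrix (Fin N × Fin d) (Fin N × Fin d) ℂ :=
  Matrix.of fun p q =>
    if (p.1 : ℕ) = (q.1 : ℕ) then A ((p.1 : ℕ) + 1) p.2 q.2
    else if (q.1 : ℕ) = (p.1 : ℕ) + 1 then B ((p.1 : ℕ) + 1) p.2 q.2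
    else if (p.1 : ℕ) = (q.1 : ℕ) + 1 then C ((p.1 : ℕ) + 1) p.2 q.2
    else 0

def splitEquiv (n d : ℕ) : (Fin n × Fin d) ⊕ Fin d ≃ Fin (n+1) × Fin d where
  toFun := Sum.elim (fun p => (p.1.castSucc, p.2)) (fun x => (Fin.last n, x))
  invFun p := if h : (p.1 : ℕ) < n then Sum.inl (⟨p.1, h⟩, p.2) else Sum.inr p.2
  left_inv := by
    rintro (⟨i, x⟩ | x)
    · simp [Fin.castSucc, i.isLt]
    · simp
  right_inv := by
    rintro ⟨i, x⟩
    by_cases h : (i : ℕ) < n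
    · simp [h, Fin.ext_iff]
    · simp only [h, dif_neg, not_false_iff, Sum.elim_inr]
      have : (i : ℕ) = n := by omega
      simp [Fin.ext_iff, this]

lemma schur_step (d n : ℕ) (A B C : ℕ → Matrix (Fin d) (Fin d) ℂ) (z : ℂ)
    (hu : IsUnit (A (n+1) - z • (1 : Matrix (Fin d) (Fin d) ℂ))) :
    (blockTrid (n+1) d A B C - z • 1).det =
      (A (n+1) - z • (1 : Matrix (Fin d) (Fin d) ℂ)).det *
      (blockTrid n d
        (fun k => if k = n then
            A n - B n * (A (n+1) - z • (1 : Matrix (Fin d) (Fin d) ℂ))⁻¹ * C (n+1)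
          else A k) B C - z • 1).det := by
  classical
  set G := (A (n+1) - z • (1 : Matrix (Fin d) (Fin d) ℂ))⁻¹ with hG
  set M := blockTrid (n+1) d A B C - z • (1 : Matrix (Fin (n+1) × Fin d) (Fin (n+1) × Fin d) ℂ) with hM
  set e := splitEquiv n d with he
  set Bb : Matrix (Fin n × Fin d) (Fin d) ℂ :=
    Matrix.of (fun p y => if n = (p.1 : ℕ) + 1 then B n p.2 y else 0) with hBb
  set Cb : Matrix (Fin d) (Fin n × Fin d) ℂ :=
    Matrix.of (fun x q => if n = (q.1 : ℕ) + 1 then C (n+1) x q.2 else 0) with hCb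
  have hdet : M.det = (M.submatrix e e).det := (det_submatrix_equiv_self e M).symm
  have hblocks : M.submatrix e e =
      fromBlocks (blockTrid n d A B C - z • 1) Bb Cb
        (A (n+1) - z • (1 : Matrix (Fin d) (Fin d) ℂ)) := by
    ext pq rs
    cases pq with
    | inl p =>
      cases rs with
      | inl q =>
        obtain ⟨i, x⟩ := p; obtain ⟨j, y⟩ := q
        simp only [Matrix.submatrix_apply, he, splitEquiv, Equiv.coe_fn_mk, Sum.elim_inl,
          fromBlocks_apply₁₁, hM, Matrix.sub_apply, Matrix.smul_apply, Matrix.one_apply,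
          blockTrid, Matrix.of_apply, Fin.coe_castSucc, Prod.mk.injEq, Fin.castSucc_inj,
          Prod.ext_iff]
      | inr y =>
        obtain ⟨i, x⟩ := p
        simp only [Matrix.submatrix_apply, he, splitEquiv, Equiv.coe_fn_mk, Sum.elim_inl,
          Sum.elim_inr, fromBlocks_apply₁₂, hM, Matrix.sub_apply, Matrix.smul_apply,
          Matrix.one_apply, blockTrid, Matrix.of_apply, Fin.coe_castSucc, Fin.val_last,
          Prod.mk.injEq, Prod.ext_iff, hBb]
        have hi : (i : ℕ) < n := i.isLt
        have h1 : ¬ ((i : ℕ) = n) := by omega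
        have h3 : ¬ ((i : ℕ) = n + 1) := by omega
        have h4 : ¬ ((i.castSucc : Fin (n+1)) = Fin.last n) := by
          simp [Fin.ext_iff]; omega
        simp only [h1, if_false, h3, Fin.ext_iff, Fin.coe_castSucc, Fin.val_last]
        split_ifs <;> simp_all
    | inr x =>
      cases rs with
      | inl q =>
        obtain ⟨j, y⟩ := q
        simp only [Matrix.submatrix_apply, he, splitEquiv, Equiv.coe_fn_mk, Sum.elim_inl,
          Sum.elim_inr, fromBlocks_apply₂₁, hM, Matrix.sub_apply, Matrix.smul_apply,
          Matrix.one_apply, blockTrid, Matrix.of_apply, Fin.coe_castSucc, Fin.val_last,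
          Prod.mk.injEq, Prod.ext_iff, hCb]
        have hj : (j : ℕ) < n := j.isLt
        have h1 : ¬ ((n : ℕ) = (j : ℕ)) := by omega
        have h2 : ¬ ((j : ℕ) = n + 1) := by omega
        simp only [h1, if_false, h2, Fin.ext_iff, Fin.coe_castSucc, Fin.val_last]
        split_ifs <;> simp_all <;> omega
      | inr y =>
        simp only [Matrix.submatrix_apply, he, splitEquiv, Equiv.coe_fn_mk, Sum.elim_inr,
          fromBlocks_apply₂₂, hM, Matrix.sub_apply, Matrix.smul_apply, Matrix.one_apply,
          blockTrid, Matrix.of_apply, Fin.val_last, Prod.mk.injEq, Prod.ext_iff]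
        simp
  haveI : Invertible (A (n+1) - z • (1 : Matrix (Fin d) (Fin d) ℂ)) := hu.invertible
  have hprod : Bb * G * Cb = Matrix.of (fun p q =>
      if n = (p.1 : ℕ) + 1 ∧ n = (q.1 : ℕ) + 1 then (B n * G * C (n+1)) p.2 q.2 else 0) := by
    ext ⟨i, x⟩ ⟨j, y⟩
    simp only [Matrix.mul_apply, hBb, hCb, Matrix.of_apply]
    by_cases h1 : n = (i : ℕ) + 1 <;> by_cases h2 : n = (j : ℕ) + 1 <;>
      simp [h1, h2, Matrix.mul_apply, Finset.sum_mul]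
  have hfinal : (blockTrid n d A B C - z • 1) - Bb * G * Cb =
      blockTrid n d (fun k => if k = n then A n - B n * G * C (n+1) else A k) B C - z • 1 := by
    rw [hprod]
    ext ⟨i, x⟩ ⟨j, y⟩
    simp only [Matrix.sub_apply, Matrix.of_apply, blockTrid, Matrix.smul_apply]
    by_cases hij : i = j
    · subst hij
      by_cases hn : (i : ℕ) + 1 = n
      · simp [hn, Matrix.sub_apply, Matrix.one_apply]
        ring
      · have hn' : ¬ (n = (i : ℕ) + 1) := fun h => hn h.symm
        simp [hn, hn', Matrix.one_apply]
    · have hv : ¬ ((i : ℕ) = (j : ℕ)) := fun h => hij (Fin.ext h)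
      have hc : ¬ ((n = (i : ℕ) + 1) ∧ (n = (j : ℕ) + 1)) := by omega
      have hpr : ¬ (((i, x) : Fin n × Fin d) = (j, y)) := by
        simp [Prod.ext_iff]; intro h; exact absurd h hij
      simp [hv, hc, hpr, Matrix.one_apply]
  rw [hdet, hblocks, det_fromBlocks₂₂, invOf_eq_nonsing_inv, ← hG, hfinal]

def oneEquiv (d : ℕ) : Fin d ≃ Fin 1 × Fin d where
  toFun x := (0, x)
  invFun p := p.2
  left_inv x := rfl
  right_inv p := by
    obtain ⟨a, x⟩ := p
    have : a = 0 := Subsingleton.elim a 0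
    subst this
    rfl

lemma det_key (d : ℕ) (B C : ℕ → Matrix (Fin d) (Fin d) ℂ) (z : ℂ) :
    ∀ n : ℕ, 1 ≤ n → ∀ (A F : ℕ → Matrix (Fin d) (Fin d) ℂ),
    F (n + 1) = 0 →
    (∀ k, 2 ≤ k → k ≤ n →
      IsUnit (A k - z • (1 : Matrix (Fin d) (Fin d) ℂ) - B k * F (k + 1) * C (k + 1))) →
    (∀ k, 2 ≤ k → k ≤ n →
      F k = (A k - z • (1 : Matrix (Fin d) (Fin d) ℂ) - B k * F (k + 1) * C (k + 1))⁻¹) →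
    (blockTrid n d A B C - z • 1).det =
      (A 1 - z • (1 : Matrix (Fin d) (Fin d) ℂ) - B 1 * F 2 * C 2).det *
        ∏ k ∈ Finset.Icc 2 n, ((F k)⁻¹).det := by
  intro n
  induction n with
  | zero => omega
  | succ n ih =>
    intro _ A F hFtop hinv hF
    rcases Nat.eq_zero_or_pos n with hn0 | hn1
    · subst hn0
      have hF2 : F 2 = 0 := hFtop
      have hIcc : Finset.Icc 2 1 = (∅ : Finset ℕ) := by decide
      rw [hIcc, Finset.prod_empty, mul_one, hF2]
      have hM : (blockTrid 1 d A B C - z • 1).submatrix (oneEquiv d) (oneEquiv d) =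
          A 1 - z • (1 : Matrix (Fin d) (Fin d) ℂ) - B 1 * 0 * C 2 := by
        ext x y
        simp [blockTrid, oneEquiv, Matrix.one_apply, Prod.ext_iff]
      rw [← det_submatrix_equiv_self (oneEquiv d), hM]
    · -- n ≥ 1
      have hFn1 : F (n + 1) = (A (n+1) - z • (1 : Matrix (Fin d) (Fin d) ℂ))⁻¹ := by
        have := hF (n+1) (by omega) le_rfl
        rw [hFtop] at this
        simpa using this
      have hun1 : IsUnit (A (n+1) - z • (1 : Matrix (Fin d) (Fin d) ℂ)) := by
        have := hinv (n+1) (by omega) le_rfl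
        rw [hFtop] at this
        simpa using this
      set A' : ℕ → Matrix (Fin d) (Fin d) ℂ :=
        fun k => if k = n then
          A n - B n * (A (n+1) - z • (1 : Matrix (Fin d) (Fin d) ℂ))⁻¹ * C (n+1)
        else A k with hA'
      set F' : ℕ → Matrix (Fin d) (Fin d) ℂ :=
        fun k => if k = n + 1 then 0 else F k with hF'
      have hA'n : A' n = A n - B n * F (n+1) * C (n+1) := by
        rw [hA', hFn1]; simp
      have hF'le : ∀ k, k ≤ n → F' k = F k := by
        intro k hk; rw [hF']; simp; omega
      have key : ∀ k, 2 ≤ k → k ≤ n →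
          A' k - z • (1 : Matrix (Fin d) (Fin d) ℂ) - B k * F' (k+1) * C (k+1) =
          A k - z • (1 : Matrix (Fin d) (Fin d) ℂ) - B k * F (k+1) * C (k+1) := by
        intro k hk2 hkn
        by_cases hk : k = n
        · subst hk
          rw [hA'n, hF']
          simp [sub_right_comm]
        · have : A' k = A k := by rw [hA']; simp [hk]
          rw [this, hF'le (k+1) (by omega)]
      have ihc := ih hn1 A' F' (by rw [hF']; simp)
        (fun k hk2 hkn => by rw [key k hk2 hkn]; exact hinv k hk2 (by omega))
        (fun k hk2 hkn => by
          rw [key k hk2 hkn, hF'le k hkn]; exact hF k hk2 (by omega))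
      have hschur := schur_step d n A B C z hun1
      rw [← hA'] at hschur
      rw [hschur, ihc]
      have hdetlast : (A (n+1) - z • (1 : Matrix (Fin d) (Fin d) ℂ)).det =
          ((F (n+1))⁻¹).det := by
        rw [hFn1, nonsing_inv_nonsing_inv _ ((isUnit_iff_isUnit_det _).1 hun1)]
      have hprodc : ∏ k ∈ Finset.Icc 2 n, ((F' k)⁻¹).det =
          ∏ k ∈ Finset.Icc 2 n, ((F k)⁻¹).det := by
        refine Finset.prod_congr rfl fun k hk => ?_
        rw [hF'le k (Finset.mem_Icc.1 hk).2]
      have hprodsucc : ∏ k ∈ Finset.Icc 2 (n+1), ((F k)⁻¹).det =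
          (∏ k ∈ Finset.Icc 2 n, ((F k)⁻¹).det) * ((F (n+1))⁻¹).det :=
        Finset.prod_Icc_succ_top (by omega) _
      have hfirst : (A' 1 - z • (1 : Matrix (Fin d) (Fin d) ℂ) - B 1 * F' 2 * C 2).det =
          (A 1 - z • (1 : Matrix (Fin d) (Fin d) ℂ) - B 1 * F 2 * C 2).det := by
        by_cases h1 : n = 1
        · subst h1
          rw [hA'n]  -- A' 1 = A 1 - B 1 * F 2 * C 2
          rw [hF']
          simp [sub_right_comm]
        · have hA1 : A' 1 = A 1 := by rw [hA']; simp; omega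
          have hF2 : F' 2 = F 2 := by rw [hF']; simp; omega
          rw [hA1, hF2]
      rw [hprodc, hfirst, hdetlast, hprodsucc]
      ring

/-- if the matrix-continued-fraction recurrence `F (N+1) = 0`,
`F k = (A k - z•1 - B k * F (k+1) * C (k+1))⁻¹` is well defined for `k = N, ..., 2`
(each inverted matrix invertible), then with `D₁(z) = A 1 - z•1 - B 1 * F 2 * C 2` one
has `det (ℍ - z•1) = det D₁(z) * ∏_{k=2}^N det ((F k)⁻¹)`, and `z` is an eigenvalue of
`ℍ` iff `det D₁(z) = 0`. -/
theorem blockTrid_det_matrix_continued_fraction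
    (d N : ℕ) (hd : 1 ≤ d) (hN : 1 ≤ N)
    (A B C : ℕ → Matrix (Fin d) (Fin d) ℂ) (z : ℂ)
    (F : ℕ → Matrix (Fin d) (Fin d) ℂ)
    (hFtop : F (N + 1) = 0)
    (hinv : ∀ k, 2 ≤ k → k ≤ N →
      IsUnit (A k - z • (1 : Matrix (Fin d) (Fin d) ℂ) - B k * F (k + 1) * C (k + 1)))
    (hF : ∀ k, 2 ≤ k → k ≤ N →
      F k = (A k - z • (1 : Matrix (Fin d) (Fin d) ℂ) - B k * F (k + 1) * C (k + 1))⁻¹) :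
    (blockTrid N d A B C - z • (1 : Matrix (Fin N × Fin d) (Fin N × Fin d) ℂ)).det =
      (A 1 - z • (1 : Matrix (Fin d) (Fin d) ℂ) - B 1 * F 2 * C 2).det *
        ∏ k ∈ Finset.Icc 2 N, ((F k)⁻¹).det ∧
    ((blockTrid N d A B C - z • (1 : Matrix (Fin N × Fin d) (Fin N × Fin d) ℂ)).det = 0 ↔
      (A 1 - z • (1 : Matrix (Fin d) (Fin d) ℂ) - B 1 * F 2 * C 2).det = 0) := by
  have hmain := det_key d B C z N hN A F hFtop hinv hF
  refine ⟨hmain, ?_⟩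
  have hP : ∏ k ∈ Finset.Icc 2 N, ((F k)⁻¹).det ≠ 0 := by
    rw [Finset.prod_ne_zero_iff]
    intro k hk
    obtain ⟨hk2, hkN⟩ := Finset.mem_Icc.1 hk
    have hu := hinv k hk2 hkN
    have hrw : (F k)⁻¹ =
        A k - z • (1 : Matrix (Fin d) (Fin d) ℂ) - B k * F (k + 1) * C (k + 1) := by
      rw [hF k hk2 hkN, nonsing_inv_nonsing_inv _ ((isUnit_iff_isUnit_det _).1 hu)]
    rw [hrw]
    exact ((isUnit_iff_isUnit_det _).1 hu).ne_zero
  rw [hmain]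
  constructor
  · intro h
    rcases mul_eq_zero.1 h with h | h
    · exact h
    · exact absurd h hP
  · intro h
    rw [h, zero_mul]
end

section
/- (Lemma 2, finite version.) Let d ≥ 1, M, N ≥ 0, and let ℍ be the (M+N+1)d×(M+N+1)d complex block-tridiagonal matrix with d×d blocks indexed by k ∈ {−M,…,N}: diagonal blocks A_k, superdiagonal blocks B_k (block position (k,k+1)) and subdiagonal blocks C_{k+1} (block position (k+1,k)). Fix z ∈ ℂ and suppose both matrix-continued-fraction recurrences are well defined: F_{−M−1}(z)=0 and F_{−j}(z) = (A_{−j} − zI_d − C_{−j} F_{−j−1}(z) B_{−j−1})^{-1} for j = M,…,1, and F_{N+1}(z)=0 and F_k(z) = (A_k − zI_d − B_k F_{k+1}(z) C_{k+1})^{-1} for k = N,…,1, with each inverted matrix invertible. Define D_0(z) = A_0 − zI_d − C_0 F_{−1}(z) B_{−1} − B_0 F_1(z) C_1. Then det(ℍ − zI) = det(D_0(z)) · ∏_{j=1}^{M} det(F_{−j}(z)^{-1}) · ∏_{k=1}^{N} det(F_k(z)^{-1}); in particular z is an eigenvalue of ℍ if and only if det D_0(z) = 0. -/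
open Matrix BigOperators

/-- The `(M+N+1)d × (M+N+1)d` complex block-tridiagonal matrix whose `d × d` blocks are
indexed by `k ∈ {-M, ..., N}` (0-based block row `i` corresponds to `k = i - M`), with
diagonal blocks `A k`, superdiagonal blocks `B k` (block position `(k, k+1)`) and
subdiagonal blocks `C (k+1)` (block position `(k+1, k)`), all other blocks zero. -/
def blockTridZ (M N d : ℕ) (A B C : ℤ → Matrix (Fin d) (Fin d) ℂ) :
    Matrix (Fin (M + N + 1) × Fin d) (Fin (M + N + 1) × Fin d) ℂ :=
  Matrix.of fun p q =>
    if ((p.1 : ℕ) : ℤ) = ((q.1 : ℕ) : ℤ) then A (((p.1 : ℕ) : ℤ) - (M : ℤ)) p.2 q.2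
    else if ((q.1 : ℕ) : ℤ) = ((p.1 : ℕ) : ℤ) + 1 then
      B (((p.1 : ℕ) : ℤ) - (M : ℤ)) p.2 q.2
    else if ((p.1 : ℕ) : ℤ) = ((q.1 : ℕ) : ℤ) + 1 then
      C (((p.1 : ℕ) : ℤ) - (M : ℤ)) p.2 q.2
    else 0

namespace BTZfin

variable {d M N : ℕ}

/-- Assemble doubly-indexed block data into one big matrix. -/
def asmBlk (d M N : ℕ) (P : ℤ → ℤ → Matrix (Fin d) (Fin d) ℂ) :
    Matrix (Fin (M + N + 1) × Fin d) (Fin (M + N + 1) × Fin d) ℂ :=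
  Matrix.of fun p q => P (((p.1 : ℕ) : ℤ) - (M : ℤ)) (((q.1 : ℕ) : ℤ) - (M : ℤ)) p.2 q.2

lemma asmBlk_mul (P Q : ℤ → ℤ → Matrix (Fin d) (Fin d) ℂ) :
    asmBlk d M N P * asmBlk d M N Q =
      asmBlk d M N (fun a c => ∑ i : Fin (M + N + 1),
        P a (((i : ℕ) : ℤ) - (M : ℤ)) * Q (((i : ℕ) : ℤ) - (M : ℤ)) c) := by
  ext p q
  simp [asmBlk, Matrix.mul_apply, Matrix.sum_apply, Fintype.sum_prod_type]

lemma asmBlk_congr {P Q : ℤ → ℤ → Matrix (Fin d) (Fin d) ℂ}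
    (h : ∀ a c : ℤ, -(M : ℤ) ≤ a → a ≤ N → -(M : ℤ) ≤ c → c ≤ N → P a c = Q a c) :
    asmBlk d M N P = asmBlk d M N Q := by
  ext p q
  have hp := p.1.isLt
  have hq := q.1.isLt
  simp only [asmBlk, Matrix.of_apply]
  rw [h _ _ (by omega) (by omega) (by omega) (by omega)]

lemma sum_fin_shift {β : Type*} [AddCommMonoid β] (f : ℤ → β) :
    ∑ i : Fin (M + N + 1), f (((i : ℕ) : ℤ) - (M : ℤ)) =
      ∑ u ∈ Finset.Icc (-(M : ℤ)) (N : ℤ), f u := by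
  refine Finset.sum_nbij' (i := fun i => ((i : ℕ) : ℤ) - (M : ℤ))
    (j := fun u => (⟨min (u + (M : ℤ)).toNat (M + N), by omega⟩ : Fin (M + N + 1)))
    ?_ ?_ ?_ ?_ ?_ <;> intros <;>
    first
      | (simp_all [Finset.mem_Icc]; omega)
      | (ext; simp_all [Finset.mem_Icc]; omega)
      | simp_all [Finset.mem_Icc]

lemma prod_fin_shift (f : ℤ → ℂ) :
    ∏ i : Fin (M + N + 1), f (((i : ℕ) : ℤ) - (M : ℤ)) =
      ∏ u ∈ Finset.Icc (-(M : ℤ)) (N : ℤ), f u := by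
  refine Finset.prod_nbij' (i := fun i => ((i : ℕ) : ℤ) - (M : ℤ))
    (j := fun u => (⟨min (u + (M : ℤ)).toNat (M + N), by omega⟩ : Fin (M + N + 1)))
    ?_ ?_ ?_ ?_ ?_ <;> intros <;>
    first
      | (simp_all [Finset.mem_Icc]; omega)
      | (ext; simp_all [Finset.mem_Icc]; omega)
      | simp_all [Finset.mem_Icc]

lemma asmBlk_det_one (w : ℤ → ℤ) (P : ℤ → ℤ → Matrix (Fin d) (Fin d) ℂ)
    (h0 : ∀ a c, w c < w a → P a c = 0)
    (h1 : ∀ a c, a ≠ c → w a = w c → P a c = 0)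
    (h2 : ∀ a, P a a = 1) :
    (asmBlk d M N P).det = 1 := by
  have hbt : (asmBlk d M N P).BlockTriangular
      (fun p => w (((p.1 : ℕ) : ℤ) - (M : ℤ))) := by
    intro p q hlt
    show P _ _ p.2 q.2 = 0
    rw [h0 _ _ hlt]
    rfl
  rw [hbt.det]
  refine Finset.prod_eq_one fun v hv => ?_
  have hsq : (asmBlk d M N P).toSquareBlock
      (fun p => w (((p.1 : ℕ) : ℤ) - (M : ℤ))) v = 1 := by
    ext ⟨p, hp⟩ ⟨q, hq⟩
    show P _ _ p.2 q.2 = _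
    by_cases hpq : (((p.1 : ℕ) : ℤ) - (M : ℤ)) = (((q.1 : ℕ) : ℤ) - (M : ℤ))
    · have h1' : p.1 = q.1 := by
        have : ((p.1 : ℕ) : ℤ) = ((q.1 : ℕ) : ℤ) := by omega
        exact Fin.ext (by exact_mod_cast this)
      rw [hpq, h2]
      rcases p with ⟨p1, p2⟩; rcases q with ⟨q1, q2⟩
      simp only at h1'
      subst h1'
      by_cases h22 : p2 = q2
      · subst h22; simp [Matrix.one_apply]
      · rw [Matrix.one_apply_ne (by simp [h22]),
          Matrix.one_apply_ne (by simp [Subtype.ext_iff, Prod.ext_iff, h22])]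
    · rw [h1 _ _ hpq (by rw [hp, hq]),
        Matrix.one_apply_ne (by
          simp only [Subtype.ext_iff, Prod.ext_iff, ne_eq, not_and]
          intro h'; exact absurd (by rw [h']) hpq)]
      rfl
  rw [hsq, Matrix.det_one]

lemma asmBlk_det_diag (hd : 1 ≤ d) (Dm : ℤ → Matrix (Fin d) (Fin d) ℂ) :
    (asmBlk d M N (fun a c => if c = a then Dm a else 0)).det =
      ∏ i : Fin (M + N + 1), (Dm (((i : ℕ) : ℤ) - (M : ℤ))).det := by
  have hbt : (asmBlk d M N (fun a c => if c = a then Dm a else 0)).BlockTriangular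
      (fun p => p.1) := by
    intro p q hlt
    show (if (((q.1 : ℕ) : ℤ) - (M : ℤ)) = (((p.1 : ℕ) : ℤ) - (M : ℤ))
        then Dm (((p.1 : ℕ) : ℤ) - (M : ℤ)) else 0) p.2 q.2 = 0
    rw [if_neg (by
      intro h
      have : q.1 = p.1 := Fin.ext (by omega)
      exact absurd this (ne_of_lt hlt))]
    rfl
  rw [hbt.det]
  have himg : (Finset.univ.image (fun p : Fin (M + N + 1) × Fin d => p.1)) =
      Finset.univ := by
    refine Finset.eq_univ_iff_forall.mpr fun i => ?_
    exact Finset.mem_image.mpr ⟨(i, ⟨0, hd⟩), Finset.mem_univ _, rfl⟩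
  rw [himg]
  refine Finset.prod_congr rfl fun i _ => ?_
  let e : {p : Fin (M + N + 1) × Fin d // p.1 = i} ≃ Fin d :=
    { toFun := fun p => p.1.2
      invFun := fun s => ⟨(i, s), rfl⟩
      left_inv := fun p => by
        rcases p with ⟨⟨p1, p2⟩, hp⟩
        simp only at hp
        subst hp; rfl
      right_inv := fun s => rfl }
  have hsq : (asmBlk d M N (fun a c => if c = a then Dm a else 0)).toSquareBlock
      (fun p => p.1) i = (Dm (((i : ℕ) : ℤ) - (M : ℤ))).submatrix e e := by
    ext ⟨p, hp⟩ ⟨q, hq⟩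
    simp only [Matrix.toSquareBlock_def, asmBlk, Matrix.of_apply, Matrix.submatrix_apply]
    rw [if_pos (by rw [hp, hq]), hp]
    rfl
  rw [hsq, Matrix.det_submatrix_equiv_self]

/-- Upward/downward "L" factor blocks. -/
noncomputable def LbF (B C F : ℤ → Matrix (Fin d) (Fin d) ℂ) (a c : ℤ) :
    Matrix (Fin d) (Fin d) ℂ :=
  if c = a then 1
  else if c = a - 1 ∧ a ≤ 0 then C a * F (a - 1)
  else if c = a + 1 ∧ 0 ≤ a then B a * F (a + 1)
  else 0

/-- Upward/downward "R" factor blocks. -/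
noncomputable def RbF (B C F : ℤ → Matrix (Fin d) (Fin d) ℂ) (a c : ℤ) :
    Matrix (Fin d) (Fin d) ℂ :=
  if c = a then 1
  else if c = a + 1 ∧ c ≤ 0 then F a * B a
  else if c = a - 1 ∧ 0 ≤ c then F a * C a
  else 0

/-- Diagonal factor blocks. -/
noncomputable def DmF (A B C F : ℤ → Matrix (Fin d) (Fin d) ℂ) (z : ℂ) (a : ℤ) :
    Matrix (Fin d) (Fin d) ℂ :=
  if a = 0 then A 0 - z • 1 - C 0 * F (-1) * B (-1) - B 0 * F 1 * C 1
  else if a < 0 then A a - z • 1 - C a * F (a - 1) * B (a - 1)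
  else A a - z • 1 - B a * F (a + 1) * C (a + 1)

/-- Blocks of `ℍ - z•1`. -/
noncomputable def HbF (A B C : ℤ → Matrix (Fin d) (Fin d) ℂ) (z : ℂ) (a c : ℤ) :
    Matrix (Fin d) (Fin d) ℂ :=
  if c = a then A a - z • 1 else if c = a + 1 then B a else if c = a - 1 then C a else 0

lemma H_eq (A B C : ℤ → Matrix (Fin d) (Fin d) ℂ) (z : ℂ) :
    blockTridZ M N d A B C - z • 1 = asmBlk d M N (HbF A B C z) := by
  ext p q
  simp only [blockTridZ, asmBlk, HbF, Matrix.sub_apply, Matrix.smul_apply,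
    Matrix.of_apply, Matrix.one_apply, smul_eq_mul]
  by_cases h1 : ((p.1 : ℕ) : ℤ) = ((q.1 : ℕ) : ℤ)
  · rw [if_pos h1,
      if_pos (by omega : (((q.1 : ℕ) : ℤ) - (M : ℤ)) = (((p.1 : ℕ) : ℤ) - (M : ℤ)))]
    have h1' : p.1 = q.1 := Fin.ext (by omega)
    simp only [Matrix.sub_apply, Matrix.smul_apply, Matrix.one_apply, smul_eq_mul]
    by_cases h2 : p.2 = q.2
    · have hpq : p = q := Prod.ext h1' h2
      rw [if_pos hpq, if_pos h2]
    · rw [if_neg h2, if_neg (fun h : p = q => h2 (congrArg Prod.snd h))]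
  · rw [if_neg h1,
      if_neg (by omega : ¬(((q.1 : ℕ) : ℤ) - (M : ℤ)) = (((p.1 : ℕ) : ℤ) - (M : ℤ)))]
    have hne : ¬ p = q := fun h => h1 (by rw [h])
    rw [if_neg hne, mul_zero, sub_zero]
    by_cases h2 : ((q.1 : ℕ) : ℤ) = ((p.1 : ℕ) : ℤ) + 1
    · rw [if_pos h2,
        if_pos (by omega :
          (((q.1 : ℕ) : ℤ) - (M : ℤ)) = (((p.1 : ℕ) : ℤ) - (M : ℤ)) + 1)]
    · rw [if_neg h2,
        if_neg (by omega :
          ¬(((q.1 : ℕ) : ℤ) - (M : ℤ)) = (((p.1 : ℕ) : ℤ) - (M : ℤ)) + 1)]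
      by_cases h3 : ((p.1 : ℕ) : ℤ) = ((q.1 : ℕ) : ℤ) + 1
      · rw [if_pos h3,
          if_pos (by omega :
            (((q.1 : ℕ) : ℤ) - (M : ℤ)) = (((p.1 : ℕ) : ℤ) - (M : ℤ)) - 1)]
      · rw [if_neg h3,
          if_neg (by omega :
            ¬(((q.1 : ℕ) : ℤ) - (M : ℤ)) = (((p.1 : ℕ) : ℤ) - (M : ℤ)) - 1)]
        rfl

lemma middle (A B C F : ℤ → Matrix (Fin d) (Fin d) ℂ) (z : ℂ)
    (hup0 : F (-(M : ℤ) - 1) = 0) (hdown0 : F ((N : ℤ) + 1) = 0)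
    (hFD : ∀ u : ℤ, (-(M : ℤ) ≤ u ∧ u ≤ -1) ∨ (1 ≤ u ∧ u ≤ (N : ℤ)) →
      F u * DmF A B C F z u = 1)
    (hDF : ∀ u : ℤ, (-(M : ℤ) ≤ u ∧ u ≤ -1) ∨ (1 ≤ u ∧ u ≤ (N : ℤ)) →
      DmF A B C F z u * F u = 1) :
    asmBlk d M N (LbF B C F) *
        asmBlk d M N (fun a c => if c = a then DmF A B C F z a else 0) *
        asmBlk d M N (RbF B C F) = asmBlk d M N (HbF A B C z) := by
  rw [asmBlk_mul, asmBlk_mul]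
  apply asmBlk_congr
  intro a c ha1 ha2 hc1 hc2
  have hinner : ∀ i : Fin (M + N + 1),
      (∑ i' : Fin (M + N + 1), LbF B C F a (((i' : ℕ) : ℤ) - (M : ℤ)) *
        (if (((i : ℕ) : ℤ) - (M : ℤ)) = (((i' : ℕ) : ℤ) - (M : ℤ))
          then DmF A B C F z (((i' : ℕ) : ℤ) - (M : ℤ)) else 0)) =
      LbF B C F a (((i : ℕ) : ℤ) - (M : ℤ)) * DmF A B C F z (((i : ℕ) : ℤ) - (M : ℤ)) := by
    intro i
    rw [Fintype.sum_eq_single i (fun i' hne => by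
      rw [if_neg (fun h => hne (Fin.ext (by omega))), mul_zero])]
    rw [if_pos rfl]
  calc (∑ i : Fin (M + N + 1),
        (∑ i' : Fin (M + N + 1), LbF B C F a (((i' : ℕ) : ℤ) - (M : ℤ)) *
          (if (((i : ℕ) : ℤ) - (M : ℤ)) = (((i' : ℕ) : ℤ) - (M : ℤ))
            then DmF A B C F z (((i' : ℕ) : ℤ) - (M : ℤ)) else 0)) *
          RbF B C F (((i : ℕ) : ℤ) - (M : ℤ)) c)
      = ∑ u ∈ Finset.Icc (-(M : ℤ)) (N : ℤ),
          LbF B C F a u * DmF A B C F z u * RbF B C F u c := by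
        rw [← sum_fin_shift]
        exact Finset.sum_congr rfl fun i _ => by rw [hinner]
    _ = HbF A B C z a c := ?_
  have hz0 : ∀ u ∈ Finset.Icc (-(M : ℤ)) (N : ℤ), u ∉ ({a - 1, a, a + 1} : Finset ℤ) →
      LbF B C F a u * DmF A B C F z u * RbF B C F u c = 0 := by
    intro u _ hu
    simp only [Finset.mem_insert, Finset.mem_singleton, not_or] at hu
    have hL : LbF B C F a u = 0 := by
      rw [LbF, if_neg (by omega), if_neg (by omega), if_neg (by omega)]
    rw [hL, zero_mul, zero_mul]
  rw [← Finset.sum_subset (Finset.inter_subset_right :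
        (({a - 1, a, a + 1} : Finset ℤ) ∩ Finset.Icc (-(M : ℤ)) (N : ℤ)) ⊆ _)
      (fun x hx hnx => hz0 x hx (fun hm => hnx (Finset.mem_inter.mpr ⟨hm, hx⟩))),
    ← Finset.filter_mem_eq_inter, Finset.sum_filter]
  rw [show ({a - 1, a, a + 1} : Finset ℤ) = insert (a - 1) (insert a {a + 1}) from rfl,
    Finset.sum_insert (by
      simp only [Finset.mem_insert, Finset.mem_singleton]; push_neg; omega),
    Finset.sum_insert (by simp only [Finset.mem_singleton]; omega),
    Finset.sum_singleton]
  rw [if_pos (Finset.mem_Icc.mpr ⟨ha1, ha2⟩)]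
  have hga1 : (if a - 1 ∈ Finset.Icc (-(M : ℤ)) (N : ℤ) then
      LbF B C F a (a - 1) * DmF A B C F z (a - 1) * RbF B C F (a - 1) c else 0) =
      LbF B C F a (a - 1) * DmF A B C F z (a - 1) * RbF B C F (a - 1) c := by
    split_ifs with h
    · rfl
    · rw [Finset.mem_Icc] at h
      have hL : LbF B C F a (a - 1) = 0 := by
        by_cases hM : a = -(M : ℤ)
        · rw [LbF, if_neg (by omega), if_pos ⟨rfl, by omega⟩,
            show a - 1 = -(M : ℤ) - 1 by omega, hup0, mul_zero]
        · omega
      rw [hL, zero_mul, zero_mul]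
  have hga3 : (if a + 1 ∈ Finset.Icc (-(M : ℤ)) (N : ℤ) then
      LbF B C F a (a + 1) * DmF A B C F z (a + 1) * RbF B C F (a + 1) c else 0) =
      LbF B C F a (a + 1) * DmF A B C F z (a + 1) * RbF B C F (a + 1) c := by
    split_ifs with h
    · rfl
    · rw [Finset.mem_Icc] at h
      have hL : LbF B C F a (a + 1) = 0 := by
        by_cases hN : a = (N : ℤ)
        · rw [LbF, if_neg (by omega), if_neg (by omega), if_pos ⟨rfl, by omega⟩,
            show a + 1 = (N : ℤ) + 1 by omega, hdown0, mul_zero]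
        · omega
      rw [hL, zero_mul, zero_mul]
  rw [hga1, hga3]
  by_cases hca : c = a
  · subst hca
    rw [HbF, if_pos rfl]
    rw [show LbF B C F c c = 1 from by rw [LbF, if_pos rfl],
      show RbF B C F c c = 1 from by rw [RbF, if_pos rfl], one_mul, mul_one]
    rcases lt_trichotomy c 0 with hc0 | hc0 | hc0
    · have hL3 : LbF B C F c (c + 1) = 0 := by
        rw [LbF, if_neg (by omega), if_neg (by omega), if_neg (by omega)]
      have hDm : DmF A B C F z c = A c - z • 1 - C c * F (c - 1) * B (c - 1) := by
        rw [DmF, if_neg (by omega), if_pos hc0]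
      have hL1 : LbF B C F c (c - 1) = C c * F (c - 1) := by
        rw [LbF, if_neg (by omega), if_pos ⟨rfl, by omega⟩]
      have hR1 : RbF B C F (c - 1) c = F (c - 1) * B (c - 1) := by
        rw [RbF, if_neg (by omega), if_pos ⟨by omega, by omega⟩]
      rw [hL1, hR1, hL3, hDm, zero_mul, zero_mul, add_zero]
      have key : C c * F (c - 1) * DmF A B C F z (c - 1) * (F (c - 1) * B (c - 1)) =
          C c * F (c - 1) * B (c - 1) := by
        by_cases hM : c = -(M : ℤ)
        · rw [show c - 1 = -(M : ℤ) - 1 by omega, hup0]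
          simp
        · rw [mul_assoc (C c) (F (c - 1)) (DmF A B C F z (c - 1)),
            hFD (c - 1) (Or.inl ⟨by omega, by omega⟩), mul_one, mul_assoc]
      rw [key]
      abel
    · subst hc0
      have hDm : DmF A B C F z 0 =
          A 0 - z • 1 - C 0 * F (-1) * B (-1) - B 0 * F 1 * C 1 := by
        rw [DmF, if_pos rfl]
      have hL1 : LbF B C F 0 (0 - 1) = C 0 * F (0 - 1) := by
        rw [LbF, if_neg (by omega), if_pos ⟨rfl, by omega⟩]
      have hR1 : RbF B C F (0 - 1) 0 = F (0 - 1) * B (0 - 1) := by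
        rw [RbF, if_neg (by omega), if_pos ⟨by omega, by omega⟩]
      have hL3 : LbF B C F 0 (0 + 1) = B 0 * F (0 + 1) := by
        rw [LbF, if_neg (by omega), if_neg (by omega), if_pos ⟨rfl, by omega⟩]
      have hR3 : RbF B C F (0 + 1) 0 = F (0 + 1) * C (0 + 1) := by
        rw [RbF, if_neg (by omega), if_neg (by omega), if_pos ⟨by omega, by omega⟩]
      rw [hL1, hR1, hL3, hR3, hDm]
      have key1 : C 0 * F (0 - 1) * DmF A B C F z (0 - 1) * (F (0 - 1) * B (0 - 1)) =
          C 0 * F (-1) * B (-1) := by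
        by_cases hM : (M : ℤ) = 0
        · rw [show (0 : ℤ) - 1 = -(M : ℤ) - 1 by omega, hup0,
            show (-1 : ℤ) = -(M : ℤ) - 1 by omega, hup0]
          simp
        · rw [mul_assoc (C 0) (F (0 - 1)) (DmF A B C F z (0 - 1)),
            hFD (0 - 1) (Or.inl ⟨by omega, by omega⟩), mul_one, mul_assoc,
            show (0 : ℤ) - 1 = -1 by norm_num]
      have key3 : B 0 * F (0 + 1) * DmF A B C F z (0 + 1) * (F (0 + 1) * C (0 + 1)) =
          B 0 * F 1 * C 1 := by
        by_cases hN : (N : ℤ) = 0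
        · rw [show (0 : ℤ) + 1 = (N : ℤ) + 1 by omega, hdown0,
            show (1 : ℤ) = (N : ℤ) + 1 by omega, hdown0]
          simp
        · rw [mul_assoc (B 0) (F (0 + 1)) (DmF A B C F z (0 + 1)),
            hFD (0 + 1) (Or.inr ⟨by omega, by omega⟩), mul_one, mul_assoc,
            show (0 : ℤ) + 1 = 1 by norm_num]
      rw [key1, key3]
      abel
    · have hL1 : LbF B C F c (c - 1) = 0 := by
        rw [LbF, if_neg (by omega), if_neg (by omega), if_neg (by omega)]
      have hDm : DmF A B C F z c = A c - z • 1 - B c * F (c + 1) * C (c + 1) := by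
        rw [DmF, if_neg (by omega), if_neg (by omega)]
      have hL3 : LbF B C F c (c + 1) = B c * F (c + 1) := by
        rw [LbF, if_neg (by omega), if_neg (by omega), if_pos ⟨rfl, by omega⟩]
      have hR3 : RbF B C F (c + 1) c = F (c + 1) * C (c + 1) := by
        rw [RbF, if_neg (by omega), if_neg (by omega), if_pos ⟨by omega, by omega⟩]
      rw [hL1, hL3, hR3, hDm, zero_mul, zero_mul, zero_add]
      have key : B c * F (c + 1) * DmF A B C F z (c + 1) * (F (c + 1) * C (c + 1)) =
          B c * F (c + 1) * C (c + 1) := by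
        by_cases hN : c = (N : ℤ)
        · rw [show c + 1 = (N : ℤ) + 1 by omega, hdown0]
          simp
        · rw [mul_assoc (B c) (F (c + 1)) (DmF A B C F z (c + 1)),
            hFD (c + 1) (Or.inr ⟨by omega, by omega⟩), mul_one, mul_assoc]
      rw [key]
      abel
  · by_cases hca1 : c = a + 1
    · subst hca1
      rw [HbF, if_neg (by omega), if_pos rfl]
      have hR1 : RbF B C F (a - 1) (a + 1) = 0 := by
        rw [RbF, if_neg (by omega), if_neg (by omega), if_neg (by omega)]
      rw [hR1, mul_zero, zero_add]
      rw [show LbF B C F a a = 1 from by rw [LbF, if_pos rfl], one_mul]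
      by_cases ha0 : a ≤ -1
      · have hR2 : RbF B C F a (a + 1) = F a * B a := by
          rw [RbF, if_neg (by omega), if_pos ⟨rfl, by omega⟩]
        have hL3 : LbF B C F a (a + 1) = 0 := by
          rw [LbF, if_neg (by omega), if_neg (by omega), if_neg (by omega)]
        rw [hR2, hL3, zero_mul, zero_mul, add_zero, ← mul_assoc,
          hDF a (Or.inl ⟨ha1, ha0⟩), one_mul]
      · have hR2 : RbF B C F a (a + 1) = 0 := by
          rw [RbF, if_neg (by omega), if_neg (by omega), if_neg (by omega)]
        have hL3 : LbF B C F a (a + 1) = B a * F (a + 1) := by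
          rw [LbF, if_neg (by omega), if_neg (by omega), if_pos ⟨rfl, by omega⟩]
        have hR3 : RbF B C F (a + 1) (a + 1) = 1 := by rw [RbF, if_pos rfl]
        rw [hR2, mul_zero, zero_add, hL3, hR3, mul_one,
          mul_assoc (B a) (F (a + 1)) (DmF A B C F z (a + 1)),
          hFD (a + 1) (Or.inr ⟨by omega, by omega⟩), mul_one]
    · by_cases hca2 : c = a - 1
      · subst hca2
        rw [HbF, if_neg (by omega), if_neg (by omega), if_pos rfl]
        have hR3 : RbF B C F (a + 1) (a - 1) = 0 := by
          rw [RbF, if_neg (by omega), if_neg (by omega), if_neg (by omega)]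
        rw [hR3, mul_zero, add_zero]
        rw [show LbF B C F a a = 1 from by rw [LbF, if_pos rfl], one_mul]
        by_cases ha0 : 1 ≤ a
        · have hL1 : LbF B C F a (a - 1) = 0 := by
            rw [LbF, if_neg (by omega), if_neg (by omega), if_neg (by omega)]
          have hR2 : RbF B C F a (a - 1) = F a * C a := by
            rw [RbF, if_neg (by omega), if_neg (by omega), if_pos ⟨rfl, by omega⟩]
          rw [hL1, zero_mul, zero_mul, zero_add, hR2, ← mul_assoc,
            hDF a (Or.inr ⟨ha0, ha2⟩), one_mul]
        · have hL1 : LbF B C F a (a - 1) = C a * F (a - 1) := by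
            rw [LbF, if_neg (by omega), if_pos ⟨rfl, by omega⟩]
          have hR1 : RbF B C F (a - 1) (a - 1) = 1 := by rw [RbF, if_pos rfl]
          have hR2 : RbF B C F a (a - 1) = 0 := by
            rw [RbF, if_neg (by omega), if_neg (by omega), if_neg (by omega)]
          rw [hL1, hR1, hR2, mul_zero, add_zero, mul_one,
            mul_assoc (C a) (F (a - 1)) (DmF A B C F z (a - 1)),
            hFD (a - 1) (Or.inl ⟨by omega, by omega⟩), mul_one]
      · rw [HbF, if_neg (by omega), if_neg (by omega), if_neg (by omega)]
        have hR2 : RbF B C F a c = 0 := by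
          rw [RbF, if_neg (by omega), if_neg (by omega), if_neg (by omega)]
        have h1 : LbF B C F a (a - 1) * DmF A B C F z (a - 1) * RbF B C F (a - 1) c = 0 := by
          by_cases ha0 : a ≤ 0
          · rw [show RbF B C F (a - 1) c = 0 from by
              rw [RbF, if_neg (by omega), if_neg (by omega), if_neg (by omega)], mul_zero]
          · rw [show LbF B C F a (a - 1) = 0 from by
              rw [LbF, if_neg (by omega), if_neg (by omega), if_neg (by omega)],
              zero_mul, zero_mul]
        have h3 : LbF B C F a (a + 1) * DmF A B C F z (a + 1) * RbF B C F (a + 1) c = 0 := by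
          by_cases ha0 : 0 ≤ a
          · rw [show RbF B C F (a + 1) c = 0 from by
              rw [RbF, if_neg (by omega), if_neg (by omega), if_neg (by omega)], mul_zero]
          · rw [show LbF B C F a (a + 1) = 0 from by
              rw [LbF, if_neg (by omega), if_neg (by omega), if_neg (by omega)],
              zero_mul, zero_mul]
        rw [h1, h3, hR2, mul_zero, zero_add, add_zero]

end BTZfin

/-- Lemma 2, finite version: if both matrix-continued-fraction recurrences
(upward and downward) are well defined at `z`, then with
`D₀(z) = A 0 - z•1 - C 0 * F (-1) * B (-1) - B 0 * F 1 * C 1` one has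
`det (ℍ - z•1) = det D₀(z) * ∏_{j=1}^M det ((F (-j))⁻¹) * ∏_{k=1}^N det ((F k)⁻¹)`;
in particular `z` is an eigenvalue of `ℍ` iff `det D₀(z) = 0`. -/
theorem blockTridZ_det_doublet_matrix_continued_fractions
    (d M N : ℕ) (hd : 1 ≤ d)
    (A B C : ℤ → Matrix (Fin d) (Fin d) ℂ) (z : ℂ)
    (F : ℤ → Matrix (Fin d) (Fin d) ℂ)
    (hup0 : F (-(M : ℤ) - 1) = 0)
    (hupinv : ∀ k : ℤ, -(M : ℤ) ≤ k → k ≤ -1 →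
      IsUnit (A k - z • (1 : Matrix (Fin d) (Fin d) ℂ) - C k * F (k - 1) * B (k - 1)))
    (hup : ∀ k : ℤ, -(M : ℤ) ≤ k → k ≤ -1 →
      F k = (A k - z • (1 : Matrix (Fin d) (Fin d) ℂ) - C k * F (k - 1) * B (k - 1))⁻¹)
    (hdown0 : F ((N : ℤ) + 1) = 0)
    (hdowninv : ∀ k : ℤ, 1 ≤ k → k ≤ (N : ℤ) →
      IsUnit (A k - z • (1 : Matrix (Fin d) (Fin d) ℂ) - B k * F (k + 1) * C (k + 1)))
    (hdown : ∀ k : ℤ, 1 ≤ k → k ≤ (N : ℤ) →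
      F k = (A k - z • (1 : Matrix (Fin d) (Fin d) ℂ) - B k * F (k + 1) * C (k + 1))⁻¹) :
    (blockTridZ M N d A B C -
        z • (1 : Matrix (Fin (M + N + 1) × Fin d) (Fin (M + N + 1) × Fin d) ℂ)).det =
      (A 0 - z • (1 : Matrix (Fin d) (Fin d) ℂ) - C 0 * F (-1) * B (-1) -
          B 0 * F 1 * C 1).det *
        (∏ j ∈ Finset.Icc 1 M, ((F (-(j : ℤ)))⁻¹).det) *
        (∏ k ∈ Finset.Icc 1 N, ((F ((k : ℕ) : ℤ))⁻¹).det) ∧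
    ((blockTridZ M N d A B C -
        z • (1 : Matrix (Fin (M + N + 1) × Fin d) (Fin (M + N + 1) × Fin d) ℂ)).det = 0 ↔
      (A 0 - z • (1 : Matrix (Fin d) (Fin d) ℂ) - C 0 * F (-1) * B (-1) -
          B 0 * F 1 * C 1).det = 0) := by
  classical
  set Dm := BTZfin.DmF A B C F z with hDmdef
  -- basic facts about the diagonal blocks
  have hS : ∀ u : ℤ, (-(M : ℤ) ≤ u ∧ u ≤ -1) ∨ (1 ≤ u ∧ u ≤ (N : ℤ)) →
      IsUnit (Dm u).det ∧ F u * Dm u = 1 ∧ Dm u * F u = 1 ∧ (F u)⁻¹ = Dm u := by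
    intro u hu
    rcases hu with ⟨h1, h2⟩ | ⟨h1, h2⟩
    · have hD : Dm u = A u - z • 1 - C u * F (u - 1) * B (u - 1) := by
        rw [hDmdef, BTZfin.DmF, if_neg (by omega), if_pos (by omega)]
      have hdet : IsUnit (A u - z • 1 - C u * F (u - 1) * B (u - 1)).det :=
        (Matrix.isUnit_iff_isUnit_det _).mp (hupinv u h1 h2)
      refine ⟨hD ▸ hdet, ?_, ?_, ?_⟩
      · rw [hD, hup u h1 h2]; exact Matrix.nonsing_inv_mul _ hdet
      · rw [hD, hup u h1 h2]; exact Matrix.mul_nonsing_inv _ hdet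
      · rw [hD, hup u h1 h2]; exact Matrix.nonsing_inv_nonsing_inv _ hdet
    · have hD : Dm u = A u - z • 1 - B u * F (u + 1) * C (u + 1) := by
        rw [hDmdef, BTZfin.DmF, if_neg (by omega), if_neg (by omega)]
      have hdet : IsUnit (A u - z • 1 - B u * F (u + 1) * C (u + 1)).det :=
        (Matrix.isUnit_iff_isUnit_det _).mp (hdowninv u h1 h2)
      refine ⟨hD ▸ hdet, ?_, ?_, ?_⟩
      · rw [hD, hdown u h1 h2]; exact Matrix.nonsing_inv_mul _ hdet
      · rw [hD, hdown u h1 h2]; exact Matrix.mul_nonsing_inv _ hdet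
      · rw [hD, hdown u h1 h2]; exact Matrix.nonsing_inv_nonsing_inv _ hdet
  -- the factorization
  have hfact : blockTridZ M N d A B C - z • 1 =
      BTZfin.asmBlk d M N (BTZfin.LbF B C F) *
        BTZfin.asmBlk d M N (fun a c => if c = a then Dm a else 0) *
        BTZfin.asmBlk d M N (BTZfin.RbF B C F) := by
    rw [BTZfin.H_eq A B C z]
    exact (BTZfin.middle A B C F z hup0 hdown0
      (fun u hu => (hS u hu).2.1) (fun u hu => (hS u hu).2.2.1)).symm
  -- determinants of the triangular factors
  have hdetL : (BTZfin.asmBlk d M N (BTZfin.LbF B C F)).det = 1 := by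
    refine BTZfin.asmBlk_det_one (fun a => (a.natAbs : ℤ)) _ ?_ ?_ ?_
    · intro a c h
      rw [BTZfin.LbF, if_neg (by omega), if_neg (by omega), if_neg (by omega)]
    · intro a c hne h
      rw [BTZfin.LbF, if_neg (by omega), if_neg (by omega), if_neg (by omega)]
    · intro a
      rw [BTZfin.LbF, if_pos rfl]
  have hdetR : (BTZfin.asmBlk d M N (BTZfin.RbF B C F)).det = 1 := by
    refine BTZfin.asmBlk_det_one (fun a => -(a.natAbs : ℤ)) _ ?_ ?_ ?_
    · intro a c h
      rw [BTZfin.RbF, if_neg (by omega), if_neg (by omega), if_neg (by omega)]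
    · intro a c hne h
      rw [BTZfin.RbF, if_neg (by omega), if_neg (by omega), if_neg (by omega)]
    · intro a
      rw [BTZfin.RbF, if_pos rfl]
  -- total determinant
  have hdet : (blockTridZ M N d A B C - z • 1).det =
      ∏ u ∈ Finset.Icc (-(M : ℤ)) (N : ℤ), (Dm u).det := by
    rw [hfact, Matrix.det_mul, Matrix.det_mul, hdetL, hdetR,
      BTZfin.asmBlk_det_diag hd Dm, one_mul, mul_one,
      BTZfin.prod_fin_shift (M := M) (N := N) (fun u => (Dm u).det)]
  -- split the product
  have hsplit : Finset.Icc (-(M : ℤ)) (N : ℤ) =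
      insert 0 (Finset.Icc (-(M : ℤ)) (-1) ∪ Finset.Icc 1 (N : ℤ)) := by
    ext u
    simp only [Finset.mem_Icc, Finset.mem_insert, Finset.mem_union]
    omega
  have h0notin : (0 : ℤ) ∉ Finset.Icc (-(M : ℤ)) (-1) ∪ Finset.Icc 1 (N : ℤ) := by
    simp [Finset.mem_Icc]
  have hdisj : Disjoint (Finset.Icc (-(M : ℤ)) (-1)) (Finset.Icc 1 (N : ℤ)) := by
    rw [Finset.disjoint_left]
    intro u h1 h2
    rw [Finset.mem_Icc] at h1 h2
    omega
  have hDm0 : Dm 0 = A 0 - z • 1 - C 0 * F (-1) * B (-1) - B 0 * F 1 * C 1 := by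
    rw [hDmdef, BTZfin.DmF, if_pos rfl]
  have hneg : ∏ j ∈ Finset.Icc 1 M, ((F (-(j : ℤ)))⁻¹).det =
      ∏ u ∈ Finset.Icc (-(M : ℤ)) (-1), (Dm u).det := by
    refine Finset.prod_nbij' (i := fun j => -(j : ℤ)) (j := fun u => (-u).toNat)
      ?_ ?_ ?_ ?_ ?_
    · intro j hj
      rw [Finset.mem_Icc] at hj ⊢
      omega
    · intro u hu
      rw [Finset.mem_Icc] at hu ⊢
      omega
    · intro j hj
      rw [Finset.mem_Icc] at hj
      omega
    · intro u hu
      rw [Finset.mem_Icc] at hu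
      omega
    · intro j hj
      rw [Finset.mem_Icc] at hj
      rw [(hS (-(j : ℤ)) (Or.inl ⟨by omega, by omega⟩)).2.2.2]
  have hpos : ∏ k ∈ Finset.Icc 1 N, ((F ((k : ℕ) : ℤ))⁻¹).det =
      ∏ u ∈ Finset.Icc (1 : ℤ) (N : ℤ), (Dm u).det := by
    refine Finset.prod_nbij' (i := fun k => (k : ℤ)) (j := fun u => u.toNat)
      ?_ ?_ ?_ ?_ ?_
    · intro k hk
      rw [Finset.mem_Icc] at hk ⊢
      omega
    · intro u hu
      rw [Finset.mem_Icc] at hu ⊢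
      omega
    · intro k hk
      rw [Finset.mem_Icc] at hk
      omega
    · intro u hu
      rw [Finset.mem_Icc] at hu
      omega
    · intro k hk
      rw [Finset.mem_Icc] at hk
      rw [(hS ((k : ℕ) : ℤ) (Or.inr ⟨by omega, by omega⟩)).2.2.2]
  have hmain : (blockTridZ M N d A B C - z • 1).det =
      (A 0 - z • 1 - C 0 * F (-1) * B (-1) - B 0 * F 1 * C 1).det *
        (∏ j ∈ Finset.Icc 1 M, ((F (-(j : ℤ)))⁻¹).det) *
        (∏ k ∈ Finset.Icc 1 N, ((F ((k : ℕ) : ℤ))⁻¹).det) := by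
    rw [hdet, hsplit, Finset.prod_insert h0notin, Finset.prod_union hdisj,
      hDm0, hneg, hpos]
    ring
  refine ⟨hmain, ?_⟩
  have hP1 : (∏ j ∈ Finset.Icc 1 M, ((F (-(j : ℤ)))⁻¹).det) ≠ 0 := by
    refine Finset.prod_ne_zero_iff.mpr fun j hj => ?_
    rw [Finset.mem_Icc] at hj
    have h := hS (-(j : ℤ)) (Or.inl ⟨by omega, by omega⟩)
    rw [h.2.2.2]
    exact h.1.ne_zero
  have hP2 : (∏ k ∈ Finset.Icc 1 N, ((F ((k : ℕ) : ℤ))⁻¹).det) ≠ 0 := by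
    refine Finset.prod_ne_zero_iff.mpr fun k hk => ?_
    rw [Finset.mem_Icc] at hk
    have h := hS ((k : ℕ) : ℤ) (Or.inr ⟨by omega, by omega⟩)
    rw [h.2.2.2]
    exact h.1.ne_zero
  rw [hmain]
  constructor
  · intro h
    rcases mul_eq_zero.mp h with h' | h'
    · rcases mul_eq_zero.mp h' with h'' | h''
      · exact h''
      · exact absurd h'' hP1
    · exact absurd h' hP2
  · intro h
    rw [h, zero_mul, zero_mul]
end

section
/- Let d ≥ 1, M, N ≥ 0, and let ℍ be the (M+N+1)d×(M+N+1)d complex block-tridiagonal matrix with d×d blocks indexed by k ∈ {−M,…,N}: diagonal blocks A_k, superdiagonal blocks B_k and subdiagonal blocks C_{k+1}. Fix z ∈ ℂ, suppose both matrix-continued-fraction recurrences F_{−M−1}(z)=0, F_{−j}(z) = (A_{−j} − zI_d − C_{−j} F_{−j−1}(z) B_{−j−1})^{-1} (j = M,…,1) and F_{N+1}(z)=0, F_k(z) = (A_k − zI_d − B_k F_{k+1}(z) C_{k+1})^{-1} (k = N,…,1) are well defined, and suppose D_0(z) = A_0 − zI_d − C_0 F_{−1}(z) B_{−1} − B_0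 F_1(z) C_1 is invertible. Then ℍ − zI is invertible and the central d×d block of its inverse (the block in block position (0,0)) equals D_0(z)^{-1}, i.e. it equals the doublet-of-matrix-continued-fractions Green's function F_0(z) = (A_0 − zI_d − C_0 F_{−1}(z) B_{−1} − B_0 F_1(z) C_1)^{-1}. -/
open Matrix BigOperators

namespace BTZ16

/-- integer block index of 0-based block row `r`. -/
def ki (M N : ℕ) (r : Fin (M + N + 1)) : ℤ := ((r : ℕ) : ℤ) - (M : ℤ)

lemma nilpotent_of_weight {n : ℕ} {S : Type*} [Ring S]
    (Nm : Matrix (Fin n) (Fin n) S) (w : Fin n → ℕ) (b : ℕ)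
    (hb : ∀ i, w i < b) (hN : ∀ p q, w q ≤ w p → Nm p q = 0) :
    Nm ^ b = 0 := by
  have key : ∀ m (p q : Fin n), w q < w p + m → (Nm ^ m) p q = 0 := by
    intro m
    induction m with
    | zero =>
      intro p q h
      rw [pow_zero, Matrix.one_apply, if_neg]
      rintro rfl; omega
    | succ m ih =>
      intro p q h
      rw [pow_succ, Matrix.mul_apply]
      refine Finset.sum_eq_zero fun r _ => ?_
      by_cases hr : w q ≤ w r
      · rw [hN r q hr, mul_zero]
      · rw [ih p r (by omega), zero_mul]
  ext p q
  rw [key b p q (by have := hb q; omega)]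
  simp

lemma nilpotent_of_weight' {n : ℕ} {S : Type*} [Ring S]
    (Nm : Matrix (Fin n) (Fin n) S) (w : Fin n → ℕ) (b : ℕ)
    (hb : ∀ i, w i < b) (hN : ∀ p q, w p ≤ w q → Nm p q = 0) :
    Nm ^ b = 0 := by
  have key : ∀ m (p q : Fin n), w p < w q + m → (Nm ^ m) p q = 0 := by
    intro m
    induction m with
    | zero =>
      intro p q h
      rw [pow_zero, Matrix.one_apply, if_neg]
      rintro rfl; omega
    | succ m ih =>
      intro p q h
      rw [pow_succ', Matrix.mul_apply]
      refine Finset.sum_eq_zero fun r _ => ?_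
      by_cases hr : w p ≤ w r
      · rw [hN p r hr, zero_mul]
      · rw [ih r q (by omega), mul_zero]
  ext p q
  rw [key b p q (by have := hb p; omega)]
  simp

variable {d : ℕ}

/-- embedding of block matrices into matrices on the product index. -/
def emb {n : ℕ} (Mb : Matrix (Fin n) (Fin n) (Matrix (Fin d) (Fin d) ℂ)) :
    Matrix (Fin n × Fin d) (Fin n × Fin d) ℂ :=
  Matrix.of fun p q => Mb p.1 q.1 p.2 q.2

lemma emb_mul {n : ℕ} (Mb Nb : Matrix (Fin n) (Fin n) (Matrix (Fin d) (Fin d) ℂ)) :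
    emb (Mb * Nb) = emb Mb * emb Nb := by
  ext ⟨r, i⟩ ⟨s, j⟩
  simp only [emb, Matrix.of_apply, Matrix.mul_apply, Matrix.sum_apply,
    Fintype.sum_prod_type]

lemma emb_one {n : ℕ} : emb (1 : Matrix (Fin n) (Fin n) (Matrix (Fin d) (Fin d) ℂ)) = 1 := by
  ext ⟨r, i⟩ ⟨s, j⟩
  simp only [emb, Matrix.of_apply, Matrix.one_apply, Prod.mk.injEq]
  split_ifs with h1 h2 h3 <;> simp_all [Matrix.one_apply]

/-- the diagonal pivot blocks of the two-sided block elimination. -/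
noncomputable def Dk (A B C F : ℤ → Matrix (Fin d) (Fin d) ℂ) (z : ℂ) (k : ℤ) :
    Matrix (Fin d) (Fin d) ℂ :=
  A k - z • 1 - (if k ≤ 0 then C k * F (k - 1) * B (k - 1) else 0)
    - (if 0 ≤ k then B k * F (k + 1) * C (k + 1) else 0)

variable (M N : ℕ) (A B C F : ℤ → Matrix (Fin d) (Fin d) ℂ) (z : ℂ)

noncomputable def Tb : Matrix (Fin (M + N + 1)) (Fin (M + N + 1)) (Matrix (Fin d) (Fin d) ℂ) :=
  Matrix.of fun r s : Fin (M + N + 1) =>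
    if (r : ℕ) = (s : ℕ) then A (ki M N r) - z • 1
    else if (s : ℕ) = (r : ℕ) + 1 then B (ki M N r)
    else if (r : ℕ) = (s : ℕ) + 1 then C (ki M N r)
    else 0

noncomputable def NX1 : Matrix (Fin (M + N + 1)) (Fin (M + N + 1)) (Matrix (Fin d) (Fin d) ℂ) :=
  Matrix.of fun r s : Fin (M + N + 1) =>
    if (r : ℕ) = (s : ℕ) + 1 ∧ (r : ℕ) ≤ M then C (ki M N r) * F (ki M N r - 1) else 0

noncomputable def NX2 : Matrix (Fin (M + N + 1)) (Fin (M + N + 1)) (Matrix (Fin d) (Fin d) ℂ) :=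
  Matrix.of fun r s : Fin (M + N + 1) =>
    if (s : ℕ) = (r : ℕ) + 1 ∧ M ≤ (r : ℕ) then B (ki M N r) * F (ki M N r + 1) else 0

noncomputable def NY1 : Matrix (Fin (M + N + 1)) (Fin (M + N + 1)) (Matrix (Fin d) (Fin d) ℂ) :=
  Matrix.of fun r s : Fin (M + N + 1) =>
    if (s : ℕ) = (r : ℕ) + 1 ∧ (s : ℕ) ≤ M then F (ki M N r) * B (ki M N r) else 0

noncomputable def NY2 : Matrix (Fin (M + N + 1)) (Fin (M + N + 1)) (Matrix (Fin d) (Fin d) ℂ) :=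
  Matrix.of fun r s : Fin (M + N + 1) =>
    if (r : ℕ) = (s : ℕ) + 1 ∧ M ≤ (s : ℕ) then F (ki M N r) * C (ki M N r) else 0

noncomputable def Db : Matrix (Fin (M + N + 1)) (Fin (M + N + 1)) (Matrix (Fin d) (Fin d) ℂ) :=
  Matrix.diagonal fun r => Dk A B C F z (ki M N r)

section products

variable (hF1 : ∀ k : ℤ, -(M : ℤ) ≤ k → k ≤ -1 →
    Dk A B C F z k * F k = 1 ∧ F k * Dk A B C F z k = 1)
  (hF2 : ∀ k : ℤ, 1 ≤ k → k ≤ (N : ℤ) →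
    Dk A B C F z k * F k = 1 ∧ F k * Dk A B C F z k = 1)

include hF1 in
lemma DbNY1 : Db M N A B C F z * NY1 M N B F =
    Matrix.of fun r s : Fin (M + N + 1) =>
      if (s : ℕ) = (r : ℕ) + 1 ∧ (s : ℕ) ≤ M then B (ki M N r) else 0 := by
  ext r s
  rw [Db, Matrix.diagonal_mul]
  simp only [NY1, Matrix.of_apply]
  split_ifs with h
  · rw [← mul_assoc, (hF1 (ki M N r) (by simp only [ki]; omega) (by simp only [ki]; omega)).1,
      one_mul]
  · rw [mul_zero]

include hF2 in
lemma DbNY2 : Db M N A B C F z * NY2 M N C F =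
    Matrix.of fun r s : Fin (M + N + 1) =>
      if (r : ℕ) = (s : ℕ) + 1 ∧ M ≤ (s : ℕ) then C (ki M N r) else 0 := by
  ext r s
  rw [Db, Matrix.diagonal_mul]
  simp only [NY2, Matrix.of_apply]
  split_ifs with h
  · rw [← mul_assoc, (hF2 (ki M N r) (by simp only [ki]; omega)
      (by simp only [ki]; have := r.isLt; omega)).1, one_mul]
  · rw [mul_zero]

include hF1 in
lemma NX1Db : NX1 M N C F * Db M N A B C F z =
    Matrix.of fun r s : Fin (M + N + 1) =>
      if (r : ℕ) = (s : ℕ) + 1 ∧ (r : ℕ) ≤ M then C (ki M N r) else 0 := by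
  ext r s
  rw [Db, Matrix.mul_diagonal]
  simp only [NX1, Matrix.of_apply]
  split_ifs with h
  · have hks : ki M N s = ki M N r - 1 := by simp only [ki]; omega
    rw [hks, mul_assoc,
      (hF1 (ki M N r - 1) (by simp only [ki]; omega) (by simp only [ki]; omega)).2, mul_one]
  · rw [zero_mul]

include hF2 in
lemma NX2Db : NX2 M N B F * Db M N A B C F z =
    Matrix.of fun r s : Fin (M + N + 1) =>
      if (s : ℕ) = (r : ℕ) + 1 ∧ M ≤ (r : ℕ) then B (ki M N r) else 0 := by
  ext r s
  rw [Db, Matrix.mul_diagonal]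
  simp only [NX2, Matrix.of_apply]
  split_ifs with h
  · have hks : ki M N s = ki M N r + 1 := by simp only [ki]; omega
    rw [hks, mul_assoc,
      (hF2 (ki M N r + 1) (by simp only [ki]; omega)
        (by simp only [ki]; have := s.isLt; omega)).2, mul_one]
  · rw [zero_mul]

include hF1 in
lemma NX1DbNY1 : NX1 M N C F * (Db M N A B C F z * NY1 M N B F) =
    Matrix.of fun r s : Fin (M + N + 1) =>
      if (r : ℕ) = (s : ℕ) ∧ 1 ≤ (r : ℕ) ∧ (r : ℕ) ≤ M then
        C (ki M N r) * F (ki M N r - 1) * B (ki M N r - 1) else 0 := by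
  rw [DbNY1 M N A B C F z hF1]
  refine Matrix.ext fun r s => ?_
  rw [Matrix.mul_apply]
  simp only [NX1, Matrix.of_apply]
  by_cases h : (r : ℕ) = (s : ℕ) ∧ 1 ≤ (r : ℕ) ∧ (r : ℕ) ≤ M
  · have hlt : (r : ℕ) - 1 < M + N + 1 := by omega
    rw [Finset.sum_eq_single (⟨(r : ℕ) - 1, hlt⟩ : Fin (M + N + 1))]
    · have hk : ki M N (⟨(r : ℕ) - 1, hlt⟩ : Fin (M + N + 1)) = ki M N r - 1 := by
        simp only [ki]; omega
      rw [if_pos ⟨by simp; omega, h.2.2⟩, if_pos ⟨by simp; omega, by omega⟩, if_pos h, hk]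
    · intro b _ hb
      rw [if_neg, zero_mul]
      rintro ⟨h1, -⟩
      exact hb (Fin.ext (by simp; omega))
    · intro hh; exact absurd (Finset.mem_univ _) hh
  · rw [if_neg h]
    refine Finset.sum_eq_zero fun t _ => ?_
    by_cases h1 : (r : ℕ) = (t : ℕ) + 1 ∧ (r : ℕ) ≤ M
    · rw [if_pos h1, if_neg, mul_zero]
      rintro ⟨h2, h3⟩
      exact h ⟨by omega, by omega, h1.2⟩
    · rw [if_neg h1, zero_mul]

include hF2 in
lemma NX2DbNY2 : NX2 M N B F * (Db M N A B C F z * NY2 M N C F) =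
    Matrix.of fun r s : Fin (M + N + 1) =>
      if (r : ℕ) = (s : ℕ) ∧ M ≤ (r : ℕ) ∧ (r : ℕ) + 1 ≤ M + N then
        B (ki M N r) * F (ki M N r + 1) * C (ki M N r + 1) else 0 := by
  rw [DbNY2 M N A B C F z hF2]
  refine Matrix.ext fun r s => ?_
  rw [Matrix.mul_apply]
  simp only [NX2, Matrix.of_apply]
  by_cases h : (r : ℕ) = (s : ℕ) ∧ M ≤ (r : ℕ) ∧ (r : ℕ) + 1 ≤ M + N
  · have hlt : (r : ℕ) + 1 < M + N + 1 := by omega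
    rw [Finset.sum_eq_single (⟨(r : ℕ) + 1, hlt⟩ : Fin (M + N + 1))]
    · have hk : ki M N (⟨(r : ℕ) + 1, hlt⟩ : Fin (M + N + 1)) = ki M N r + 1 := by
        simp only [ki]; omega
      rw [if_pos ⟨by simp, h.2.1⟩, if_pos ⟨by simp; omega, by omega⟩, if_pos h, hk]
    · intro b _ hb
      rw [if_neg, zero_mul]
      rintro ⟨h1, -⟩
      exact hb (Fin.ext (by simp; omega))
    · intro hh; exact absurd (Finset.mem_univ _) hh
  · rw [if_neg h]
    refine Finset.sum_eq_zero fun t _ => ?_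
    by_cases h1 : (t : ℕ) = (r : ℕ) + 1 ∧ M ≤ (r : ℕ)
    · rw [if_pos h1, if_neg, mul_zero]
      rintro ⟨h2, h3⟩
      have := t.isLt
      exact h ⟨by omega, h1.2, by omega⟩
    · rw [if_neg h1, zero_mul]

include hF2 in
lemma NX1DbNY2 : NX1 M N C F * (Db M N A B C F z * NY2 M N C F) = 0 := by
  rw [DbNY2 M N A B C F z hF2]
  refine Matrix.ext fun r s => ?_
  rw [Matrix.mul_apply]
  simp only [NX1, Matrix.of_apply, Matrix.zero_apply]
  refine Finset.sum_eq_zero fun t _ => ?_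
  by_cases h1 : (r : ℕ) = (t : ℕ) + 1 ∧ (r : ℕ) ≤ M
  · rw [if_pos h1, if_neg, mul_zero]
    rintro ⟨h2, h3⟩; omega
  · rw [if_neg h1, zero_mul]

include hF1 in
lemma NX2DbNY1 : NX2 M N B F * (Db M N A B C F z * NY1 M N B F) = 0 := by
  rw [DbNY1 M N A B C F z hF1]
  refine Matrix.ext fun r s => ?_
  rw [Matrix.mul_apply]
  simp only [NX2, Matrix.of_apply, Matrix.zero_apply]
  refine Finset.sum_eq_zero fun t _ => ?_
  by_cases h1 : (t : ℕ) = (r : ℕ) + 1 ∧ M ≤ (r : ℕ)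
  · rw [if_pos h1, if_neg, mul_zero]
    rintro ⟨h2, h3⟩; omega
  · rw [if_neg h1, zero_mul]

include hF1 hF2 in
lemma factorization (hup0 : F (-(M : ℤ) - 1) = 0) (hdown0 : F ((N : ℤ) + 1) = 0) :
    Tb M N A B C z = (1 + (NX1 M N C F + NX2 M N B F)) * Db M N A B C F z *
      (1 + (NY1 M N B F + NY2 M N C F)) := by
  have expand : (1 + (NX1 M N C F + NX2 M N B F)) * Db M N A B C F z *
      (1 + (NY1 M N B F + NY2 M N C F)) =
      Db M N A B C F z + (NX1 M N C F * Db M N A B C F z + NX2 M N B F * Db M N A B C F z) +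
        ((Db M N A B C F z * NY1 M N B F + Db M N A B C F z * NY2 M N C F) +
          ((NX1 M N C F * (Db M N A B C F z * NY1 M N B F) +
              NX1 M N C F * (Db M N A B C F z * NY2 M N C F)) +
            (NX2 M N B F * (Db M N A B C F z * NY1 M N B F) +
              NX2 M N B F * (Db M N A B C F z * NY2 M N C F)))) := by
    noncomm_ring
  rw [expand, NX1DbNY1 M N A B C F z hF1, NX1DbNY2 M N A B C F z hF2,
    NX2DbNY1 M N A B C F z hF1, NX2DbNY2 M N A B C F z hF2,
    NX1Db M N A B C F z hF1, NX2Db M N A B C F z hF2,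
    DbNY1 M N A B C F z hF1, DbNY2 M N A B C F z hF2]
  refine Matrix.ext fun r s => ?_
  simp only [Tb, Db, Matrix.add_apply, Matrix.of_apply, Matrix.diagonal_apply,
    Matrix.zero_apply, add_zero, zero_add, Fin.ext_iff]
  by_cases h0 : (r : ℕ) = (s : ℕ)
  · rw [if_pos h0, if_pos h0, if_neg (fun hh : (r:ℕ) = (s:ℕ)+1 ∧ (r:ℕ) ≤ M => by omega),
      if_neg (fun hh : (s:ℕ) = (r:ℕ)+1 ∧ M ≤ (r:ℕ) => by omega),
      if_neg (fun hh : (s:ℕ) = (r:ℕ)+1 ∧ (s:ℕ) ≤ M => by omega),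
      if_neg (fun hh : (r:ℕ) = (s:ℕ)+1 ∧ M ≤ (s:ℕ) => by omega)]
    simp only [Dk]
    have e1 : (if ki M N r ≤ 0 then C (ki M N r) * F (ki M N r - 1) * B (ki M N r - 1) else 0)
        = (if (r : ℕ) = (s : ℕ) ∧ 1 ≤ (r : ℕ) ∧ (r : ℕ) ≤ M then
            C (ki M N r) * F (ki M N r - 1) * B (ki M N r - 1) else 0) := by
      by_cases hc : 1 ≤ (r : ℕ) ∧ (r : ℕ) ≤ M
      · rw [if_pos (by simp only [ki]; omega), if_pos ⟨h0, hc⟩]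
      · by_cases h2c : (r : ℕ) ≤ M
        · have hz : ki M N r - 1 = -(M : ℤ) - 1 := by simp only [ki]; omega
          rw [hz, hup0, mul_zero, zero_mul, ite_self, if_neg (fun hh => hc hh.2)]
        · rw [if_neg (by simp only [ki]; omega), if_neg (fun hh => hc hh.2)]
    have e2 : (if 0 ≤ ki M N r then B (ki M N r) * F (ki M N r + 1) * C (ki M N r + 1) else 0)
        = (if (r : ℕ) = (s : ℕ) ∧ M ≤ (r : ℕ) ∧ (r : ℕ) + 1 ≤ M + N then
            B (ki M N r) * F (ki M N r + 1) * C (ki M N r + 1) else 0) := by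
      by_cases hc : M ≤ (r : ℕ) ∧ (r : ℕ) + 1 ≤ M + N
      · rw [if_pos (by simp only [ki]; omega), if_pos ⟨h0, hc⟩]
      · by_cases h2c : M ≤ (r : ℕ)
        · have hz : ki M N r + 1 = (N : ℤ) + 1 := by
            have := r.isLt; simp only [ki]; omega
          rw [hz, hdown0, mul_zero, zero_mul, ite_self, if_neg (fun hh => hc hh.2)]
        · rw [if_neg (by simp only [ki]; omega), if_neg (fun hh => hc hh.2)]
    rw [e1, e2]
    abel
  · by_cases hsup : (s : ℕ) = (r : ℕ) + 1
    · rw [if_neg h0, if_pos hsup, if_neg h0,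
        if_neg (fun hh : (r:ℕ) = (s:ℕ)+1 ∧ (r:ℕ) ≤ M => by omega),
        if_neg (fun hh : (r:ℕ) = (s:ℕ)+1 ∧ M ≤ (s:ℕ) => by omega),
        if_neg (fun hh : (r:ℕ) = (s:ℕ) ∧ 1 ≤ (r:ℕ) ∧ (r:ℕ) ≤ M => h0 hh.1),
        if_neg (fun hh : (r:ℕ) = (s:ℕ) ∧ M ≤ (r:ℕ) ∧ (r:ℕ) + 1 ≤ M + N => h0 hh.1)]
      by_cases hm : M ≤ (r : ℕ)
      · rw [if_pos (show (s:ℕ) = (r:ℕ)+1 ∧ M ≤ (r:ℕ) from ⟨hsup, hm⟩),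
          if_neg (fun hh : (s:ℕ) = (r:ℕ)+1 ∧ (s:ℕ) ≤ M => by omega)]
        abel
      · rw [if_neg (fun hh : (s:ℕ) = (r:ℕ)+1 ∧ M ≤ (r:ℕ) => hm hh.2),
          if_pos (show (s:ℕ) = (r:ℕ)+1 ∧ (s:ℕ) ≤ M from ⟨hsup, by omega⟩)]
        abel
    · by_cases hsub : (r : ℕ) = (s : ℕ) + 1
      · rw [if_neg h0, if_neg hsup, if_pos hsub, if_neg h0,
          if_neg (fun hh : (s:ℕ) = (r:ℕ)+1 ∧ M ≤ (r:ℕ) => by omega),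
          if_neg (fun hh : (s:ℕ) = (r:ℕ)+1 ∧ (s:ℕ) ≤ M => by omega),
          if_neg (fun hh : (r:ℕ) = (s:ℕ) ∧ 1 ≤ (r:ℕ) ∧ (r:ℕ) ≤ M => h0 hh.1),
          if_neg (fun hh : (r:ℕ) = (s:ℕ) ∧ M ≤ (r:ℕ) ∧ (r:ℕ) + 1 ≤ M + N => h0 hh.1)]
        by_cases hm : M ≤ (s : ℕ)
        · rw [if_neg (fun hh : (r:ℕ) = (s:ℕ)+1 ∧ (r:ℕ) ≤ M => by omega),
            if_pos (show (r:ℕ) = (s:ℕ)+1 ∧ M ≤ (s:ℕ) from ⟨hsub, hm⟩)]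
          abel
        · rw [if_neg (fun hh : (r:ℕ) = (s:ℕ)+1 ∧ M ≤ (s:ℕ) => hm hh.2),
            if_pos (show (r:ℕ) = (s:ℕ)+1 ∧ (r:ℕ) ≤ M from ⟨hsub, by omega⟩)]
          abel
      · rw [if_neg h0, if_neg hsup, if_neg hsub, if_neg h0,
          if_neg (fun hh : (r:ℕ) = (s:ℕ)+1 ∧ (r:ℕ) ≤ M => hsub hh.1),
          if_neg (fun hh : (s:ℕ) = (r:ℕ)+1 ∧ M ≤ (r:ℕ) => hsup hh.1),
          if_neg (fun hh : (s:ℕ) = (r:ℕ)+1 ∧ (s:ℕ) ≤ M => hsup hh.1),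
          if_neg (fun hh : (r:ℕ) = (s:ℕ)+1 ∧ M ≤ (s:ℕ) => hsub hh.1),
          if_neg (fun hh : (r:ℕ) = (s:ℕ) ∧ 1 ≤ (r:ℕ) ∧ (r:ℕ) ≤ M => h0 hh.1),
          if_neg (fun hh : (r:ℕ) = (s:ℕ) ∧ M ≤ (r:ℕ) ∧ (r:ℕ) + 1 ≤ M + N => h0 hh.1)]
        abel

end products

end BTZ16

open BTZ16

/-- if both matrix-continued-fraction recurrences are well defined at `z`
and `D₀(z) = A 0 - z•1 - C 0 * F (-1) * B (-1) - B 0 * F 1 * C 1` is invertible, then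
`ℍ - z•1` is invertible and the central `d × d` block (block position `(0,0)`, i.e.
0-based block index `M`) of its inverse equals the doublet-of-matrix-continued-fractions
Green's function `F₀(z) = D₀(z)⁻¹`. -/
theorem blockTridZ_resolvent_central_block
    (d M N : ℕ) (hd : 1 ≤ d)
    (A B C : ℤ → Matrix (Fin d) (Fin d) ℂ) (z : ℂ)
    (F : ℤ → Matrix (Fin d) (Fin d) ℂ)
    (hup0 : F (-(M : ℤ) - 1) = 0)
    (hupinv : ∀ k : ℤ, -(M : ℤ) ≤ k → k ≤ -1 →
      IsUnit (A k - z • (1 : Matrix (Fin d) (Fin d) ℂ) - C k * F (k - 1) * B (k - 1)))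
    (hup : ∀ k : ℤ, -(M : ℤ) ≤ k → k ≤ -1 →
      F k = (A k - z • (1 : Matrix (Fin d) (Fin d) ℂ) - C k * F (k - 1) * B (k - 1))⁻¹)
    (hdown0 : F ((N : ℤ) + 1) = 0)
    (hdowninv : ∀ k : ℤ, 1 ≤ k → k ≤ (N : ℤ) →
      IsUnit (A k - z • (1 : Matrix (Fin d) (Fin d) ℂ) - B k * F (k + 1) * C (k + 1)))
    (hdown : ∀ k : ℤ, 1 ≤ k → k ≤ (N : ℤ) →
      F k = (A k - z • (1 : Matrix (Fin d) (Fin d) ℂ) - B k * F (k + 1) * C (k + 1))⁻¹)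
    (hD0 : IsUnit (A 0 - z • (1 : Matrix (Fin d) (Fin d) ℂ) - C 0 * F (-1) * B (-1) -
      B 0 * F 1 * C 1)) :
    IsUnit (blockTridZ M N d A B C -
        z • (1 : Matrix (Fin (M + N + 1) × Fin d) (Fin (M + N + 1) × Fin d) ℂ)) ∧
      ∀ i j : Fin d,
        (blockTridZ M N d A B C -
            z • (1 : Matrix (Fin (M + N + 1) × Fin d) (Fin (M + N + 1) × Fin d) ℂ))⁻¹
            ((⟨M, by omega⟩ : Fin (M + N + 1)), i) ((⟨M, by omega⟩ : Fin (M + N + 1)), j) =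
          (A 0 - z • (1 : Matrix (Fin d) (Fin d) ℂ) - C 0 * F (-1) * B (-1) -
            B 0 * F 1 * C 1)⁻¹ i j := by

  classical
  -- rewriting of the pivot blocks
  have hDneg : ∀ k : ℤ, k ≤ -1 →
      Dk A B C F z k = A k - z • 1 - C k * F (k - 1) * B (k - 1) := fun k hk => by
    simp only [Dk, if_pos (show k ≤ 0 by omega), if_neg (show ¬(0:ℤ) ≤ k by omega), sub_zero]
  have hDpos : ∀ k : ℤ, 1 ≤ k →
      Dk A B C F z k = A k - z • 1 - B k * F (k + 1) * C (k + 1) := fun k hk => by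
    simp only [Dk, if_neg (show ¬ k ≤ 0 by omega), if_pos (show (0:ℤ) ≤ k by omega), sub_zero]
  have hD0eq : Dk A B C F z 0 = A 0 - z • 1 - C 0 * F (-1) * B (-1) - B 0 * F 1 * C 1 := by
    simp only [Dk, if_pos le_rfl, le_refl, if_pos, zero_sub, zero_add]
  -- the continued-fraction relations
  have hF1 : ∀ k : ℤ, -(M : ℤ) ≤ k → k ≤ -1 →
      Dk A B C F z k * F k = 1 ∧ F k * Dk A B C F z k = 1 := by
    intro k hk1 hk2
    have hdet := (Matrix.isUnit_iff_isUnit_det _).mp (hupinv k hk1 hk2)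
    rw [hDneg k hk2, hup k hk1 hk2]
    exact ⟨Matrix.mul_nonsing_inv _ hdet, Matrix.nonsing_inv_mul _ hdet⟩
  have hF2 : ∀ k : ℤ, 1 ≤ k → k ≤ (N : ℤ) →
      Dk A B C F z k * F k = 1 ∧ F k * Dk A B C F z k = 1 := by
    intro k hk1 hk2
    have hdet := (Matrix.isUnit_iff_isUnit_det _).mp (hdowninv k hk1 hk2)
    rw [hDpos k hk1, hdown k hk1 hk2]
    exact ⟨Matrix.mul_nonsing_inv _ hdet, Matrix.nonsing_inv_mul _ hdet⟩
  -- every pivot block is invertible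
  have hDu : ∀ r : Fin (M + N + 1), IsUnit (Dk A B C F z (ki M N r)) := by
    intro r
    rcases lt_trichotomy (ki M N r) 0 with h | h | h
    · rw [hDneg _ (by omega)]
      exact hupinv _ (by simp only [ki]; omega) (by omega)
    · rw [h, hD0eq]; exact hD0
    · rw [hDpos _ (by omega)]
      exact hdowninv _ (by omega) (by simp only [ki]; have := r.isLt; omega)
  -- the bidiagonal factors are unipotent, hence invertible
  have hXu : IsUnit (1 + (NX1 M N C F + NX2 M N B F)) := by
    refine IsNilpotent.isUnit_one_add ⟨M + N + 1, nilpotent_of_weight _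
      (fun r => (((r : ℕ) : ℤ) - (M : ℤ)).natAbs) (M + N + 1)
      (fun i => (by have := i.isLt; omega :
        (((i : ℕ) : ℤ) - (M : ℤ)).natAbs < M + N + 1)) ?_⟩
    intro p q hw
    have hw' : (((q : ℕ) : ℤ) - (M : ℤ)).natAbs ≤ (((p : ℕ) : ℤ) - (M : ℤ)).natAbs := hw
    simp only [NX1, NX2, Matrix.add_apply, Matrix.of_apply]
    rw [if_neg (by rintro ⟨a, b⟩; omega), if_neg (by rintro ⟨a, b⟩; omega), add_zero]
  have hYu : IsUnit (1 + (NY1 M N B F + NY2 M N C F)) := by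
    refine IsNilpotent.isUnit_one_add ⟨M + N + 1, nilpotent_of_weight' _
      (fun r => (((r : ℕ) : ℤ) - (M : ℤ)).natAbs) (M + N + 1)
      (fun i => (by have := i.isLt; omega :
        (((i : ℕ) : ℤ) - (M : ℤ)).natAbs < M + N + 1)) ?_⟩
    intro p q hw
    have hw' : (((p : ℕ) : ℤ) - (M : ℤ)).natAbs ≤ (((q : ℕ) : ℤ) - (M : ℤ)).natAbs := hw
    simp only [NY1, NY2, Matrix.add_apply, Matrix.of_apply]
    rw [if_neg (by rintro ⟨a, b⟩; omega), if_neg (by rintro ⟨a, b⟩; omega), add_zero]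
  -- explicit inverse of the block-diagonal factor
  set Dbi : Matrix (Fin (M + N + 1)) (Fin (M + N + 1)) (Matrix (Fin d) (Fin d) ℂ) :=
    Matrix.diagonal fun r => (↑(hDu r).unit⁻¹ : Matrix (Fin d) (Fin d) ℂ) with hDbi
  have hDb1 : Db M N A B C F z * Dbi = 1 := by
    rw [Db, hDbi, Matrix.diagonal_mul_diagonal]
    have : ∀ r : Fin (M + N + 1),
        Dk A B C F z (ki M N r) * (↑(hDu r).unit⁻¹ : Matrix (Fin d) (Fin d) ℂ) = 1 :=
      fun r => (hDu r).mul_val_inv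
    simp only [this]
    exact Matrix.diagonal_one
  have hDb2 : Dbi * Db M N A B C F z = 1 := by
    rw [Db, hDbi, Matrix.diagonal_mul_diagonal]
    have : ∀ r : Fin (M + N + 1),
        (↑(hDu r).unit⁻¹ : Matrix (Fin d) (Fin d) ℂ) * Dk A B C F z (ki M N r) = 1 :=
      fun r => (hDu r).val_inv_mul
    simp only [this]
    exact Matrix.diagonal_one
  set Xx := 1 + (NX1 M N C F + NX2 M N B F) with hXx
  set Yy := 1 + (NY1 M N B F + NY2 M N C F) with hYy
  set Xi := (hXu.unit⁻¹).val with hXi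
  set Yi := (hYu.unit⁻¹).val with hYt
  have hX1 : Xx * Xi = 1 := hXu.mul_val_inv
  have hX2 : Xi * Xx = 1 := hXu.val_inv_mul
  have hY1 : Yy * Yi = 1 := hYu.mul_val_inv
  have hY2 : Yi * Yy = 1 := hYu.val_inv_mul
  have hfact : Tb M N A B C z = Xx * Db M N A B C F z * Yy :=
    factorization M N A B C F z hF1 hF2 hup0 hdown0
  set Gb := Yi * (Dbi * Xi) with hGb
  have hTG : Tb M N A B C z * Gb = 1 := by
    rw [hfact, hGb, mul_assoc (Xx * Db M N A B C F z) Yy (Yi * (Dbi * Xi)),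
      ← mul_assoc Yy Yi (Dbi * Xi), hY1, one_mul,
      mul_assoc Xx (Db M N A B C F z) (Dbi * Xi),
      ← mul_assoc (Db M N A B C F z) Dbi Xi, hDb1, one_mul, hX1]
  have hGT : Gb * Tb M N A B C z = 1 := by
    rw [hfact, hGb, mul_assoc Xx (Db M N A B C F z) Yy,
      mul_assoc Yi (Dbi * Xi) (Xx * (Db M N A B C F z * Yy)),
      mul_assoc Dbi Xi (Xx * (Db M N A B C F z * Yy)),
      ← mul_assoc Xi Xx (Db M N A B C F z * Yy), hX2, one_mul,
      ← mul_assoc Dbi (Db M N A B C F z) Yy, hDb2, one_mul, hY2]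
  -- the central position
  set m0 : Fin (M + N + 1) := ⟨M, by omega⟩ with hm0
  -- row m0 of Yi and column m0 of Xi are those of the identity
  have hYrow : ∀ t, Yy m0 t = (1 : Matrix (Fin (M + N + 1)) (Fin (M + N + 1))
      (Matrix (Fin d) (Fin d) ℂ)) m0 t := by
    intro t
    have hmv : (m0 : ℕ) = M := rfl
    rw [hYy]
    simp only [Matrix.add_apply, NY1, NY2, Matrix.of_apply]
    rw [if_neg (by omega), if_neg (by rintro ⟨a, b⟩; omega), add_zero, add_zero]
  have hXcol : ∀ t, Xx t m0 = (1 : Matrix (Fin (M + N + 1)) (Fin (M + N + 1))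
      (Matrix (Fin d) (Fin d) ℂ)) t m0 := by
    intro t
    have hmv : (m0 : ℕ) = M := rfl
    rw [hXx]
    simp only [Matrix.add_apply, NX1, NX2, Matrix.of_apply]
    rw [if_neg (by rintro ⟨a, b⟩; omega), if_neg (by rintro ⟨a, b⟩; omega),
      add_zero, add_zero]
  have hYirow : ∀ t, Yi m0 t = (1 : Matrix (Fin (M + N + 1)) (Fin (M + N + 1))
      (Matrix (Fin d) (Fin d) ℂ)) m0 t := by
    intro t
    have h : (Yy * Yi) m0 t = (1 : Matrix (Fin (M + N + 1)) (Fin (M + N + 1))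
        (Matrix (Fin d) (Fin d) ℂ)) m0 t := by rw [hY1]
    rw [Matrix.mul_apply] at h
    calc Yi m0 t = ∑ u, (1 : Matrix (Fin (M + N + 1)) (Fin (M + N + 1))
        (Matrix (Fin d) (Fin d) ℂ)) m0 u * Yi u t := by
          rw [← Matrix.mul_apply, Matrix.one_mul]
    _ = ∑ u, Yy m0 u * Yi u t := Finset.sum_congr rfl fun u _ => by rw [hYrow u]
    _ = _ := h
  have hXicol : ∀ t, Xi t m0 = (1 : Matrix (Fin (M + N + 1)) (Fin (M + N + 1))
      (Matrix (Fin d) (Fin d) ℂ)) t m0 := by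
    intro t
    have h : (Xi * Xx) t m0 = (1 : Matrix (Fin (M + N + 1)) (Fin (M + N + 1))
        (Matrix (Fin d) (Fin d) ℂ)) t m0 := by rw [hX2]
    rw [Matrix.mul_apply] at h
    calc Xi t m0 = ∑ u, Xi t u * (1 : Matrix (Fin (M + N + 1)) (Fin (M + N + 1))
        (Matrix (Fin d) (Fin d) ℂ)) u m0 := by
          rw [← Matrix.mul_apply, Matrix.mul_one]
    _ = ∑ u, Xi t u * Xx u m0 := Finset.sum_congr rfl fun u _ => by rw [hXcol u]
    _ = _ := h
  have hGbc : Gb m0 m0 = (↑(hDu m0).unit⁻¹ : Matrix (Fin d) (Fin d) ℂ) := by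
    have step1 : Gb m0 m0 = (Dbi * Xi) m0 m0 := by
      rw [hGb, Matrix.mul_apply]
      calc ∑ t, Yi m0 t * (Dbi * Xi) t m0
          = ∑ t, (1 : Matrix (Fin (M + N + 1)) (Fin (M + N + 1))
            (Matrix (Fin d) (Fin d) ℂ)) m0 t * (Dbi * Xi) t m0 :=
          Finset.sum_congr rfl fun t _ => by rw [hYirow t]
      _ = (Dbi * Xi) m0 m0 := by
          simp [Matrix.one_apply, ite_mul, zero_mul, one_mul]
    have step2 : (Dbi * Xi) m0 m0 = Dbi m0 m0 := by
      rw [Matrix.mul_apply]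
      calc ∑ t, Dbi m0 t * Xi t m0
          = ∑ t, Dbi m0 t * (1 : Matrix (Fin (M + N + 1)) (Fin (M + N + 1))
            (Matrix (Fin d) (Fin d) ℂ)) t m0 :=
          Finset.sum_congr rfl fun t _ => by rw [hXicol t]
      _ = Dbi m0 m0 := by
          simp [Matrix.one_apply, mul_ite, mul_zero, mul_one]
    rw [step1, step2, hDbi, Matrix.diagonal_apply_eq]
  have hki0 : ki M N m0 = 0 := by simp [ki, hm0]
  have hD0m : Dk A B C F z (ki M N m0) =
      A 0 - z • 1 - C 0 * F (-1) * B (-1) - B 0 * F 1 * C 1 := by rw [hki0, hD0eq]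
  have hfin : (A 0 - z • (1 : Matrix (Fin d) (Fin d) ℂ) - C 0 * F (-1) * B (-1) -
      B 0 * F 1 * C 1)⁻¹ = (↑(hDu m0).unit⁻¹ : Matrix (Fin d) (Fin d) ℂ) := by
    refine Matrix.inv_eq_right_inv ?_
    rw [← hD0m]
    exact (hDu m0).mul_val_inv
  -- transfer to the product index
  have hembT : blockTridZ M N d A B C - z • (1 : Matrix (Fin (M + N + 1) × Fin d)
      (Fin (M + N + 1) × Fin d) ℂ) = emb (Tb M N A B C z) := by
    ext ⟨r, i⟩ ⟨s, j⟩
    simp only [blockTridZ, Tb, emb, ki, Matrix.sub_apply, Matrix.smul_apply,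
      Matrix.of_apply, smul_eq_mul]
    by_cases h0 : (r : ℕ) = (s : ℕ)
    · have hrs : r = s := Fin.ext h0
      subst hrs
      rw [if_pos rfl, if_pos rfl, Matrix.sub_apply, Matrix.smul_apply, Matrix.one_apply,
        Matrix.one_apply, smul_eq_mul]
      by_cases hij : i = j
      · rw [if_pos hij, if_pos (by rw [hij])]
      · rw [if_neg hij, if_neg (by simp [Prod.ext_iff, hij])]
    · have h0' : ¬ ((r : ℕ) : ℤ) = ((s : ℕ) : ℤ) := by exact_mod_cast h0
      rw [if_neg h0', if_neg h0, Matrix.one_apply,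
        if_neg (show ¬ ((r, i) = (s, j)) from fun hh =>
          h0 (congrArg (fun p : Fin (M + N + 1) × Fin d => ((p.1 : ℕ))) hh)),
        mul_zero, sub_zero]
      by_cases h1 : (s : ℕ) = (r : ℕ) + 1
      · rw [if_pos (by exact_mod_cast h1), if_pos h1]
      · rw [if_neg (fun hh => h1 (by exact_mod_cast hh)), if_neg h1]
        by_cases h2 : (r : ℕ) = (s : ℕ) + 1
        · rw [if_pos (by exact_mod_cast h2), if_pos h2]
        · rw [if_neg (fun hh => h2 (by exact_mod_cast hh)), if_neg h2, Matrix.zero_apply]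
  have hTGp : (blockTridZ M N d A B C - z • (1 : Matrix (Fin (M + N + 1) × Fin d)
      (Fin (M + N + 1) × Fin d) ℂ)) * emb Gb = 1 := by
    rw [hembT, ← emb_mul, hTG, emb_one]
  have hGTp : emb Gb * (blockTridZ M N d A B C - z • (1 : Matrix (Fin (M + N + 1) × Fin d)
      (Fin (M + N + 1) × Fin d) ℂ)) = 1 := by
    rw [hembT, ← emb_mul, hGT, emb_one]
  have hUnit : IsUnit (blockTridZ M N d A B C - z • (1 : Matrix (Fin (M + N + 1) × Fin d)
      (Fin (M + N + 1) × Fin d) ℂ)) :=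
    (Matrix.isUnit_iff_isUnit_det _).mpr (Matrix.isUnit_det_of_right_inverse hTGp)
  have hInv : (blockTridZ M N d A B C - z • (1 : Matrix (Fin (M + N + 1) × Fin d)
      (Fin (M + N + 1) × Fin d) ℂ))⁻¹ = emb Gb := Matrix.inv_eq_right_inv hTGp
  refine ⟨hUnit, fun i j => ?_⟩
  rw [hInv, hfin]
  show Gb m0 m0 i j = _
  rw [hGbc]
end

section
/- For γ ∈ ℝ, let H⁽³⁾(γ) be the 3×3 complex matrix [[−2iγ, √2, 0],[√2, 0, √2],[0, √2, 2iγ]] (the non-Hermitian Bose-Hubbard Hamiltonian for two bosons with c = 0, v = 1). Then det(λI − H⁽³⁾(γ)) = λ(λ² − 4(1 − γ²)); in particular, for |γ| ≤ 1 the eigenvalues of H⁽³⁾(γ) are E_0 = 0 and E_± = ±2√(1 − γ²), and at the exceptional points γ = ±1 one has H⁽³⁾(γ)³ = 0 while H⁽³⁾(γ)² ≠ 0, i.e. H⁽³⁾(±1) has an exceptional-point degeneracy of the maximal order three. -/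
/-!
Expanding the determinant gives the characteristic polynomial `λ (λ² - 4 (1 - γ²))`, whose
roots are `0` and `±2√(1 - γ²)`. At `γ = ±1` it is `λ³`, so Cayley–Hamilton gives `H³ = 0`,
while the `(0, 0)` entry of `H²` is `2 - 4γ² = -2`.
-/

open Matrix

/-- The non-Hermitian Bose-Hubbard Hamiltonian
`H⁽³⁾(γ) = [[-2iγ, √2, 0], [√2, 0, √2], [0, √2, 2iγ]]` (two bosons, `c = 0`, `v = 1`). -/
noncomputable def bh3 (γ : ℝ) : Matrix (Fin 3) (Fin 3) ℂ :=
  !![-(2 * Complex.I * (γ : ℂ)), ((Real.sqrt 2 : ℝ) : ℂ), 0;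
     ((Real.sqrt 2 : ℝ) : ℂ), 0, ((Real.sqrt 2 : ℝ) : ℂ);
     0, ((Real.sqrt 2 : ℝ) : ℂ), 2 * Complex.I * (γ : ℂ)]

open Polynomial

theorem Complex.ofReal_sqrt_two_mul_self : ((√2 : ℝ) : ℂ) * ((√2 : ℝ) : ℂ) = 2 := by
  rw [← Complex.ofReal_mul, Real.mul_self_sqrt zero_le_two, Complex.ofReal_ofNat]

theorem det_smul_one_sub_bh3 (γ : ℝ) (l : ℂ) :
    (l • (1 : Matrix (Fin 3) (Fin 3) ℂ) - bh3 γ).det = l * (l ^ 2 - 4 * (1 - (γ : ℂ) ^ 2)) := by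
  have hsqrt := Complex.ofReal_sqrt_two_mul_self
  have hmat : l • (1 : Matrix (Fin 3) (Fin 3) ℂ) - bh3 γ =
      !![l + 2 * Complex.I * γ, -√2, 0; -√2, l, -√2; 0, -√2, l - 2 * Complex.I * γ] := by
    ext i j; fin_cases i <;> fin_cases j <;> simp [bh3]
  rw [hmat, det_fin_three]
  simp only [of_apply, cons_val, cons_val_zero, cons_val_one, Fin.isValue]
  linear_combination (-2 * l) * hsqrt + (-4 * (γ : ℂ) ^ 2 * l) * Complex.I_sq

theorem charpoly_bh3 (γ : ℝ) :
    (bh3 γ).charpoly = X * (X ^ 2 - C (4 * (1 - (γ : ℂ) ^ 2))) :=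
  Polynomial.funext fun l => by
    simp [eval_charpoly, ← smul_one_eq_diagonal, det_smul_one_sub_bh3]

theorem bh3_pow_three_eq_zero {γ : ℝ} (hγ : γ ^ 2 = 1) : bh3 γ ^ 3 = 0 := by
  have hchar : (bh3 γ).charpoly = X ^ 3 := by
    rw [charpoly_bh3, ← Complex.ofReal_pow, hγ, Complex.ofReal_one, sub_self, mul_zero, C_0,
      sub_zero, ← pow_succ']
  simpa [hchar] using aeval_self_charpoly (bh3 γ)

theorem bh3_sq_apply_zero_zero (γ : ℝ) : (bh3 γ ^ 2) 0 0 = 2 - 4 * (γ : ℂ) ^ 2 := by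
  have hsqrt := Complex.ofReal_sqrt_two_mul_self
  simp only [sq, mul_apply, Fin.sum_univ_three, bh3, of_apply, cons_val', cons_val_fin_one,
    cons_val_zero, cons_val_one, cons_val, Fin.isValue]
  linear_combination hsqrt + 4 * (γ : ℂ) ^ 2 * Complex.I_sq

theorem det_bh3_sub_smul_one_eq_zero {γ : ℝ} {c : ℂ}
    (hc : c = 0 ∨ c ^ 2 = 4 * (1 - (γ : ℂ) ^ 2)) :
    (bh3 γ - c • (1 : Matrix (Fin 3) (Fin 3) ℂ)).det = 0 := by
  rw [← neg_sub, det_neg, det_smul_one_sub_bh3]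
  rcases hc with rfl | hc
  · simp
  · simp [hc]

theorem bh3_sq_ne_zero {γ : ℝ} (hγ : 2 * γ ^ 2 ≠ 1) : bh3 γ ^ 2 ≠ 0 := by
  intro h
  have h00 := bh3_sq_apply_zero_zero γ
  rw [h, Matrix.zero_apply, eq_comm, sub_eq_zero] at h00
  exact hγ (by exact_mod_cast (by linear_combination -h00 / 2 : (2 * γ ^ 2 : ℂ) = 1))

theorem ofReal_two_mul_sqrt_one_sub_sq_sq {γ : ℝ} (hγ : |γ| ≤ 1) :
    ((2 * √(1 - γ ^ 2) : ℝ) : ℂ) ^ 2 = 4 * (1 - (γ : ℂ) ^ 2) := by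
  have hnonneg : 0 ≤ 1 - γ ^ 2 := sub_nonneg.mpr (sq_le_one_iff_abs_le_one γ |>.mpr hγ)
  rw [← Complex.ofReal_pow, mul_pow, Real.sq_sqrt hnonneg]
  push_cast
  ring

/-- the characteristic polynomial of `H⁽³⁾(γ)` is `λ(λ² - 4(1 - γ²))`;
for `|γ| ≤ 1` the eigenvalues are `0` and `±2√(1 - γ²)`, and at the exceptional points
`γ = ±1` one has `H⁽³⁾(γ)³ = 0` and `H⁽³⁾(γ)² ≠ 0` (a maximal-order, order-three,
exceptional-point degeneracy). -/
theorem bh3_spectrum_and_exceptional_points (γ : ℝ) :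
    (∀ l : ℂ, (l • (1 : Matrix (Fin 3) (Fin 3) ℂ) - bh3 γ).det =
      l * (l ^ 2 - 4 * (1 - (γ : ℂ) ^ 2))) ∧
    (|γ| ≤ 1 →
      (bh3 γ - (0 : ℂ) • (1 : Matrix (Fin 3) (Fin 3) ℂ)).det = 0 ∧
      (bh3 γ - ((2 * Real.sqrt (1 - γ ^ 2) : ℝ) : ℂ) •
        (1 : Matrix (Fin 3) (Fin 3) ℂ)).det = 0 ∧
      (bh3 γ - ((-(2 * Real.sqrt (1 - γ ^ 2)) : ℝ) : ℂ) •
        (1 : Matrix (Fin 3) (Fin 3) ℂ)).det = 0) ∧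
    ((γ = 1 ∨ γ = -1) → bh3 γ ^ 3 = 0 ∧ bh3 γ ^ 2 ≠ 0) := by
  refine ⟨det_smul_one_sub_bh3 γ, fun hγ => ?_, fun hγ => ?_⟩
  · have hroot := ofReal_two_mul_sqrt_one_sub_sq_sq hγ
    refine ⟨det_bh3_sub_smul_one_eq_zero (.inl rfl), det_bh3_sub_smul_one_eq_zero (.inr hroot),
      det_bh3_sub_smul_one_eq_zero (.inr ?_)⟩
    rw [Complex.ofReal_neg, neg_sq, hroot]
  · have hγ2 : γ ^ 2 = 1 := by rcases hγ with rfl | rfl <;> norm_num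
    exact ⟨bh3_pow_three_eq_zero hγ2, bh3_sq_ne_zero (by rw [hγ2]; norm_num)⟩
end
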